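/- arXiv:1803.11435 — 7 statements merged into one kernel-verified Lean document; each statement's English description precedes it below -/
import Mathlib

section
/- Assume the heat kernel has the polynomial form p(t,x,y) = C₁ t^{-d/α} (1 + (C₂ ρ(x,y) t^{-1/α})²)^{-(d+α)/2} with constants d, α, C₁, C₂ > 0. Then, as ρ(x,y)^{-α/β} t → 0, the inverse-subordinated kernel satisfies p^{S^{-1}}(t,x,y) ∼ C₁ (C₂^{-d-α} / (β Γ(β))) ρ(x,y)^{-d-α} t^β; that is, for every ε > 0 there exists δ > 0 such that whenever t > 0, x ≠ y ∈ M and ρ(x,y)^{-α/β} t ≤ δ, the ratio of the two sides lies within ε of 1. -/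
open MeasureTheory Set Real Filter

-- Bernoulli-type inequality
lemma aux_bern {p w : ℝ} (hp : 0 ≤ p) (hw : 0 ≤ w) : 1 - p * w ≤ (1 + w) ^ (-p) := by
  have h1 : (0:ℝ) < 1 + w := by linarith
  have h2 : Real.log (1 + w) ≤ w := by
    have := Real.log_le_sub_one_of_pos h1; linarith
  have h3 : 0 ≤ Real.log (1 + w) := Real.log_nonneg (by linarith)
  rw [Real.rpow_def_of_pos h1]
  have h4 := Real.add_one_le_exp (Real.log (1 + w) * -p)
  nlinarith [Real.exp_pos (Real.log (1 + w) * -p)]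

-- integrability of r^(β-1) * exp(-r^β) on (0,∞)
lemma aux_int3 {β : ℝ} (hβ0 : 0 < β) :
    IntegrableOn (fun r : ℝ => r ^ (β - 1) * Real.exp (-r ^ β)) (Ioi 0) := by
  have h : IntegrableOn (fun y : ℝ => Real.exp (-y)) (Ioi 0) := by
    simpa using exp_neg_integrableOn_Ioi 0 one_pos
  have := (integrableOn_Ioi_comp_rpow_iff' (fun y : ℝ => Real.exp (-y)) hβ0.ne').mpr h
  simpa [smul_eq_mul] using this

-- integrability of r^(β-1) * exp(-(s*r)) on (0,∞)
lemma aux_int1 {β s : ℝ} (hβ0 : 0 < β) (hs : 0 < s) :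
    IntegrableOn (fun r : ℝ => r ^ (β - 1) * Real.exp (-(s * r))) (Ioi 0) := by
  have := integrableOn_rpow_mul_exp_neg_mul_rpow (show (-1:ℝ) < β - 1 by linarith) (show (0:ℝ) < 1 from one_pos) hs
  simpa [Real.rpow_one, neg_mul] using this

lemma aux_lint {β : ℝ} (hβ0 : 0 < β) (μ : Measure ℝ) (hprob : IsProbabilityMeasure μ)
    (hlap : ∀ r : ℝ, 0 < r →
      ∫ s in Set.Ioi (0:ℝ), Real.exp (-(r * s)) ∂μ = Real.exp (-(r ^ β))) :
    ∫⁻ s in Ioi (0:ℝ), ENNReal.ofReal (s ^ (-β)) ∂μ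
      = ENNReal.ofReal (1 / (β * Real.Gamma β)) := by
  haveI := hprob
  have hΓ : 0 < Real.Gamma β := Real.Gamma_pos_of_pos hβ0
  -- step 1: pointwise identity
  have step1 : ∀ s ∈ Ioi (0:ℝ), ENNReal.ofReal (s ^ (-β))
      = ENNReal.ofReal (Real.Gamma β)⁻¹ *
        ∫⁻ r in Ioi (0:ℝ), ENNReal.ofReal (r ^ (β - 1) * Real.exp (-(r * s))) := by
    intro s hs
    rw [mem_Ioi] at hs
    have hint : IntegrableOn (fun r : ℝ => r ^ (β - 1) * Real.exp (-(r * s))) (Ioi 0) := by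
      have := aux_int1 hβ0 hs
      refine this.congr_fun (fun r _ => by rw [mul_comm r s]) measurableSet_Ioi
    have hnn : 0 ≤ᵐ[volume.restrict (Ioi (0:ℝ))]
        fun r : ℝ => r ^ (β - 1) * Real.exp (-(r * s)) := by
      filter_upwards [ae_restrict_mem measurableSet_Ioi] with r hr
      have : (0:ℝ) < r := hr
      positivity
    have hval : ∫ r in Ioi (0:ℝ), r ^ (β - 1) * Real.exp (-(r * s))
        = (1 / s) ^ β * Real.Gamma β := by
      rw [← integral_rpow_mul_exp_neg_mul_Ioi hβ0 hs]
      exact setIntegral_congr_fun measurableSet_Ioi (fun r _ => by rw [mul_comm r s])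
    rw [← ofReal_integral_eq_lintegral_ofReal hint hnn, hval,
      ← ENNReal.ofReal_mul (by positivity)]
    congr 1
    rw [one_div, Real.inv_rpow hs.le, ← Real.rpow_neg hs.le]
    field_simp
  -- step 2 : inner lintegral via hlap
  have step2 : ∀ r ∈ Ioi (0:ℝ),
      (∫⁻ s in Ioi (0:ℝ), ENNReal.ofReal (r ^ (β - 1) * Real.exp (-(r * s))) ∂μ)
        = ENNReal.ofReal (r ^ (β - 1) * Real.exp (-(r ^ β))) := by
    intro r hr
    rw [mem_Ioi] at hr
    have h1 : ∀ s : ℝ, ENNReal.ofReal (r ^ (β - 1) * Real.exp (-(r * s)))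
        = ENNReal.ofReal (r ^ (β - 1)) * ENNReal.ofReal (Real.exp (-(r * s))) := by
      intro s; rw [ENNReal.ofReal_mul (by positivity)]
    simp_rw [h1]
    rw [lintegral_const_mul' _ _ ENNReal.ofReal_ne_top]
    have hint : Integrable (fun s : ℝ => Real.exp (-(r * s))) (μ.restrict (Ioi 0)) := by
      refine Integrable.mono' (integrable_const 1)
        (Measurable.aestronglyMeasurable (by fun_prop)) ?_
      filter_upwards [ae_restrict_mem measurableSet_Ioi] with s hs
      rw [Real.norm_eq_abs, abs_of_pos (Real.exp_pos _), Real.exp_le_one_iff]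
      have : (0:ℝ) < s := hs
      nlinarith
    have hnn : 0 ≤ᵐ[μ.restrict (Ioi (0:ℝ))] fun s : ℝ => Real.exp (-(r * s)) :=
      Filter.Eventually.of_forall (fun s => (Real.exp_pos _).le)
    rw [← ofReal_integral_eq_lintegral_ofReal hint hnn, hlap r hr,
      ← ENNReal.ofReal_mul (by positivity)]
  -- put together with Tonelli
  calc ∫⁻ s in Ioi (0:ℝ), ENNReal.ofReal (s ^ (-β)) ∂μ
      = ∫⁻ s in Ioi (0:ℝ), (ENNReal.ofReal (Real.Gamma β)⁻¹ *
          ∫⁻ r in Ioi (0:ℝ), ENNReal.ofReal (r ^ (β - 1) * Real.exp (-(r * s)))) ∂μ :=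
        setLIntegral_congr_fun measurableSet_Ioi (fun s hs => step1 s hs)
    _ = ENNReal.ofReal (Real.Gamma β)⁻¹ * ∫⁻ s in Ioi (0:ℝ),
          (∫⁻ r in Ioi (0:ℝ), ENNReal.ofReal (r ^ (β - 1) * Real.exp (-(r * s)))) ∂μ :=
        lintegral_const_mul' _ _ ENNReal.ofReal_ne_top
    _ = ENNReal.ofReal (Real.Gamma β)⁻¹ * ∫⁻ r in Ioi (0:ℝ),
          (∫⁻ s in Ioi (0:ℝ), ENNReal.ofReal (r ^ (β - 1) * Real.exp (-(r * s))) ∂μ) := by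
        rw [lintegral_lintegral_swap]
        apply Measurable.aemeasurable
        have : Measurable fun p : ℝ × ℝ =>
            ENNReal.ofReal (p.2 ^ (β - 1) * Real.exp (-(p.2 * p.1))) := by fun_prop
        exact this
    _ = ENNReal.ofReal (Real.Gamma β)⁻¹ * ∫⁻ r in Ioi (0:ℝ),
          ENNReal.ofReal (r ^ (β - 1) * Real.exp (-(r ^ β))) := by
        rw [setLIntegral_congr_fun measurableSet_Ioi (fun r hr => step2 r hr)]
    _ = ENNReal.ofReal (Real.Gamma β)⁻¹ * ENNReal.ofReal (1 / β) := by
        congr 1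
        have hnn : 0 ≤ᵐ[volume.restrict (Ioi (0:ℝ))]
            fun r : ℝ => r ^ (β - 1) * Real.exp (-r ^ β) := by
          filter_upwards [ae_restrict_mem measurableSet_Ioi] with r hr
          have : (0:ℝ) < r := hr
          positivity
        rw [← ofReal_integral_eq_lintegral_ofReal (aux_int3 hβ0) hnn,
          integral_rpow_mul_exp_neg_rpow hβ0 (by linarith), sub_add_cancel,
          div_self hβ0.ne', Real.Gamma_one, mul_one]
    _ = ENNReal.ofReal (1 / (β * Real.Gamma β)) := by
        rw [← ENNReal.ofReal_mul (by positivity)]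
        congr 1
        rw [one_div, one_div, mul_inv]
        ring


lemma aux_mom {β : ℝ} (hβ0 : 0 < β) (μ : Measure ℝ) (hprob : IsProbabilityMeasure μ)
    (hlint : ∫⁻ s in Ioi (0:ℝ), ENNReal.ofReal (s ^ (-β)) ∂μ
      = ENNReal.ofReal (1 / (β * Real.Gamma β))) :
    IntegrableOn (fun s : ℝ => s ^ (-β)) (Ioi 0) μ ∧
      ∫ s in Ioi (0:ℝ), s ^ (-β) ∂μ = 1 / (β * Real.Gamma β) := by
  haveI := hprob
  have hΓ : 0 < Real.Gamma β := Real.Gamma_pos_of_pos hβ0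
  have hmeas : Measurable fun s : ℝ => s ^ (-β) := by fun_prop
  have hnn : 0 ≤ᵐ[μ.restrict (Ioi (0:ℝ))] fun s : ℝ => s ^ (-β) := by
    filter_upwards [ae_restrict_mem measurableSet_Ioi] with s hs
    have : (0:ℝ) < s := hs
    positivity
  have hint : IntegrableOn (fun s : ℝ => s ^ (-β)) (Ioi 0) μ := by
    refine ⟨hmeas.aestronglyMeasurable, ?_⟩
    rw [hasFiniteIntegral_iff_ofReal hnn, hlint]
    exact ENNReal.ofReal_lt_top
  refine ⟨hint, ?_⟩
  rw [integral_eq_lintegral_of_nonneg_ae hnn hmeas.aestronglyMeasurable, hlint,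
    ENNReal.toReal_ofReal (by positivity)]

lemma aux_pt {β d α C₁ C₂ t R s : ℝ} (hβ0 : 0 < β) (hd : 0 < d) (hα : 0 < α)
    (hC₂ : 0 < C₂) (ht : 0 < t) (hR : 0 < R) (hs : 0 < s) :
    C₁ * (t ^ β * s ^ (-β)) ^ (-(d/α)) *
      (1 + (C₂ * R * (t ^ β * s ^ (-β)) ^ (-(1/α))) ^ 2) ^ (-((d + α)/2)) =
    (C₁ * (C₂ * R) ^ (-(d + α)) * t ^ β) *
      (s ^ (-β) * (1 + ((C₂ * R) ^ (-(2:ℝ)) * t ^ (2*β/α)) * s ^ (-(2*β/α))) ^ (-((d + α)/2))) := by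
  have hw : 0 < t ^ β * s ^ (-β) := by positivity
  set w := t ^ β * s ^ (-β) with hw_def
  have hCR : 0 < C₂ * R := by positivity
  set z := C₂ * R * w ^ (-(1/α)) with hz_def
  have hz : 0 < z := by rw [hz_def]; positivity
  have hz2 : z ^ 2 = (C₂ * R) ^ (2:ℝ) * w ^ (-(2/α)) := by
    rw [hz_def, mul_pow, ← Real.rpow_natCast (C₂ * R) 2,
      ← Real.rpow_natCast (w ^ (-(1/α))) 2, ← Real.rpow_mul hw.le]
    push_cast
    rw [show -(1/α) * (2:ℝ) = -(2/α) by ring]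
  have hc : ((C₂ * R) ^ (-(2:ℝ)) * t ^ (2*β/α)) * s ^ (-(2*β/α)) = (z ^ 2)⁻¹ := by
    rw [hz2, mul_inv, ← Real.rpow_neg hCR.le, ← Real.rpow_neg hw.le, neg_neg]
    have hww : w ^ (2/α) = t ^ (2*β/α) * s ^ (-(2*β/α)) := by
      rw [hw_def, Real.mul_rpow (by positivity) (by positivity),
        ← Real.rpow_mul ht.le, ← Real.rpow_mul hs.le]
      ring_nf
    rw [hww]; ring
  set Q := 1 + ((C₂ * R) ^ (-(2:ℝ)) * t ^ (2*β/α)) * s ^ (-(2*β/α)) with hQ_def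
  have hQ : 0 < Q := by rw [hQ_def]; positivity
  have hfac : (1:ℝ) + z ^ 2 = z ^ 2 * Q := by
    rw [hQ_def, mul_add, mul_one, hc, mul_inv_cancel₀ (by positivity)]; ring
  rw [hfac, Real.mul_rpow (x := z ^ 2) (y := Q) (by positivity) hQ.le, hz2,
    Real.mul_rpow (x := (C₂ * R) ^ (2:ℝ)) (y := w ^ (-(2/α))) (by positivity) (by positivity),
    ← Real.rpow_mul hCR.le, ← Real.rpow_mul hw.le,
    show (2:ℝ) * (-((d + α)/2)) = -(d + α) by ring,
    show (-(2/α)) * (-((d + α)/2)) = (d + α)/α by ring]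
  have hww2 : w ^ (-(d/α)) * w ^ ((d + α)/α) = w := by
    rw [← Real.rpow_add hw, show -(d/α) + (d + α)/α = 1 by field_simp; ring, Real.rpow_one]
  calc C₁ * w ^ (-(d/α)) * ((C₂ * R) ^ (-(d + α)) * w ^ ((d + α)/α) * Q ^ (-((d + α)/2)))
      = C₁ * (C₂ * R) ^ (-(d + α)) * (w ^ (-(d/α)) * w ^ ((d + α)/α)) * Q ^ (-((d + α)/2)) := by
        ring
    _ = C₁ * (C₂ * R) ^ (-(d + α)) * w * Q ^ (-((d + α)/2)) := by rw [hww2]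
    _ = _ := by rw [hw_def]; ring


theorem stmt_3
    (β : ℝ) (hβ0 : 0 < β) (hβ1 : β < 1)
    (μ : Measure ℝ) (hprob : IsProbabilityMeasure μ)
    (hsupp : μ (Set.Iic 0) = 0)
    (hlap : ∀ r : ℝ, 0 < r →
      ∫ s in Set.Ioi (0:ℝ), Real.exp (-(r * s)) ∂μ = Real.exp (-(r ^ β)))
    {M : Type*} [MetricSpace M]
    (d α C₁ C₂ : ℝ) (hd : 0 < d) (hα : 0 < α) (hC₁ : 0 < C₁) (hC₂ : 0 < C₂)
    (pSinv : ℝ → M → M → ℝ)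
    (hpSinv : ∀ t : ℝ, 0 < t → ∀ x y : M,
      pSinv t x y = ∫ s in Set.Ioi (0:ℝ),
        C₁ * (t ^ β * s ^ (-β)) ^ (-(d/α)) *
          (1 + (C₂ * dist x y * (t ^ β * s ^ (-β)) ^ (-(1/α))) ^ 2) ^ (-((d + α)/2)) ∂μ) :
    ∀ ε : ℝ, 0 < ε → ∃ δ : ℝ, 0 < δ ∧ ∀ t : ℝ, 0 < t → ∀ x y : M, x ≠ y →
      dist x y ^ (-(α/β)) * t ≤ δ →
      |pSinv t x y /
        (C₁ * (C₂ ^ (-(d + α)) / (β * Real.Gamma β)) *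
          (dist x y ^ (-(d + α)) * t ^ β)) - 1| ≤ ε := by
  haveI := hprob
  have hΓ : 0 < Real.Gamma β := Real.Gamma_pos_of_pos hβ0
  have hK : 0 < β * Real.Gamma β := by positivity
  obtain ⟨hfint, hIβ⟩ := aux_mom hβ0 μ hprob (aux_lint hβ0 μ hprob hlap)
  have hp : 0 < (d + α) / 2 := by positivity
  have he : 0 < 2 * β / α := by positivity
  have hmeas : Measurable fun s : ℝ => s ^ (-β) := by fun_prop
  intro ε hε
  -- choose δ' > 0 with small mass near 0
  obtain ⟨δ', hδ'pos, hA⟩ : ∃ δ' : ℝ, 0 < δ' ∧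
      ∫ s in Ioc (0:ℝ) δ', s ^ (-β) ∂μ ≤ ε / (2 * (β * Real.Gamma β)) := by
    have htend : Tendsto (fun n : ℕ =>
        ∫ s in Ioi (0:ℝ), (Ioc (0:ℝ) (1/(n+1))).indicator (fun u : ℝ => u ^ (-β)) s ∂μ)
        atTop (nhds (∫ s in Ioi (0:ℝ), (0:ℝ) ∂μ)) := by
      refine tendsto_integral_of_dominated_convergence (fun s => s ^ (-β))
        (fun n => ((hmeas.indicator measurableSet_Ioc).aestronglyMeasurable)) hfint
        (fun n => ?_) ?_
      · filter_upwards [ae_restrict_mem measurableSet_Ioi] with s hs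
        have hs0 : (0:ℝ) < s := hs
        have h1 : 0 ≤ s ^ (-β) := by positivity
        by_cases hmem : s ∈ Ioc (0:ℝ) (1/(n+1))
        · rw [Set.indicator_of_mem hmem, Real.norm_eq_abs, abs_of_nonneg h1]
        · rw [Set.indicator_of_notMem hmem, norm_zero]; exact h1
      · refine Filter.Eventually.of_forall (fun s => ?_)
        by_cases hs0 : 0 < s
        · obtain ⟨N, hN⟩ := exists_nat_gt (1/s)
          refine tendsto_atTop_of_eventually_const (i₀ := N) (fun n hn => ?_)
          have hlt : 1/((n:ℝ)+1) < s := by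
            rw [div_lt_iff₀ (by positivity)]
            rw [div_lt_iff₀ hs0] at hN
            have : (N:ℝ) ≤ (n:ℝ) := by exact_mod_cast hn
            nlinarith
          exact Set.indicator_of_notMem (fun hmem => absurd hmem.2 (not_le.mpr hlt)) _
        · refine tendsto_atTop_of_eventually_const (i₀ := 0) (fun n _ => ?_)
          exact Set.indicator_of_notMem (fun hmem => hs0 hmem.1) _
    rw [integral_zero] at htend
    have hev := htend.eventually_lt_const (show (0:ℝ) < ε / (2 * (β * Real.Gamma β)) by positivity)
    obtain ⟨n, hn⟩ := hev.exists
    refine ⟨1/((n:ℝ)+1), by positivity, ?_⟩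
    have hconv : ∫ s in Ioi (0:ℝ), (Ioc (0:ℝ) (1/(n+1))).indicator (fun u : ℝ => u ^ (-β)) s ∂μ
        = ∫ s in Ioc (0:ℝ) (1/((n:ℝ)+1)), s ^ (-β) ∂μ := by
      rw [integral_indicator measurableSet_Ioc, Measure.restrict_restrict measurableSet_Ioc,
        inter_eq_self_of_subset_left Ioc_subset_Ioi_self]
    rw [← hconv]
    exact hn.le
  -- choose δ
  refine ⟨(ε * δ' ^ (2*β/α) * C₂ ^ (2:ℝ) / (2 * ((d + α)/2))) ^ (2*β/α)⁻¹, by positivity, ?_⟩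
  intro t ht x y hxy hle
  have hR : 0 < dist x y := dist_pos.mpr hxy
  set R := dist x y with hR_def
  set c : ℝ := (C₂ * R) ^ (-(2:ℝ)) * t ^ (2*β/α) with hc_def
  have hc : 0 < c := by rw [hc_def]; positivity
  -- bound on the perturbation
  have hcb : ((d + α)/2) * c * δ' ^ (-(2*β/α)) ≤ ε / 2 := by
    have hu : (0:ℝ) < R ^ (-(α/β)) * t := by positivity
    have h1 : c = C₂ ^ (-(2:ℝ)) * (R ^ (-(α/β)) * t) ^ (2*β/α) := by
      rw [hc_def, Real.mul_rpow hC₂.le hR.le,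
        Real.mul_rpow (by positivity : (0:ℝ) ≤ R ^ (-(α/β))) ht.le,
        ← Real.rpow_mul hR.le, show -(α/β) * (2*β/α) = -(2:ℝ) by field_simp]
      ring
    have h3 : ((ε * δ' ^ (2*β/α) * C₂ ^ (2:ℝ) / (2 * ((d + α)/2))) ^ (2*β/α)⁻¹) ^ (2*β/α)
        = ε * δ' ^ (2*β/α) * C₂ ^ (2:ℝ) / (2 * ((d + α)/2)) :=
      Real.rpow_inv_rpow (by positivity) he.ne'
    have h2 : (R ^ (-(α/β)) * t) ^ (2*β/α)
        ≤ ε * δ' ^ (2*β/α) * C₂ ^ (2:ℝ) / (2 * ((d + α)/2)) := by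
      rw [← h3]
      exact Real.rpow_le_rpow hu.le hle he.le
    have hC2 : C₂ ^ (-(2:ℝ)) * C₂ ^ (2:ℝ) = 1 := by
      rw [← Real.rpow_add hC₂]; norm_num
    have hδe : δ' ^ (2*β/α) * δ' ^ (-(2*β/α)) = 1 := by
      rw [← Real.rpow_add hδ'pos]; norm_num
    calc ((d + α)/2) * c * δ' ^ (-(2*β/α))
        ≤ ((d + α)/2) * (C₂ ^ (-(2:ℝ)) *
            (ε * δ' ^ (2*β/α) * C₂ ^ (2:ℝ) / (2 * ((d + α)/2)))) * δ' ^ (-(2*β/α)) := by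
          rw [h1]
          apply mul_le_mul_of_nonneg_right _ (by positivity)
          apply mul_le_mul_of_nonneg_left _ hp.le
          exact mul_le_mul_of_nonneg_left h2 (by positivity)
      _ = (C₂ ^ (-(2:ℝ)) * C₂ ^ (2:ℝ)) * (δ' ^ (2*β/α) * δ' ^ (-(2*β/α))) *
            (((d + α)/2) / (2 * ((d + α)/2))) * ε := by ring
      _ = ε / 2 := by
          rw [hC2, hδe, show ((d + α)/2) / (2 * ((d + α)/2)) = 1/2 by
            rw [div_eq_div_iff (by positivity) (by norm_num)]; ring]
          ring
  -- rewrite pSinv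
  have hpS : pSinv t x y = (C₁ * (C₂ * R) ^ (-(d + α)) * t ^ β) *
      ∫ s in Ioi (0:ℝ), s ^ (-β) * (1 + c * s ^ (-(2*β/α))) ^ (-((d + α)/2)) ∂μ := by
    rw [hpSinv t ht x y, ← MeasureTheory.integral_const_mul]
    refine setIntegral_congr_fun measurableSet_Ioi (fun s hs => ?_)
    have hs0 : (0:ℝ) < s := hs
    rw [hc_def]
    exact aux_pt hβ0 hd hα hC₂ ht hR hs0
  set Ic := ∫ s in Ioi (0:ℝ), s ^ (-β) * (1 + c * s ^ (-(2*β/α))) ^ (-((d + α)/2)) ∂μ with hIc_def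
  have hgmeas : Measurable fun s : ℝ =>
      s ^ (-β) * (1 + c * s ^ (-(2*β/α))) ^ (-((d + α)/2)) := by fun_prop
  have hgle : ∀ s ∈ Ioi (0:ℝ),
      s ^ (-β) * (1 + c * s ^ (-(2*β/α))) ^ (-((d + α)/2)) ≤ s ^ (-β) := by
    intro s hs
    have hs0 : (0:ℝ) < s := hs
    have h1 : (1 + c * s ^ (-(2*β/α))) ^ (-((d + α)/2)) ≤ 1 :=
      Real.rpow_le_one_of_one_le_of_nonpos
        (le_add_of_nonneg_right (by positivity)) (neg_nonpos.mpr hp.le)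
    nlinarith [Real.rpow_nonneg hs0.le (-β)]
  have hgnn : ∀ s ∈ Ioi (0:ℝ),
      0 ≤ s ^ (-β) * (1 + c * s ^ (-(2*β/α))) ^ (-((d + α)/2)) := by
    intro s hs
    have hs0 : (0:ℝ) < s := hs
    positivity
  have hgint : IntegrableOn (fun s : ℝ =>
      s ^ (-β) * (1 + c * s ^ (-(2*β/α))) ^ (-((d + α)/2))) (Ioi 0) μ := by
    refine hfint.mono' hgmeas.aestronglyMeasurable ?_
    filter_upwards [ae_restrict_mem measurableSet_Ioi] with s hs
    rw [Real.norm_eq_abs, abs_of_nonneg (hgnn s hs)]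
    exact hgle s hs
  have hIc_nonneg : 0 ≤ Ic := setIntegral_nonneg measurableSet_Ioi hgnn
  have hIc_le : Ic ≤ ∫ s in Ioi (0:ℝ), s ^ (-β) ∂μ :=
    setIntegral_mono_on hgint hfint measurableSet_Ioi hgle
  -- difference bound
  have hdiff : (∫ s in Ioi (0:ℝ), s ^ (-β) ∂μ) - Ic
      ≤ (∫ s in Ioc (0:ℝ) δ', s ^ (-β) ∂μ)
        + (((d + α)/2) * c * δ' ^ (-(2*β/α))) * ∫ s in Ioi (0:ℝ), s ^ (-β) ∂μ := by
    rw [hIc_def, ← integral_sub hfint hgint]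
    have hbint : IntegrableOn (fun s : ℝ =>
        (Ioc (0:ℝ) δ').indicator (fun u : ℝ => u ^ (-β)) s
          + (((d + α)/2) * c * δ' ^ (-(2*β/α))) * s ^ (-β)) (Ioi 0) μ :=
      (hfint.indicator measurableSet_Ioc).add (hfint.const_mul _)
    refine le_trans (setIntegral_mono_on (hfint.sub hgint) hbint measurableSet_Ioi ?_)
      (le_of_eq ?_)
    · intro s hs
      have hs0 : (0:ℝ) < s := hs
      have hsβ : 0 ≤ s ^ (-β) := by positivity
      by_cases hmem : s ∈ Ioc (0:ℝ) δ'
      · rw [Set.indicator_of_mem hmem]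
        have h2 : 0 ≤ (((d + α)/2) * c * δ' ^ (-(2*β/α))) * s ^ (-β) := by positivity
        have h3 := hgnn s hs
        linarith
      · rw [Set.indicator_of_notMem hmem]
        have hsδ : δ' < s := by
          by_contra hcon
          exact hmem ⟨hs0, not_lt.mp hcon⟩
        have hw0 : 0 ≤ c * s ^ (-(2*β/α)) := by positivity
        have hb1 : 1 - ((d + α)/2) * (c * s ^ (-(2*β/α)))
            ≤ (1 + c * s ^ (-(2*β/α))) ^ (-((d + α)/2)) := aux_bern hp.le hw0
        have hse : s ^ (-(2*β/α)) ≤ δ' ^ (-(2*β/α)) :=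
          Real.rpow_le_rpow_of_nonpos hδ'pos hsδ.le (neg_nonpos.mpr he.le)
        have h4 := mul_le_mul_of_nonneg_left hb1 hsβ
        have h5 := mul_le_mul_of_nonneg_left hse
          (show 0 ≤ ((d + α)/2) * c * s ^ (-β) by positivity)
        nlinarith
    · rw [integral_add (hfint.indicator measurableSet_Ioc) (hfint.const_mul _),
        integral_indicator measurableSet_Ioc, Measure.restrict_restrict measurableSet_Ioc,
        inter_eq_self_of_subset_left Ioc_subset_Ioi_self, MeasureTheory.integral_const_mul]
  -- final computation
  have hKIβ : (β * Real.Gamma β) * (∫ s in Ioi (0:ℝ), s ^ (-β) ∂μ) = 1 := by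
    rw [hIβ]; field_simp
  have hden : (0:ℝ) < C₁ * (C₂ ^ (-(d + α)) / (β * Real.Gamma β)) *
      (R ^ (-(d + α)) * t ^ β) := by positivity
  have hratio : pSinv t x y / (C₁ * (C₂ ^ (-(d + α)) / (β * Real.Gamma β)) *
      (R ^ (-(d + α)) * t ^ β)) = (β * Real.Gamma β) * Ic := by
    rw [div_eq_iff hden.ne', hpS, Real.mul_rpow hC₂.le hR.le]
    field_simp
  rw [hratio]
  clear_value Ic c R
  have h6 := mul_le_mul_of_nonneg_left hdiff hK.le
  have h7 := mul_le_mul_of_nonneg_left hA hK.le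
  have h8 : (β * Real.Gamma β) * (ε / (2 * (β * Real.Gamma β))) = ε / 2 := by field_simp
  have h9 : (β * Real.Gamma β) *
      ((((d + α)/2) * c * δ' ^ (-(2*β/α))) * ∫ s in Ioi (0:ℝ), s ^ (-β) ∂μ)
      = (((d + α)/2) * c * δ' ^ (-(2*β/α))) *
        ((β * Real.Gamma β) * ∫ s in Ioi (0:ℝ), s ^ (-β) ∂μ) := by ring
  rw [mul_add, h9, hKIβ, mul_one] at h6
  have h10 : (β * Real.Gamma β) * Ic ≤ 1 := by
    have := mul_le_mul_of_nonneg_left hIc_le hK.le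
    linarith [hKIβ]
  rw [abs_le]
  constructor
  · have h11 : (β * Real.Gamma β) * ((∫ s in Ioi (0:ℝ), s ^ (-β) ∂μ) - Ic)
        = 1 - (β * Real.Gamma β) * Ic := by rw [mul_sub, hKIβ]
    rw [h11] at h6
    rw [h8] at h7
    linarith only [h6, h7, hcb]
  · linarith only [h10, hε]
end

section
/- Let p^S(t,x,y) = ∫_{(0,∞)} (4π t^{1/β} s)^{-d/2} exp(-|x-y|²/(4 t^{1/β} s)) μ_β(ds) be the β-stable subordinate Gaussian kernel on ℝ^d. Then, as |x-y| t^{-1/(2β)} → 0, p^S(t,x,y) ∼ (Γ((d+1)/2) Γ(d/(2β)) / (2β π^{(d+1)/2} Γ(d))) t^{-d/(2β)}; that is, for every ε > 0 there exists δ > 0 such that whenever t > 0, x, y ∈ ℝ^d and |x-y| t^{-1/(2β)} ≤ δ, the ratio of the two sides lies within ε of 1. -/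
open MeasureTheory Set Real Filter

lemma aux_intOn_rpow_mul_exp_neg_mul {q b : ℝ} (hq : -1 < q) (hb : 0 < b) :
    IntegrableOn (fun x : ℝ => x ^ q * Real.exp (-(b * x))) (Ioi 0) := by
  have h := integrableOn_rpow_mul_exp_neg_mul_rpow (p := 1) hq one_pos hb
  refine h.congr_fun (fun x hx => ?_) measurableSet_Ioi
  simp [Real.rpow_one, neg_mul]

lemma aux_intOn_rpow_mul_exp_neg_rpow {q β : ℝ} (hq : -1 < q) (hβ : 0 < β) :
    IntegrableOn (fun x : ℝ => x ^ q * Real.exp (-x ^ β)) (Ioi 0) := by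
  have hf : IntegrableOn (fun u : ℝ => Real.exp (-u) * u ^ ((q + 1) / β - 1)) (Ioi 0) :=
    Real.GammaIntegral_convergent (div_pos (by linarith) hβ)
  have h := (integrableOn_Ioi_comp_rpow_iff'
    (fun u : ℝ => Real.exp (-u) * u ^ ((q + 1) / β - 1)) hβ.ne').mpr hf
  refine h.congr_fun (fun x hx => ?_) measurableSet_Ioi
  have hx0 : (0:ℝ) < x := hx
  have h1 : (x ^ β) ^ ((q + 1) / β - 1) = x ^ (q + 1 - β) := by
    rw [← Real.rpow_mul hx0.le]
    congr 1
    field_simp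
  have h2 : x ^ (β - 1) * x ^ (q + 1 - β) = x ^ q := by
    rw [← Real.rpow_add hx0]
    congr 1
    ring
  calc x ^ (β - 1) • (Real.exp (-x ^ β) * (x ^ β) ^ ((q + 1) / β - 1))
      = x ^ (β - 1) * x ^ (q + 1 - β) * Real.exp (-x ^ β) := by rw [smul_eq_mul, h1]; ring
    _ = x ^ q * Real.exp (-x ^ β) := by rw [h2]

lemma aux_lintegral_rpow_neg (β : ℝ) (hβ0 : 0 < β) (μ : Measure ℝ) [IsProbabilityMeasure μ]
    (hlap : ∀ r : ℝ, 0 < r →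
      ∫ s in Ioi (0:ℝ), Real.exp (-(r * s)) ∂μ = Real.exp (-(r ^ β)))
    (p : ℝ) (hp : 0 < p) :
    ∫⁻ s in Ioi (0:ℝ), ENNReal.ofReal (s ^ (-p)) ∂μ
      = ENNReal.ofReal (Real.Gamma (p / β) / (β * Real.Gamma p)) := by
  set ν := μ.restrict (Ioi 0) with hν
  set f : ℝ → ℝ → ENNReal := fun r s =>
    ENNReal.ofReal (r ^ (p - 1)) * ENNReal.ofReal (Real.exp (-(r * s))) with hf
  -- Step 1: Laplace transform in lintegral form
  have step1 : ∀ r : ℝ, 0 < r →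
      ∫⁻ s, ENNReal.ofReal (Real.exp (-(r * s))) ∂ν = ENNReal.ofReal (Real.exp (-(r ^ β))) := by
    intro r hr
    rw [← hlap r hr]
    refine (ofReal_integral_eq_lintegral_ofReal ?_ ?_).symm
    · refine Integrable.mono' (integrable_const 1)
        (Measurable.aestronglyMeasurable (by fun_prop)) ?_
      filter_upwards [ae_restrict_mem measurableSet_Ioi] with s hs
      rw [Real.norm_eq_abs, abs_of_pos (Real.exp_pos _)]
      calc Real.exp (-(r * s)) ≤ Real.exp 0 :=
            Real.exp_le_exp.mpr (by nlinarith [mem_Ioi.mp hs])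
        _ = 1 := Real.exp_zero
    · exact Eventually.of_forall fun s => (Real.exp_pos _).le
  -- Fubini
  have hmeasF : Measurable (Function.uncurry f) := by
    rw [hf]; fun_prop
  have swap := lintegral_lintegral_swap (μ := volume.restrict (Ioi (0:ℝ))) (ν := ν)
    hmeasF.aemeasurable
  -- LHS computation
  have lhs_eq : (∫⁻ r in Ioi (0:ℝ), ∫⁻ s, f r s ∂ν)
      = ENNReal.ofReal (1 / β * Real.Gamma (p / β)) := by
    have e1 : (∫⁻ r in Ioi (0:ℝ), ∫⁻ s, f r s ∂ν)
        = ∫⁻ r in Ioi (0:ℝ), ENNReal.ofReal (r ^ (p - 1) * Real.exp (-r ^ β)) := by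
      refine setLIntegral_congr_fun measurableSet_Ioi (fun r hr => ?_)
      simp only [hf]
      rw [lintegral_const_mul _ (by fun_prop), step1 r hr,
        ← ENNReal.ofReal_mul (Real.rpow_nonneg (le_of_lt hr) _)]
    rw [e1, ← ofReal_integral_eq_lintegral_ofReal
        (aux_intOn_rpow_mul_exp_neg_rpow (by linarith) hβ0) ?_]
    · rw [integral_rpow_mul_exp_neg_rpow hβ0 (by linarith : (-1:ℝ) < p - 1)]
      norm_num
    · filter_upwards [ae_restrict_mem measurableSet_Ioi] with r hr
      exact mul_nonneg (Real.rpow_nonneg (le_of_lt hr) _) (Real.exp_pos _).le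
  -- RHS computation
  have rhs_eq : (∫⁻ s, (∫⁻ r in Ioi (0:ℝ), f r s) ∂ν)
      = ENNReal.ofReal (Real.Gamma p) * ∫⁻ s, ENNReal.ofReal (s ^ (-p)) ∂ν := by
    rw [← lintegral_const_mul _ (by fun_prop)]
    refine lintegral_congr_ae ?_
    filter_upwards [ae_restrict_mem measurableSet_Ioi] with s hs
    have hs0 : (0:ℝ) < s := hs
    have e2 : (∫⁻ r in Ioi (0:ℝ), f r s)
        = ∫⁻ r in Ioi (0:ℝ), ENNReal.ofReal (r ^ (p - 1) * Real.exp (-(s * r))) := by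
      refine setLIntegral_congr_fun measurableSet_Ioi (fun r hr => ?_)
      simp only [hf]
      rw [mul_comm r s, ← ENNReal.ofReal_mul (Real.rpow_nonneg (le_of_lt hr) _)]
    rw [e2, ← ofReal_integral_eq_lintegral_ofReal
        (aux_intOn_rpow_mul_exp_neg_mul (by linarith) hs0) ?_]
    · rw [Real.integral_rpow_mul_exp_neg_mul_Ioi hp hs0,
        ← ENNReal.ofReal_mul (Real.Gamma_pos_of_pos hp).le]
      congr 1
      rw [one_div, Real.inv_rpow hs0.le, ← Real.rpow_neg hs0.le]
      ring
    · filter_upwards [ae_restrict_mem measurableSet_Ioi] with r hr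
      exact mul_nonneg (Real.rpow_nonneg (le_of_lt hr) _) (Real.exp_pos _).le
  have swap' : ENNReal.ofReal (1 / β * Real.Gamma (p / β))
      = ENNReal.ofReal (Real.Gamma p) * ∫⁻ s, ENNReal.ofReal (s ^ (-p)) ∂ν := by
    rw [← lhs_eq, ← rhs_eq]; exact swap
  have hΓ : (0:ℝ) < Real.Gamma p := Real.Gamma_pos_of_pos hp
  have hfin : (ENNReal.ofReal (Real.Gamma p) ≠ 0) := by
    simp [ENNReal.ofReal_eq_zero, not_le, hΓ]
  have : ENNReal.ofReal (Real.Gamma p) * (∫⁻ s, ENNReal.ofReal (s ^ (-p)) ∂ν)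
      = ENNReal.ofReal (Real.Gamma p) *
        ENNReal.ofReal (Real.Gamma (p / β) / (β * Real.Gamma p)) := by
    rw [← swap', ← ENNReal.ofReal_mul hΓ.le]
    congr 1
    field_simp
  exact (ENNReal.mul_right_inj hfin ENNReal.ofReal_ne_top).mp this


theorem stmt_6
    (β : ℝ) (hβ0 : 0 < β) (hβ1 : β < 1)
    (μ : Measure ℝ) (hprob : IsProbabilityMeasure μ)
    (hsupp : μ (Set.Iic 0) = 0)
    (hlap : ∀ r : ℝ, 0 < r →
      ∫ s in Set.Ioi (0:ℝ), Real.exp (-(r * s)) ∂μ = Real.exp (-(r ^ β)))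
    (d : ℕ) (hd : 1 ≤ d)
    (pS : ℝ → EuclideanSpace ℝ (Fin d) → EuclideanSpace ℝ (Fin d) → ℝ)
    (hpS : ∀ t : ℝ, 0 < t → ∀ x y : EuclideanSpace ℝ (Fin d),
      pS t x y = ∫ s in Set.Ioi (0:ℝ),
        (4 * Real.pi * (t ^ (1/β) * s)) ^ (-((d:ℝ)/2)) *
          Real.exp (-(dist x y ^ 2 / (4 * (t ^ (1/β) * s)))) ∂μ) :
    ∀ ε : ℝ, 0 < ε → ∃ δ : ℝ, 0 < δ ∧ ∀ t : ℝ, 0 < t →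
      ∀ x y : EuclideanSpace ℝ (Fin d),
      dist x y * t ^ (-(1/(2*β))) ≤ δ →
      |pS t x y /
        (Real.Gamma (((d:ℝ) + 1)/2) * Real.Gamma ((d:ℝ)/(2*β)) /
            (2 * β * Real.pi ^ (((d:ℝ) + 1)/2) * Real.Gamma (d:ℝ)) *
          t ^ (-((d:ℝ)/(2*β)))) - 1| ≤ ε := by
  haveI := hprob
  set pp : ℝ := (d:ℝ)/2 with hpp
  have hd0 : (0:ℝ) < (d:ℝ) := by exact_mod_cast Nat.lt_of_lt_of_le Nat.zero_lt_one hd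
  have hppos : 0 < pp := by positivity
  -- the moment of order -pp
  have hlint := aux_lintegral_rpow_neg β hβ0 μ hlap pp hppos
  have hmeas : Measurable fun s : ℝ => s ^ (-pp) := by fun_prop
  have hnn : 0 ≤ᵐ[μ.restrict (Ioi 0)] fun s : ℝ => s ^ (-pp) := by
    filter_upwards [ae_restrict_mem measurableSet_Ioi] with s hs
    exact Real.rpow_nonneg (le_of_lt hs) _
  have hInt : IntegrableOn (fun s : ℝ => s ^ (-pp)) (Ioi 0) μ := by
    refine ⟨hmeas.aestronglyMeasurable, ?_⟩
    rw [hasFiniteIntegral_iff_ofReal hnn, hlint]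
    exact ENNReal.ofReal_lt_top
  have hVal : ∫ s in Ioi (0:ℝ), s ^ (-pp) ∂μ
      = Real.Gamma (pp / β) / (β * Real.Gamma pp) := by
    rw [integral_eq_lintegral_of_nonneg_ae hnn hmeas.aestronglyMeasurable, hlint,
      ENNReal.toReal_ofReal]
    positivity
  -- the function F
  set F : ℝ → ℝ := fun a => ∫ s in Ioi (0:ℝ), s ^ (-pp) * Real.exp (-(a/s)) ∂μ with hF
  have hF0 : F 0 = Real.Gamma (pp / β) / (β * Real.Gamma pp) := by
    rw [hF, ← hVal]
    refine setIntegral_congr_fun measurableSet_Ioi (fun s hs => ?_)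
    simp
  have hF0pos : 0 < F 0 := by
    rw [hF0]; positivity
  -- dominated bound
  have hbd : ∀ a : ℝ, 0 ≤ a → ∀ᵐ s ∂μ.restrict (Ioi 0),
      ‖s ^ (-pp) * Real.exp (-(a/s))‖ ≤ s ^ (-pp) := by
    intro a ha
    filter_upwards [ae_restrict_mem measurableSet_Ioi] with s hs
    have hs0 : (0:ℝ) < s := hs
    rw [Real.norm_eq_abs, abs_of_nonneg
      (mul_nonneg (Real.rpow_nonneg hs0.le _) (Real.exp_pos _).le)]
    calc s ^ (-pp) * Real.exp (-(a/s)) ≤ s ^ (-pp) * 1 := by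
          refine mul_le_mul_of_nonneg_left ?_ (Real.rpow_nonneg hs0.le _)
          rw [← Real.exp_zero]
          exact Real.exp_le_exp.mpr (neg_nonpos.mpr (by positivity))
      _ = s ^ (-pp) := mul_one _
  -- integrability of the integrand of F a
  have hmeasa : ∀ a : ℝ, Measurable fun s : ℝ => s ^ (-pp) * Real.exp (-(a/s)) := by
    intro a; fun_prop
  have hFint : ∀ a : ℝ, 0 ≤ a →
      IntegrableOn (fun s : ℝ => s ^ (-pp) * Real.exp (-(a/s))) (Ioi 0) μ := fun a ha =>
    hInt.mono' (hmeasa a).aestronglyMeasurable (hbd a ha)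
  -- continuity of F at 0 from the right
  have htend : Filter.Tendsto F (nhdsWithin 0 (Ici 0)) (nhds (F 0)) := by
    have h0 : F 0 = ∫ s in Ioi (0:ℝ), s ^ (-pp) * Real.exp (-((0:ℝ)/s)) ∂μ := rfl
    rw [h0]
    refine tendsto_integral_filter_of_dominated_convergence (fun s => s ^ (-pp))
      ?_ ?_ hInt ?_
    · exact Filter.Eventually.of_forall fun a => (hmeasa a).aestronglyMeasurable
    · filter_upwards [self_mem_nhdsWithin] with a ha
      exact hbd a ha
    · filter_upwards [ae_restrict_mem measurableSet_Ioi] with s hs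
      have hc : Continuous fun a : ℝ => s ^ (-pp) * Real.exp (-(a/s)) := by fun_prop
      exact (hc.tendsto 0).mono_left nhdsWithin_le_nhds
  -- the constant identity
  have hTpos : ∀ t : ℝ, 0 < t → (0:ℝ) < t ^ (1/β) := fun t ht => Real.rpow_pos_of_pos ht _
  have h4pi : (0:ℝ) < 4 * Real.pi := by positivity
  have hCid : Real.Gamma (((d:ℝ) + 1)/2) * Real.Gamma ((d:ℝ)/(2*β)) /
        (2 * β * Real.pi ^ (((d:ℝ) + 1)/2) * Real.Gamma (d:ℝ))
      = (4 * Real.pi) ^ (-pp) * F 0 := by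
    have h4 : (4 * Real.pi) ^ ((d:ℝ)/2) = 2 ^ (d:ℝ) * Real.pi ^ ((d:ℝ)/2) := by
      rw [Real.mul_rpow (by norm_num) Real.pi_pos.le]
      congr 1
      rw [show (4:ℝ) = (2:ℝ) ^ (2:ℝ) by
        rw [show ((2:ℝ):ℝ) = ((2:ℕ):ℝ) by norm_num, Real.rpow_natCast]; norm_num]
      rw [← Real.rpow_mul (by norm_num : (0:ℝ) ≤ 2)]
      congr 1
      ring
    have hdup : Real.Gamma ((d:ℝ)/2) * Real.Gamma (((d:ℝ)+1)/2)
        = Real.Gamma (d:ℝ) * 2 ^ (1-(d:ℝ)) * Real.pi ^ ((1:ℝ)/2) := by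
      have h := Real.Gamma_mul_Gamma_add_half ((d:ℝ)/2)
      rw [show (d:ℝ)/2 + 1/2 = ((d:ℝ)+1)/2 by ring, show 2*((d:ℝ)/2) = (d:ℝ) by ring,
        Real.sqrt_eq_rpow] at h
      exact h
    have key : Real.Gamma ((d:ℝ)/2) * Real.Gamma (((d:ℝ)+1)/2) * (2 ^ (d:ℝ) * Real.pi ^ ((d:ℝ)/2))
        = 2 * Real.pi ^ (((d:ℝ)+1)/2) * Real.Gamma (d:ℝ) := by
      rw [hdup]
      have e2 : (2:ℝ) ^ (1-(d:ℝ)) * 2 ^ (d:ℝ) = 2 := by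
        rw [← Real.rpow_add (by norm_num : (0:ℝ) < 2)]
        norm_num
      have epi : Real.pi ^ ((1:ℝ)/2) * Real.pi ^ ((d:ℝ)/2) = Real.pi ^ (((d:ℝ)+1)/2) := by
        rw [← Real.rpow_add Real.pi_pos]
        congr 1; ring
      calc Real.Gamma (d:ℝ) * 2 ^ (1-(d:ℝ)) * Real.pi ^ ((1:ℝ)/2) *
            (2 ^ (d:ℝ) * Real.pi ^ ((d:ℝ)/2))
          = (2 ^ (1-(d:ℝ)) * 2 ^ (d:ℝ)) * (Real.pi ^ ((1:ℝ)/2) * Real.pi ^ ((d:ℝ)/2)) *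
            Real.Gamma (d:ℝ) := by ring
        _ = 2 * Real.pi ^ (((d:ℝ)+1)/2) * Real.Gamma (d:ℝ) := by rw [e2, epi]
    rw [hF0, Real.rpow_neg h4pi.le]
    have hppβ : pp / β = (d:ℝ)/(2*β) := by rw [hpp]; ring
    rw [hppβ]
    have hG1 : 0 < Real.Gamma (((d:ℝ)+1)/2) := Real.Gamma_pos_of_pos (by positivity)
    have hGh : 0 < Real.Gamma ((d:ℝ)/2) := Real.Gamma_pos_of_pos (by positivity)
    have hGd : 0 < Real.Gamma (d:ℝ) := Real.Gamma_pos_of_pos hd0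
    have hpw : (0:ℝ) < (4*Real.pi) ^ pp := Real.rpow_pos_of_pos h4pi _
    have hpw2 : (0:ℝ) < Real.pi ^ (((d:ℝ)+1)/2) := Real.rpow_pos_of_pos Real.pi_pos _
    rw [hpp] at hpw ⊢
    rw [h4] at hpw ⊢
    have h2d : (0:ℝ) < 2 ^ (d:ℝ) := Real.rpow_pos_of_pos (by norm_num) _
    have hpd : (0:ℝ) < Real.pi ^ ((d:ℝ)/2) := Real.rpow_pos_of_pos Real.pi_pos _
    field_simp
    linear_combination key
  -- main argument
  intro ε hε
  have hεF : 0 < ε * F 0 := mul_pos hε hF0pos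
  obtain ⟨δ₁, hδ₁, hδprop⟩ := Metric.tendsto_nhdsWithin_nhds.mp htend (ε * F 0) hεF
  refine ⟨Real.sqrt δ₁, Real.sqrt_pos.mpr hδ₁, ?_⟩
  intro t ht x y hxy
  set u : ℝ := dist x y * t ^ (-(1/(2*β))) with hu
  have hu0 : 0 ≤ u := mul_nonneg dist_nonneg (Real.rpow_nonneg ht.le _)
  set a : ℝ := u^2/4 with ha
  have ha0 : 0 ≤ a := by positivity
  have halt : a < δ₁ := by
    have h1 : u^2 ≤ δ₁ := by
      calc u^2 ≤ (Real.sqrt δ₁)^2 := by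
            exact pow_le_pow_left₀ hu0 hxy 2
        _ = δ₁ := Real.sq_sqrt hδ₁.le
    rw [ha]; linarith
  have hFa : |F a - F 0| < ε * F 0 := by
    have := hδprop (mem_Ici.mpr ha0)
      (by rw [Real.dist_eq, sub_zero, abs_of_nonneg ha0]; exact halt)
    rwa [Real.dist_eq] at this
  -- rewrite pS
  have hTs : (0:ℝ) < t ^ (1/β) := hTpos t ht
  have hpSval : pS t x y = (4 * Real.pi * t ^ (1/β)) ^ (-pp) * F a := by
    rw [hpS t ht x y]
    have heq : ∀ s ∈ Ioi (0:ℝ),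
        (4 * Real.pi * (t ^ (1/β) * s)) ^ (-pp) *
          Real.exp (-(dist x y ^ 2 / (4 * (t ^ (1/β) * s))))
        = (4 * Real.pi * t ^ (1/β)) ^ (-pp) * (s ^ (-pp) * Real.exp (-(a/s))) := by
      intro s hs
      have hs0 : (0:ℝ) < s := hs
      have e1 : (4 * Real.pi * (t ^ (1/β) * s)) ^ (-pp)
          = (4 * Real.pi * t ^ (1/β)) ^ (-pp) * s ^ (-pp) := by
        rw [show 4 * Real.pi * (t ^ (1/β) * s) = (4 * Real.pi * t ^ (1/β)) * s by ring,
          Real.mul_rpow (by positivity) hs0.le]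
      have e2 : dist x y ^ 2 / (4 * (t ^ (1/β) * s)) = a/s := by
        rw [ha, hu]
        have ht2 : (t ^ (-(1/(2*β))))^2 = (t ^ (1/β))⁻¹ := by
          rw [← Real.rpow_natCast (t ^ (-(1/(2*β)))) 2, ← Real.rpow_mul ht.le,
            ← Real.rpow_neg ht.le]
          congr 1
          push_cast
          field_simp
        rw [mul_pow, ht2, div_div, div_eq_div_iff (by positivity) (by positivity)]
        linear_combination (-(dist x y ^ 2 * s * 4)) * (mul_inv_cancel₀ hTs.ne')
      rw [e1, e2, mul_assoc]
    rw [setIntegral_congr_fun measurableSet_Ioi heq, integral_const_mul]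
  -- split the power
  have hsplit : (4 * Real.pi * t ^ (1/β)) ^ (-pp)
      = (4 * Real.pi) ^ (-pp) * t ^ (-((d:ℝ)/(2*β))) := by
    rw [Real.mul_rpow h4pi.le hTs.le]
    congr 1
    rw [← Real.rpow_mul ht.le]
    congr 1
    rw [hpp]
    field_simp
  have hden : Real.Gamma (((d:ℝ) + 1)/2) * Real.Gamma ((d:ℝ)/(2*β)) /
        (2 * β * Real.pi ^ (((d:ℝ) + 1)/2) * Real.Gamma (d:ℝ)) * t ^ (-((d:ℝ)/(2*β)))
      = ((4 * Real.pi) ^ (-pp) * t ^ (-((d:ℝ)/(2*β)))) * F 0 := by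
    rw [hCid]; ring
  have hKpos : (0:ℝ) < (4 * Real.pi) ^ (-pp) * t ^ (-((d:ℝ)/(2*β))) :=
    mul_pos (Real.rpow_pos_of_pos h4pi _) (Real.rpow_pos_of_pos ht _)
  have hratio : pS t x y /
      (Real.Gamma (((d:ℝ) + 1)/2) * Real.Gamma ((d:ℝ)/(2*β)) /
        (2 * β * Real.pi ^ (((d:ℝ) + 1)/2) * Real.Gamma (d:ℝ)) * t ^ (-((d:ℝ)/(2*β))))
      = F a / F 0 := by
    have hnum : pS t x y = ((4 * Real.pi) ^ (-pp) * t ^ (-((d:ℝ)/(2*β)))) * F a := by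
      rw [hpSval, hsplit]
    rw [hnum, hden, mul_div_mul_left _ _ hKpos.ne']
  rw [hratio, div_sub_one hF0pos.ne', abs_div, abs_of_pos hF0pos, div_le_iff₀ hF0pos]
  exact hFa.le
end

section
/- Let p^S(t,x,y) = ∫_{(0,∞)} c(d) t^{1/β} s / ((t^{1/β} s)² + |x-y|²)^{(d+1)/2} μ_β(ds) be the β-stable subordinate Cauchy kernel on ℝ^d, where c(d) = π^{-(d+1)/2} Γ((d+1)/2). Then, as |x-y| t^{-1/β} → 0, p^S(t,x,y) ∼ (Γ((d+1)/2) Γ(d/β) / (β π^{(d+1)/2} Γ(d))) t^{-d/β}; that is, for every ε > 0 there exists δ > 0 such that whenever t > 0, x, y ∈ ℝ^d and |x-y| t^{-1/β} ≤ δ, the ratio of the two sides lies within ε of 1. -/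
open MeasureTheory Set Real Filter
open scoped ENNReal NNReal Topology

lemma aux_int_exp {d : ℕ} (hd : 1 ≤ d) {s : ℝ} (hs : 0 < s) :
    IntegrableOn (fun t : ℝ => t ^ ((d:ℝ)-1) * Real.exp (-(s*t))) (Ioi 0) := by
  have h0 : (0:ℝ) < (d:ℝ) := by exact_mod_cast Nat.lt_of_lt_of_le Nat.zero_lt_one hd
  have h1 : IntegrableOn (fun x : ℝ => Real.exp (-x) * x ^ ((d:ℝ) - 1)) (Ioi 0) :=
    Real.GammaIntegral_convergent h0
  have h2 : IntegrableOn (fun t : ℝ => Real.exp (-(s*t)) * (s*t) ^ ((d:ℝ) - 1)) (Ioi 0) := by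
    have := (integrableOn_Ioi_comp_mul_left_iff
      (fun x : ℝ => Real.exp (-x) * x ^ ((d:ℝ) - 1)) 0 hs).mpr
    simpa using this (by simpa using h1)
  have h3 : IntegrableOn (fun t : ℝ =>
      (s ^ ((d:ℝ)-1))⁻¹ * (Real.exp (-(s*t)) * (s*t) ^ ((d:ℝ) - 1))) (Ioi 0) :=
    h2.const_mul _
  refine h3.congr_fun (fun t ht => ?_) measurableSet_Ioi
  have ht' : (0:ℝ) < t := ht
  dsimp only
  rw [Real.mul_rpow hs.le ht'.le]
  field_simp [Real.rpow_pos_of_pos hs ((d:ℝ)-1) |>.ne']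

lemma aux_int_rpow {β : ℝ} (hβ0 : 0 < β) {d : ℕ} (hd : 1 ≤ d) :
    IntegrableOn (fun t : ℝ => t ^ ((d:ℝ)-1) * Real.exp (-(t^β))) (Ioi 0) := by
  have h0 : (0:ℝ) < (d:ℝ) := by exact_mod_cast Nat.lt_of_lt_of_le Nat.zero_lt_one hd
  have h1 : IntegrableOn (fun y : ℝ => Real.exp (-y) * y ^ ((d:ℝ)/β - 1)) (Ioi 0) :=
    Real.GammaIntegral_convergent (by positivity)
  have h2 := (integrableOn_Ioi_comp_rpow_iff'
    (fun y : ℝ => Real.exp (-y) * y ^ ((d:ℝ)/β - 1)) (p := β) hβ0.ne').mpr h1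
  refine h2.congr_fun (fun t ht => ?_) measurableSet_Ioi
  have ht' : (0:ℝ) < t := ht
  dsimp only
  rw [smul_eq_mul, ← Real.rpow_mul ht'.le,
    show β * ((d:ℝ)/β - 1) = (d:ℝ) - β by field_simp,
    show t^(β-1) * (Real.exp (-t^β) * t^((d:ℝ)-β))
      = (t^(β-1) * t^((d:ℝ)-β)) * Real.exp (-t^β) by ring,
    ← Real.rpow_add ht', show β - 1 + ((d:ℝ)-β) = (d:ℝ)-1 by ring]

lemma aux_moment {β : ℝ} (hβ0 : 0 < β) (μ : Measure ℝ) [IsProbabilityMeasure μ]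
    (hlap : ∀ r : ℝ, 0 < r →
      ∫ s in Set.Ioi (0:ℝ), Real.exp (-(r * s)) ∂μ = Real.exp (-(r ^ β)))
    (d : ℕ) (hd : 1 ≤ d) :
    IntegrableOn (fun s : ℝ => s ^ (-(d:ℝ))) (Ioi 0) μ ∧
      ∫ s in Ioi (0:ℝ), s ^ (-(d:ℝ)) ∂μ
        = Real.Gamma ((d:ℝ)/β) / (β * Real.Gamma (d:ℝ)) := by
  have h0 : (0:ℝ) < (d:ℝ) := by exact_mod_cast Nat.lt_of_lt_of_le Nat.zero_lt_one hd
  have hΓd : 0 < Real.Gamma (d:ℝ) := Real.Gamma_pos_of_pos h0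
  set ν := μ.restrict (Ioi 0) with hν
  have hmeas : Measurable fun s : ℝ => s ^ (-(d:ℝ)) := measurable_id.pow measurable_const
  -- Step A
  have hA : ∀ r : ℝ, 0 < r →
      ∫⁻ s, ENNReal.ofReal (Real.exp (-(r*s))) ∂ν = ENNReal.ofReal (Real.exp (-(r^β))) := by
    intro r hr
    have hint : Integrable (fun s : ℝ => Real.exp (-(r*s))) ν := by
      refine Integrable.mono' (integrable_const 1)
        ((Real.continuous_exp.comp (continuous_const.mul continuous_id).neg).aestronglyMeasurable)
        ?_
      filter_upwards [ae_restrict_mem measurableSet_Ioi] with s hs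
      rw [Real.norm_eq_abs, abs_of_pos (Real.exp_pos _)]
      have : -(r*s) ≤ 0 := by nlinarith [mem_Ioi.mp hs]
      simpa using Real.exp_le_exp.mpr this
    rw [← ofReal_integral_eq_lintegral_ofReal hint
      (Filter.Eventually.of_forall fun s => (Real.exp_pos _).le), hν, hlap r hr]
  -- the key double integral identity
  set I := ∫⁻ s, ENNReal.ofReal (s ^ (-(d:ℝ))) ∂ν with hIdef
  have key : ENNReal.ofReal (Real.Gamma (d:ℝ)) * I
      = ENNReal.ofReal ((1/β) * Real.Gamma ((d:ℝ)/β)) := by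
    have hunc : Measurable (Function.uncurry fun s t : ℝ =>
        ENNReal.ofReal (t ^ ((d:ℝ)-1) * Real.exp (-(s*t)))) :=
      ((measurable_snd.pow measurable_const).mul
        ((measurable_fst.mul measurable_snd).neg.exp)).ennreal_ofReal
    calc ENNReal.ofReal (Real.Gamma (d:ℝ)) * I
        = ∫⁻ s, ENNReal.ofReal (Real.Gamma (d:ℝ)) * ENNReal.ofReal (s ^ (-(d:ℝ))) ∂ν := by
          rw [hIdef, lintegral_const_mul _ hmeas.ennreal_ofReal]
      _ = ∫⁻ s, ∫⁻ t in Ioi (0:ℝ),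
            ENNReal.ofReal (t ^ ((d:ℝ)-1) * Real.exp (-(s*t))) ∂volume ∂ν := by
          refine lintegral_congr_ae ?_
          filter_upwards [ae_restrict_mem measurableSet_Ioi] with s hs
          have hs' : (0:ℝ) < s := hs
          rw [← ENNReal.ofReal_mul hΓd.le,
            ← ofReal_integral_eq_lintegral_ofReal (aux_int_exp hd hs') ?_]
          · rw [integral_rpow_mul_exp_neg_mul_Ioi h0 hs', one_div,
              Real.inv_rpow hs'.le, ← Real.rpow_neg hs'.le, mul_comm]
          · filter_upwards [ae_restrict_mem measurableSet_Ioi] with t ht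
            have ht' : (0:ℝ) < t := ht
            positivity
      _ = ∫⁻ t in Ioi (0:ℝ), ∫⁻ s,
            ENNReal.ofReal (t ^ ((d:ℝ)-1) * Real.exp (-(s*t))) ∂ν ∂volume :=
          lintegral_lintegral_swap hunc.aemeasurable
      _ = ∫⁻ t in Ioi (0:ℝ), ENNReal.ofReal (t ^ ((d:ℝ)-1) * Real.exp (-(t^β))) ∂volume := by
          refine lintegral_congr_ae ?_
          filter_upwards [ae_restrict_mem measurableSet_Ioi] with t ht
          have ht' : (0:ℝ) < t := ht
          have hnn : 0 ≤ t ^ ((d:ℝ)-1) := Real.rpow_nonneg ht'.le _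
          simp_rw [ENNReal.ofReal_mul hnn]
          rw [lintegral_const_mul _ (f := fun s => ENNReal.ofReal (Real.exp (-(s*t)))) (((measurable_id'.mul measurable_const).neg.exp).ennreal_ofReal)]
          congr 1
          simp_rw [show ∀ s : ℝ, s * t = t * s from fun s => mul_comm s t]
          exact hA t ht'
      _ = ENNReal.ofReal (∫ t in Ioi (0:ℝ), t ^ ((d:ℝ)-1) * Real.exp (-(t^β))) := by
          rw [ofReal_integral_eq_lintegral_ofReal (aux_int_rpow hβ0 hd) ?_]
          filter_upwards [ae_restrict_mem measurableSet_Ioi] with t ht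
          have ht' : (0:ℝ) < t := ht
          positivity
      _ = ENNReal.ofReal ((1/β) * Real.Gamma ((d:ℝ)/β)) := by
          rw [show ∫ t in Ioi (0:ℝ), t ^ ((d:ℝ)-1) * Real.exp (-(t^β))
              = ∫ t in Ioi (0:ℝ), t ^ ((d:ℝ)-1) * Real.exp (-t^β) from rfl,
            integral_rpow_mul_exp_neg_rpow hβ0 (by linarith),
            show ((d:ℝ) - 1 + 1)/β = (d:ℝ)/β by ring]
  have hΓ0 : ENNReal.ofReal (Real.Gamma (d:ℝ)) ≠ 0 := by
    simp [ENNReal.ofReal_eq_zero, not_le, hΓd]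
  have hI : I = (ENNReal.ofReal (Real.Gamma (d:ℝ)))⁻¹
      * ENNReal.ofReal ((1/β) * Real.Gamma ((d:ℝ)/β)) := by
    rw [← key, ← mul_assoc, ENNReal.inv_mul_cancel hΓ0 ENNReal.ofReal_ne_top, one_mul]
  have hItop : I ≠ ⊤ := by
    rw [hI]
    exact (ENNReal.mul_lt_top (ENNReal.inv_lt_top.mpr (ENNReal.ofReal_pos.mpr hΓd))
      ENNReal.ofReal_lt_top).ne
  have haenn : 0 ≤ᵐ[ν] fun s : ℝ => s ^ (-(d:ℝ)) := by
    filter_upwards [ae_restrict_mem measurableSet_Ioi] with s hs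
    exact Real.rpow_nonneg (le_of_lt hs) _
  have hint : Integrable (fun s : ℝ => s ^ (-(d:ℝ))) ν := by
    refine ⟨hmeas.aestronglyMeasurable, ?_⟩
    rw [HasFiniteIntegral]
    have : ∫⁻ s, ‖s ^ (-(d:ℝ))‖ₑ ∂ν = I := by
      refine lintegral_congr_ae ?_
      filter_upwards [haenn] with s hs
      rw [← Real.enorm_eq_ofReal hs]
    rw [this]
    exact hItop.lt_top
  refine ⟨hint, ?_⟩
  rw [show (∫ s in Ioi (0:ℝ), s ^ (-(d:ℝ)) ∂μ) = ∫ s, s ^ (-(d:ℝ)) ∂ν from rfl,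
    integral_eq_lintegral_of_nonneg_ae haenn hmeas.aestronglyMeasurable, ← hIdef, hI,
    ENNReal.toReal_mul, ENNReal.toReal_inv, ENNReal.toReal_ofReal hΓd.le,
    ENNReal.toReal_ofReal (by positivity)]
  rw [eq_div_iff (by positivity : β * Real.Gamma (d:ℝ) ≠ 0)]
  field_simp [hΓd.ne', hβ0.ne']

lemma aux_key {d : ℕ} (hd : 1 ≤ d) {s : ℝ} (hs : 0 < s) :
    s / (s^2) ^ (((d:ℝ)+1)/2) = s ^ (-(d:ℝ)) := by
  rw [← Real.rpow_natCast s 2, ← Real.rpow_mul hs.le,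
    show (2:ℕ) * (((d:ℝ)+1)/2) = (d:ℝ)+1 by push_cast; ring,
    show -(d:ℝ) = 1 - ((d:ℝ)+1) by ring, Real.rpow_sub hs, Real.rpow_one]

lemma aux_tendsto (μ : Measure ℝ) [IsProbabilityMeasure μ] (d : ℕ) (hd : 1 ≤ d)
    (hint : IntegrableOn (fun s : ℝ => s ^ (-(d:ℝ))) (Ioi 0) μ) :
    Filter.Tendsto (fun a : ℝ => ∫ s in Ioi (0:ℝ), s / (s^2 + a^2) ^ (((d:ℝ)+1)/2) ∂μ)
      (𝓝 0) (𝓝 (∫ s in Ioi (0:ℝ), s ^ (-(d:ℝ)) ∂μ)) := by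
  set p : ℝ := ((d:ℝ)+1)/2 with hp
  have hppos : 0 < p := by positivity
  apply tendsto_integral_filter_of_dominated_convergence (fun s : ℝ => s ^ (-(d:ℝ)))
  · refine Eventually.of_forall fun a => ?_
    exact (measurable_id.div
      (((measurable_id.pow_const 2).add_const (a^2)).pow measurable_const)).aestronglyMeasurable
  · refine Eventually.of_forall fun a => ?_
    filter_upwards [ae_restrict_mem measurableSet_Ioi] with s hs
    have hs' : (0:ℝ) < s := hs
    have hden : 0 < (s^2) ^ p := Real.rpow_pos_of_pos (by positivity) _
    have hnn : 0 ≤ s / (s^2 + a^2) ^ p :=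
      div_nonneg hs'.le (Real.rpow_nonneg (by positivity) _)
    rw [Real.norm_eq_abs, abs_of_nonneg hnn, ← aux_key hd hs']
    exact div_le_div_of_nonneg_left hs'.le hden
      (Real.rpow_le_rpow (by positivity) (by nlinarith) hppos.le)
  · exact hint
  · filter_upwards [ae_restrict_mem measurableSet_Ioi] with s hs
    have hs' : (0:ℝ) < s := hs
    have hcont : ContinuousAt (fun a : ℝ => s / (s^2 + a^2) ^ p) 0 := by
      refine ContinuousAt.div continuousAt_const ?_ ?_
      · refine ContinuousAt.rpow_const ?_ (Or.inr hppos.le)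
        exact continuousAt_const.add ((continuous_pow 2).continuousAt)
      · have : (0:ℝ) < (s^2 + (0:ℝ)^2) ^ p := Real.rpow_pos_of_pos (by positivity) _
        exact this.ne'
    have h0 : s / (s^2 + (0:ℝ)^2) ^ p = s ^ (-(d:ℝ)) := by
      rw [show (0:ℝ)^2 = 0 by norm_num, add_zero, aux_key hd hs']
    rw [← h0]
    exact hcont.tendsto

theorem stmt_10
    (β : ℝ) (hβ0 : 0 < β) (hβ1 : β < 1)
    (μ : Measure ℝ) (hprob : IsProbabilityMeasure μ)
    (hsupp : μ (Set.Iic 0) = 0)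
    (hlap : ∀ r : ℝ, 0 < r →
      ∫ s in Set.Ioi (0:ℝ), Real.exp (-(r * s)) ∂μ = Real.exp (-(r ^ β)))
    (d : ℕ) (hd : 1 ≤ d)
    (pS : ℝ → EuclideanSpace ℝ (Fin d) → EuclideanSpace ℝ (Fin d) → ℝ)
    (hpS : ∀ t : ℝ, 0 < t → ∀ x y : EuclideanSpace ℝ (Fin d),
      pS t x y = ∫ s in Set.Ioi (0:ℝ),
        Real.pi ^ (-(((d:ℝ) + 1)/2)) * Real.Gamma (((d:ℝ) + 1)/2) *
          (t ^ (1/β) * s) /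
            ((t ^ (1/β) * s) ^ 2 + dist x y ^ 2) ^ (((d:ℝ) + 1)/2) ∂μ) :
    ∀ ε : ℝ, 0 < ε → ∃ δ : ℝ, 0 < δ ∧ ∀ t : ℝ, 0 < t →
      ∀ x y : EuclideanSpace ℝ (Fin d),
      dist x y * t ^ (-(1/β)) ≤ δ →
      |pS t x y /
        (Real.Gamma (((d:ℝ) + 1)/2) * Real.Gamma ((d:ℝ)/β) /
            (β * Real.pi ^ (((d:ℝ) + 1)/2) * Real.Gamma (d:ℝ)) *
          t ^ (-((d:ℝ)/β))) - 1| ≤ ε := by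
  haveI := hprob
  intro ε hε
  have h0 : (0:ℝ) < (d:ℝ) := by exact_mod_cast Nat.lt_of_lt_of_le Nat.zero_lt_one hd
  have hΓd : 0 < Real.Gamma (d:ℝ) := Real.Gamma_pos_of_pos h0
  have hΓdβ : 0 < Real.Gamma ((d:ℝ)/β) := Real.Gamma_pos_of_pos (by positivity)
  have hΓp : 0 < Real.Gamma (((d:ℝ)+1)/2) := Real.Gamma_pos_of_pos (by positivity)
  obtain ⟨hint, hval⟩ := aux_moment hβ0 μ hlap d hd
  set M : ℝ := Real.Gamma ((d:ℝ)/β) / (β * Real.Gamma (d:ℝ)) with hM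
  have hMpos : 0 < M := by positivity
  set c : ℝ := Real.pi ^ (-(((d:ℝ) + 1)/2)) * Real.Gamma (((d:ℝ)+1)/2) with hc
  have hcpos : 0 < c := by
    have := Real.rpow_pos_of_pos Real.pi_pos (-(((d:ℝ) + 1)/2))
    positivity
  set F : ℝ → ℝ := fun a => ∫ s in Ioi (0:ℝ), s / (s^2 + a^2) ^ (((d:ℝ)+1)/2) ∂μ with hF
  have htf : Tendsto F (𝓝 0) (𝓝 M) := by
    rw [← hval]
    exact aux_tendsto μ d hd hint
  rw [Metric.tendsto_nhds_nhds] at htf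
  obtain ⟨δ', hδ'pos, hδ'⟩ := htf (ε * M) (by positivity)
  refine ⟨δ'/2, by positivity, ?_⟩
  intro t ht x y hxy
  set a : ℝ := dist x y * t ^ (-(1/β)) with ha
  have ha0 : 0 ≤ a := mul_nonneg dist_nonneg (Real.rpow_nonneg ht.le _)
  have hda : dist a (0:ℝ) < δ' := by
    rw [Real.dist_eq, sub_zero, abs_of_nonneg ha0]
    linarith
  have hFa : |F a - M| < ε * M := by
    have := hδ' hda
    rwa [Real.dist_eq] at this
  have hτ : 0 < t ^ (1/β) := Real.rpow_pos_of_pos ht _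
  have hdist_eq : dist x y = a * t ^ (1/β) := by
    rw [ha, mul_assoc, ← Real.rpow_add ht, neg_add_cancel, Real.rpow_zero, mul_one]
  have hT : t ^ (-((d:ℝ)/β)) = (t ^ (1/β)) ^ (-(d:ℝ)) := by
    rw [← Real.rpow_mul ht.le]
    congr 1
    ring
  have hTpos : 0 < t ^ (-((d:ℝ)/β)) := Real.rpow_pos_of_pos ht _
  -- rewrite pS
  have hps : pS t x y = c * t ^ (-((d:ℝ)/β)) * F a := by
    rw [hpS t ht x y, hF]
    rw [← MeasureTheory.integral_const_mul]
    refine setIntegral_congr_fun measurableSet_Ioi fun s hs => ?_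
    have hs' : (0:ℝ) < s := hs
    have hX : (0:ℝ) < s^2 + a^2 := by positivity
    have hXp : 0 < (s^2 + a^2) ^ (((d:ℝ)+1)/2) := Real.rpow_pos_of_pos hX _
    rw [hdist_eq, hT]
    have hden : ((t ^ (1/β) * s) ^ 2 + (a * t ^ (1/β)) ^ 2) ^ (((d:ℝ)+1)/2)
        = (t ^ (1/β)) ^ ((d:ℝ)+1) * (s^2 + a^2) ^ (((d:ℝ)+1)/2) := by
      rw [show (t ^ (1/β) * s) ^ 2 + (a * t ^ (1/β)) ^ 2
          = (t ^ (1/β))^2 * (s^2 + a^2) by ring,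
        Real.mul_rpow (by positivity) hX.le,
        ← Real.rpow_natCast (t ^ (1/β)) 2, ← Real.rpow_mul hτ.le,
        show (2:ℕ) * (((d:ℝ)+1)/2) = (d:ℝ)+1 by push_cast; ring]
    rw [hden]
    have h1 : (t ^ (1/β)) ^ ((d:ℝ)+1) = (t ^ (1/β)) ^ (d:ℝ) * t ^ (1/β) := by
      rw [Real.rpow_add hτ, Real.rpow_one]
    have h2 : (t ^ (1/β)) ^ (-(d:ℝ)) = ((t ^ (1/β)) ^ (d:ℝ))⁻¹ := by
      rw [Real.rpow_neg hτ.le]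
    have h3 : (0:ℝ) < (t ^ (1/β)) ^ (d:ℝ) := Real.rpow_pos_of_pos hτ _
    rw [h1, h2]
    field_simp
  -- rewrite the constant
  have hK : Real.Gamma (((d:ℝ) + 1)/2) * Real.Gamma ((d:ℝ)/β) /
      (β * Real.pi ^ (((d:ℝ) + 1)/2) * Real.Gamma (d:ℝ)) = c * M := by
    rw [hc, hM, Real.rpow_neg Real.pi_pos.le]
    have hπ : 0 < Real.pi ^ (((d:ℝ)+1)/2) := Real.rpow_pos_of_pos Real.pi_pos _
    field_simp
  rw [hps, hK]
  have hratio : c * t ^ (-((d:ℝ)/β)) * F a / (c * M * t ^ (-((d:ℝ)/β))) = F a / M := by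
    field_simp
  rw [hratio]
  have : F a / M - 1 = (F a - M) / M := by field_simp
  rw [this, abs_div, abs_of_pos hMpos, div_le_iff₀ hMpos]
  nlinarith [abs_nonneg (F a - M)]
end

section
/- Let p^{S^{-1}}(t,x,y) = ∫_{(0,∞)} c(d) t^β s^{-β} / ((t^β s^{-β})² + |x-y|²)^{(d+1)/2} μ_β(ds) be the Cauchy kernel on ℝ^d time-changed by an inverse β-stable subordinator, where c(d) = π^{-(d+1)/2} Γ((d+1)/2). Then, as |x-y|^{-1/β} t → 0, p^{S^{-1}}(t,x,y) ∼ (Γ((d+1)/2) / (π^{(d+1)/2} β Γ(β))) |x-y|^{-d-1} t^β; that is, for every ε > 0 there exists δ > 0 such that whenever t > 0, x ≠ y ∈ ℝ^d and |x-y|^{-1/β} t ≤ δ, the ratio of the two sides lies within ε of 1. -/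
open MeasureTheory Set Real Filter Topology

/-!
Write `R = |x - y|` and `λ = t ^ β / R = (R ^ (-1/β) * t) ^ β`. Pulling `R ^ 2` out of the
denominator gives
`p^{S⁻¹}(t,x,y) = c(d) t ^ β R ^ (-(d+1)) E[S ^ (-β) / ((λ S ^ (-β)) ^ 2 + 1) ^ ((d+1)/2)]`,
and by dominated convergence (with dominating function `S ^ (-β)`) the expectation tends to
`E[S ^ (-β)]` as `λ → 0`. This negative moment is `1 / (β Γ(β))`: writing
`Γ(β) s ^ (-β) = ∫₀^∞ r ^ (β-1) e ^ (-r s) dr`, Tonelli and the Laplace transform give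
`Γ(β) E[S ^ (-β)] = ∫₀^∞ r ^ (β-1) e ^ (-r ^ β) dr = 1 / β`.
-/

lemma lintegral_ofReal_eq_ofReal_integral_of_ne_zero {α : Type*} [MeasurableSpace α]
    {μ : Measure α} {f : α → ℝ} (hf : 0 ≤ᵐ[μ] f) (hne : ∫ s, f s ∂μ ≠ 0) :
    ∫⁻ s, ENNReal.ofReal (f s) ∂μ = ENNReal.ofReal (∫ s, f s ∂μ) :=
  (ofReal_integral_eq_lintegral_ofReal (Integrable.of_integral_ne_zero hne) hf).symm

section NegativeMoment

variable {β : ℝ}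

lemma ofReal_Gamma_mul_rpow_neg_eq_lintegral (hβ : 0 < β) {s : ℝ} (hs : 0 < s) :
    ENNReal.ofReal (Gamma β * s ^ (-β)) =
      ∫⁻ r in Ioi 0, ENNReal.ofReal (r ^ (β - 1) * exp (-(r * s))) := by
  have hint : IntegrableOn (fun r : ℝ => r ^ (β - 1) * exp (-(r * s))) (Ioi 0) := by
    simpa only [rpow_one, neg_mul, mul_comm s] using
      integrableOn_rpow_mul_exp_neg_mul_rpow (by linarith : -1 < β - 1) one_pos hs
  have hval : ∫ r in Ioi 0, r ^ (β - 1) * exp (-(r * s)) = Gamma β * s ^ (-β) := by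
    simp_rw [mul_comm _ s]
    rw [Real.integral_rpow_mul_exp_neg_mul_Ioi hβ hs, one_div, inv_rpow hs.le, ← rpow_neg hs.le,
      mul_comm]
  rw [← hval]
  refine ofReal_integral_eq_lintegral_ofReal hint ?_
  filter_upwards [ae_restrict_mem measurableSet_Ioi] with r hr
  exact mul_nonneg (rpow_nonneg (le_of_lt hr) _) (exp_nonneg _)

lemma integral_rpow_sub_one_mul_exp_neg_rpow (hβ : 0 < β) :
    ∫ r in Ioi 0, r ^ (β - 1) * exp (-(r ^ β)) = β⁻¹ := by
  simpa [div_self hβ.ne'] using integral_rpow_mul_exp_neg_rpow hβ (by linarith : -1 < β - 1)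

lemma integrableOn_rpow_sub_one_mul_exp_neg_rpow (hβ : 0 < β) :
    IntegrableOn (fun r : ℝ => r ^ (β - 1) * exp (-(r ^ β))) (Ioi 0) := by
  have := (integrableOn_Ioi_comp_rpow_iff' (fun u : ℝ => exp (-u)) hβ.ne').2
    (by simpa using exp_neg_integrableOn_Ioi 0 one_pos)
  simpa only [smul_eq_mul] using this

variable {μ : Measure ℝ} [SFinite μ]

lemma lintegral_rpow_neg_of_laplace (hβ : 0 < β)
    (hlap : ∀ r : ℝ, 0 < r → ∫ s in Ioi 0, exp (-(r * s)) ∂μ = exp (-(r ^ β))) :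
    ∫⁻ s in Ioi 0, ENNReal.ofReal (s ^ (-β)) ∂μ = ENNReal.ofReal (β * Gamma β)⁻¹ := by
  have hΓ : 0 < Gamma β := Gamma_pos_of_pos hβ
  have hlap_lintegral : ∀ r ∈ Ioi (0 : ℝ),
      ∫⁻ s in Ioi 0, ENNReal.ofReal (r ^ (β - 1) * exp (-(r * s))) ∂μ =
        ENNReal.ofReal (r ^ (β - 1) * exp (-(r ^ β))) := fun r hr => by
    simp_rw [ENNReal.ofReal_mul (rpow_nonneg (le_of_lt hr) _)]
    rw [lintegral_const_mul' _ _ ENNReal.ofReal_ne_top, ← hlap r hr,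
      lintegral_ofReal_eq_ofReal_integral_of_ne_zero (ae_of_all _ fun _ => (exp_pos _).le)
        (by rw [hlap r hr]; exact (exp_pos _).ne')]
  have hGamma_mul :
      ENNReal.ofReal (Gamma β) * ∫⁻ s in Ioi 0, ENNReal.ofReal (s ^ (-β)) ∂μ = ENNReal.ofReal β⁻¹ :=
    calc ENNReal.ofReal (Gamma β) * ∫⁻ s in Ioi 0, ENNReal.ofReal (s ^ (-β)) ∂μ
        = ∫⁻ s in Ioi (0 : ℝ), ∫⁻ r in Ioi (0 : ℝ),
            ENNReal.ofReal (r ^ (β - 1) * exp (-(r * s))) ∂volume ∂μ := by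
          rw [← lintegral_const_mul' _ _ ENNReal.ofReal_ne_top]
          refine setLIntegral_congr_fun measurableSet_Ioi fun s hs => ?_
          rw [← ENNReal.ofReal_mul hΓ.le, ofReal_Gamma_mul_rpow_neg_eq_lintegral hβ hs]
      _ = ∫⁻ r in Ioi (0 : ℝ), ∫⁻ s in Ioi (0 : ℝ),
            ENNReal.ofReal (r ^ (β - 1) * exp (-(r * s))) ∂μ ∂volume :=
          lintegral_lintegral_swap (by fun_prop)
      _ = ∫⁻ r in Ioi (0 : ℝ), ENNReal.ofReal (r ^ (β - 1) * exp (-(r ^ β))) :=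
          setLIntegral_congr_fun measurableSet_Ioi hlap_lintegral
      _ = ENNReal.ofReal β⁻¹ := by
          rw [← integral_rpow_sub_one_mul_exp_neg_rpow hβ]
          refine (ofReal_integral_eq_lintegral_ofReal
            (integrableOn_rpow_sub_one_mul_exp_neg_rpow hβ) ?_).symm
          filter_upwards [ae_restrict_mem measurableSet_Ioi] with r hr
          exact mul_nonneg (rpow_nonneg (le_of_lt hr) _) (exp_nonneg _)
  rw [← ENNReal.eq_div_iff (by simpa using hΓ) ENNReal.ofReal_ne_top] at hGamma_mul
  rw [hGamma_mul, ← ENNReal.ofReal_div_of_pos hΓ, mul_inv, div_eq_mul_inv]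

lemma integral_rpow_neg_of_laplace (hβ : 0 < β)
    (hlap : ∀ r : ℝ, 0 < r → ∫ s in Ioi 0, exp (-(r * s)) ∂μ = exp (-(r ^ β))) :
    IntegrableOn (fun s : ℝ => s ^ (-β)) (Ioi 0) μ ∧
      ∫ s in Ioi 0, s ^ (-β) ∂μ = (β * Gamma β)⁻¹ := by
  have hnonneg : 0 ≤ᵐ[μ.restrict (Ioi 0)] fun s : ℝ => s ^ (-β) := by
    filter_upwards [ae_restrict_mem measurableSet_Ioi] with s hs
    exact rpow_nonneg (le_of_lt hs) _
  have hmeas : AEStronglyMeasurable (fun s : ℝ => s ^ (-β)) (μ.restrict (Ioi 0)) := by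
    fun_prop
  refine ⟨⟨hmeas, ?_⟩, ?_⟩
  · rw [hasFiniteIntegral_iff_ofReal hnonneg, lintegral_rpow_neg_of_laplace hβ hlap]
    exact ENNReal.ofReal_lt_top
  · rw [integral_eq_lintegral_of_nonneg_ae hnonneg hmeas, lintegral_rpow_neg_of_laplace hβ hlap,
      ENNReal.toReal_ofReal (by positivity [Gamma_pos_of_pos hβ])]

end NegativeMoment

lemma tendsto_integral_div_sq_add_one_rpow {α : Type*} [MeasurableSpace α] {μ : Measure α}
    {f : α → ℝ} (hf : Integrable f μ) {c : ℝ} (hc : 0 ≤ c) :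
    Tendsto (fun l : ℝ => ∫ s, f s / ((l * f s) ^ 2 + 1) ^ c ∂μ) (𝓝 0)
      (𝓝 (∫ s, f s ∂μ)) := by
  have hbase : Continuous fun p : ℝ × ℝ => (p.1 * p.2) ^ 2 + 1 := by fun_prop
  have hcont : Continuous fun p : ℝ × ℝ => p.2 / ((p.1 * p.2) ^ 2 + 1) ^ c :=
    continuous_snd.div (hbase.rpow_const fun _ => Or.inr hc)
      fun _ => (rpow_pos_of_pos (by positivity) _).ne'
  refine tendsto_integral_filter_of_dominated_convergence (fun s => ‖f s‖)
    (Eventually.of_forall fun l => ?_) (Eventually.of_forall fun l => ae_of_all _ fun s => ?_)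
    hf.norm (ae_of_all _ fun s => ?_)
  · exact (hcont.comp (Continuous.prodMk_right l)).comp_aestronglyMeasurable
      hf.aestronglyMeasurable
  · rw [norm_div, norm_of_nonneg (rpow_nonneg (by positivity) _)]
    exact div_le_self (norm_nonneg _) (one_le_rpow (by nlinarith [sq_nonneg (l * f s)]) hc)
  · simpa [Function.comp_def] using (hcont.comp (Continuous.prodMk_left (f s))).tendsto 0

lemma mul_div_sq_add_sq_rpow_eq {K τ v R c : ℝ} (hR : 0 < R) :
    K * (τ * v) / ((τ * v) ^ 2 + R ^ 2) ^ c =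
      K * τ * R ^ (-(2 * c)) * (v / ((τ / R * v) ^ 2 + 1) ^ c) := by
  have hsum : (τ * v) ^ 2 + R ^ 2 = R ^ (2 : ℝ) * ((τ / R * v) ^ 2 + 1) := by
    rw [rpow_two]; field_simp
  rw [hsum, mul_rpow (by positivity) (by positivity), ← rpow_mul hR.le, rpow_neg hR.le]
  field_simp

lemma rpow_neg_inv_mul_rpow {β R t : ℝ} (hβ : β ≠ 0) (hR : 0 < R) (ht : 0 ≤ t) :
    (R ^ (-(1 / β)) * t) ^ β = t ^ β / R := by
  rw [mul_rpow (by positivity) ht, ← rpow_mul hR.le, neg_mul, one_div_mul_cancel hβ,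
    rpow_neg_one, inv_mul_eq_div]

theorem stmt_12_general
    (β : ℝ) (hβ0 : 0 < β)
    (μ : Measure ℝ) (hprob : IsProbabilityMeasure μ)
    (hlap : ∀ r : ℝ, 0 < r →
      ∫ s in Set.Ioi (0:ℝ), Real.exp (-(r * s)) ∂μ = Real.exp (-(r ^ β)))
    (d : ℕ)
    (pSinv : ℝ → EuclideanSpace ℝ (Fin d) → EuclideanSpace ℝ (Fin d) → ℝ)
    (hpSinv : ∀ t : ℝ, 0 < t → ∀ x y : EuclideanSpace ℝ (Fin d),
      pSinv t x y = ∫ s in Set.Ioi (0:ℝ),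
        Real.pi ^ (-(((d:ℝ) + 1)/2)) * Real.Gamma (((d:ℝ) + 1)/2) *
          (t ^ β * s ^ (-β)) /
            ((t ^ β * s ^ (-β)) ^ 2 + dist x y ^ 2) ^ (((d:ℝ) + 1)/2) ∂μ) :
    ∀ ε : ℝ, 0 < ε → ∃ δ : ℝ, 0 < δ ∧ ∀ t : ℝ, 0 < t →
      ∀ x y : EuclideanSpace ℝ (Fin d), x ≠ y →
      dist x y ^ (-(1/β)) * t ≤ δ →
      |pSinv t x y /
        (Real.Gamma (((d:ℝ) + 1)/2) /
            (Real.pi ^ (((d:ℝ) + 1)/2) * β * Real.Gamma β) *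
          (dist x y ^ (-((d:ℝ) + 1)) * t ^ β)) - 1| ≤ ε := by
  intro ε hε
  set c : ℝ := ((d:ℝ) + 1) / 2
  have hM : 0 < (β * Gamma β)⁻¹ := by positivity [Gamma_pos_of_pos hβ0]
  obtain ⟨hmom, hmomval⟩ := integral_rpow_neg_of_laplace hβ0 hlap
  set G : ℝ → ℝ := fun l => ∫ s in Ioi 0, s ^ (-β) / ((l * s ^ (-β)) ^ 2 + 1) ^ c ∂μ
  have hG : Tendsto (fun a : ℝ => G (a ^ β) / (β * Gamma β)⁻¹) (𝓝[>] 0) (𝓝 1) := by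
    have hpow : Tendsto (fun a : ℝ => a ^ β) (𝓝[>] 0) (𝓝 0) := by
      simpa [zero_rpow hβ0.ne'] using
        ((continuous_rpow_const hβ0.le).tendsto 0).mono_left nhdsWithin_le_nhds
    have h := ((tendsto_integral_div_sq_add_one_rpow hmom (c := c) (by positivity)).comp
      hpow).div_const (β * Gamma β)⁻¹
    rwa [hmomval, div_self hM.ne'] at h
  obtain ⟨δ, hδ, hclose⟩ := Metric.tendsto_nhdsWithin_nhds.1 hG ε hε
  refine ⟨δ / 2, by positivity, fun t ht x y hxy hle => ?_⟩
  have hR : 0 < dist x y := dist_pos.2 hxy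
  set a := dist x y ^ (-(1 / β)) * t
  have ha : 0 < a := by positivity
  have haβ : a ^ β = t ^ β / dist x y := rpow_neg_inv_mul_rpow hβ0.ne' hR ht.le
  have hscale :
      pSinv t x y = π ^ (-c) * Gamma c * t ^ β * dist x y ^ (-((d:ℝ) + 1)) * G (a ^ β) := by
    rw [hpSinv t ht, haβ, show -((d:ℝ) + 1) = -(2 * c) by ring, ← integral_const_mul]
    simp_rw [mul_div_sq_add_sq_rpow_eq hR]
  have hratio : pSinv t x y / (Gamma c / (π ^ c * β * Gamma β) *
      (dist x y ^ (-((d:ℝ) + 1)) * t ^ β)) = G (a ^ β) / (β * Gamma β)⁻¹ := by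
    have hΓc : 0 < Gamma c := Gamma_pos_of_pos (by positivity)
    rw [hscale, rpow_neg pi_pos.le]
    field_simp
  rw [hratio, ← Real.dist_eq]
  exact (hclose ha (by rw [dist_zero_right, norm_of_nonneg ha.le]; linarith)).le

theorem stmt_12
    (β : ℝ) (hβ0 : 0 < β) (hβ1 : β < 1)
    (μ : Measure ℝ) (hprob : IsProbabilityMeasure μ)
    (hsupp : μ (Set.Iic 0) = 0)
    (hlap : ∀ r : ℝ, 0 < r →
      ∫ s in Set.Ioi (0:ℝ), Real.exp (-(r * s)) ∂μ = Real.exp (-(r ^ β)))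
    (d : ℕ) (hd : 1 ≤ d)
    (pSinv : ℝ → EuclideanSpace ℝ (Fin d) → EuclideanSpace ℝ (Fin d) → ℝ)
    (hpSinv : ∀ t : ℝ, 0 < t → ∀ x y : EuclideanSpace ℝ (Fin d),
      pSinv t x y = ∫ s in Set.Ioi (0:ℝ),
        Real.pi ^ (-(((d:ℝ) + 1)/2)) * Real.Gamma (((d:ℝ) + 1)/2) *
          (t ^ β * s ^ (-β)) /
            ((t ^ β * s ^ (-β)) ^ 2 + dist x y ^ 2) ^ (((d:ℝ) + 1)/2) ∂μ) :
    ∀ ε : ℝ, 0 < ε → ∃ δ : ℝ, 0 < δ ∧ ∀ t : ℝ, 0 < t →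
      ∀ x y : EuclideanSpace ℝ (Fin d), x ≠ y →
      dist x y ^ (-(1/β)) * t ≤ δ →
      |pSinv t x y /
        (Real.Gamma (((d:ℝ) + 1)/2) /
            (Real.pi ^ (((d:ℝ) + 1)/2) * β * Real.Gamma β) *
          (dist x y ^ (-((d:ℝ) + 1)) * t ^ β)) - 1| ≤ ε :=
  stmt_12_general β hβ0 μ hprob hlap d pSinv hpSinv
end

section
/- Let ψ : [1,∞) → ℝ be a bounded function with lim_{s→∞} ψ(s) = 0, and let ω : [0,∞) → (0,∞) be non-increasing with ∫₁^∞ s^{-1} ω(s) ds < ∞. Then for any constants c > 0 and δ > 0: (i) lim_{A→∞} (1/log A) ∫_{cA^{-δ}}^∞ s^{-1} ω(s) ds = δ ω(0+), where ω(0+) = lim_{s↓0} ω(s); and (ii) lim_{A→∞} (1/log A) ∫_{cA^{-δ}}^∞ s^{-1} ω(s) ψ(c^{-1/δ} A s^{1/δ}) ds = 0. -/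
open MeasureTheory

set_option maxHeartbeats 1000000 in
theorem stmt_17
    (ψ : ℝ → ℝ) (hψbdd : ∃ C : ℝ, ∀ s : ℝ, 1 ≤ s → |ψ s| ≤ C)
    (hψlim : Filter.Tendsto ψ Filter.atTop (nhds 0))
    (ω : ℝ → ℝ) (hωpos : ∀ s : ℝ, 0 ≤ s → 0 < ω s)
    (hωanti : ∀ r s : ℝ, 0 ≤ r → r ≤ s → ω s ≤ ω r)
    (hωint : IntegrableOn (fun s => s⁻¹ * ω s) (Set.Ioi (1:ℝ)))
    (ω0 : ℝ) (hω0 : Filter.Tendsto ω (nhdsWithin 0 (Set.Ioi 0)) (nhds ω0))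
    (c δ : ℝ) (hc : 0 < c) (hδ : 0 < δ) :
    Filter.Tendsto (fun A : ℝ => (Real.log A)⁻¹ *
        ∫ s in Set.Ioi (c * A ^ (-δ)), s⁻¹ * ω s)
      Filter.atTop (nhds (δ * ω0)) ∧
    Filter.Tendsto (fun A : ℝ => (Real.log A)⁻¹ *
        ∫ s in Set.Ioi (c * A ^ (-δ)),
          s⁻¹ * ω s * ψ (c ^ (-(1/δ)) * A * s ^ (1/δ)))
      Filter.atTop (nhds 0) := by
  obtain ⟨C, hC⟩ := hψbdd
  have hC0 : 0 ≤ C := le_trans (abs_nonneg _) (hC 1 le_rfl)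
  -- ω is bounded above by ω0 on (0, ∞)
  have hωle : ∀ s : ℝ, 0 < s → ω s ≤ ω0 := by
    intro s hs
    refine ge_of_tendsto hω0 ?_
    filter_upwards [Ioo_mem_nhdsGT_of_mem (Set.mem_Ico.2 ⟨le_refl 0, hs⟩)] with r hr
    exact hωanti r s hr.1.le hr.2.le
  have hω0pos : 0 < ω0 := lt_of_lt_of_le (hωpos 1 zero_le_one) (hωle 1 one_pos)
  -- measurable global version of ω
  have hmeas : Measurable (fun s : ℝ => ω (max s 0)) := by
    have : Antitone (fun s : ℝ => ω (max s 0)) := by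
      intro r s hrs
      exact hωanti (max r 0) (max s 0) (le_max_right _ _) (max_le_max hrs le_rfl)
    exact this.measurable
  -- integrability of s⁻¹ * ω s on (a, ∞) for a > 0
  have key_int : ∀ a : ℝ, 0 < a → IntegrableOn (fun s => s⁻¹ * ω s) (Set.Ioi a) := by
    intro a ha
    rcases le_or_gt a 1 with h1 | h1
    · rw [← Set.Ioc_union_Ioi_eq_Ioi h1]
      refine IntegrableOn.union ?_ hωint
      refine Integrable.mono' (g := fun _ => a⁻¹ * ω0)
        (integrableOn_const measure_Ioc_lt_top.ne) ?_ ?_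
      · refine ((measurable_inv.mul hmeas).aestronglyMeasurable).congr ?_
        filter_upwards [ae_restrict_mem measurableSet_Ioc] with s hs
        have hs0 : 0 < s := lt_trans ha hs.1
        simp [max_eq_left hs0.le]
      · filter_upwards [ae_restrict_mem measurableSet_Ioc] with s hs
        have hs0 : 0 < s := lt_trans ha hs.1
        have h2 : s⁻¹ ≤ a⁻¹ := by
          apply inv_anti₀ ha hs.1.le
        have h3 : ω s ≤ ω0 := hωle s hs0
        have : ‖s⁻¹ * ω s‖ = s⁻¹ * ω s := by
          rw [Real.norm_eq_abs, abs_of_nonneg]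
          exact mul_nonneg (inv_nonneg.2 hs0.le) (hωpos s hs0.le).le
        rw [this]
        exact mul_le_mul h2 h3 (hωpos s hs0.le).le (inv_nonneg.2 ha.le)
    · exact hωint.mono_set (Set.Ioi_subset_Ioi h1.le)
  have key_intIoc : ∀ a b : ℝ, 0 < a → IntegrableOn (fun s => s⁻¹ * ω s) (Set.Ioc a b) :=
    fun a b ha => (key_int a ha).mono_set Set.Ioc_subset_Ioi_self
  -- integral of s⁻¹ over Ioc a b
  have inv_int : ∀ a b : ℝ, 0 < a → IntegrableOn (fun s : ℝ => s⁻¹) (Set.Ioc a b) := by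
    intro a b ha
    refine Integrable.mono' (g := fun _ => a⁻¹)
      (integrableOn_const measure_Ioc_lt_top.ne)
      measurable_inv.aestronglyMeasurable ?_
    filter_upwards [ae_restrict_mem measurableSet_Ioc] with s hs
    have hs0 : 0 < s := lt_trans ha hs.1
    rw [Real.norm_eq_abs, abs_of_nonneg (inv_nonneg.2 hs0.le)]
    exact inv_anti₀ ha hs.1.le
  have inv_val : ∀ a b : ℝ, 0 < a → a ≤ b →
      (∫ s in Set.Ioc a b, s⁻¹) = Real.log b - Real.log a := by
    intro a b ha hab
    have hb : 0 < b := lt_of_lt_of_le ha hab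
    rw [← intervalIntegral.integral_of_le hab,
      integral_inv (Set.notMem_uIcc_of_lt ha hb),
      Real.log_div hb.ne' ha.ne']
  -- upper and lower bounds for weighted integrals over Ioc
  have key_ub : ∀ a b M : ℝ, 0 < a → a ≤ b → (∀ s, a < s → s ≤ b → ω s ≤ M) →
      (∫ s in Set.Ioc a b, s⁻¹ * ω s) ≤ M * (Real.log b - Real.log a) := by
    intro a b M ha hab hM
    calc (∫ s in Set.Ioc a b, s⁻¹ * ω s) ≤ ∫ s in Set.Ioc a b, M * s⁻¹ := by
          refine setIntegral_mono_on (key_intIoc a b ha) ((inv_int a b ha).const_mul M)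
            measurableSet_Ioc ?_
          intro s hs
          have hs0 : 0 < s := lt_trans ha hs.1
          rw [mul_comm M s⁻¹]
          exact mul_le_mul_of_nonneg_left (hM s hs.1 hs.2) (inv_nonneg.2 hs0.le)
      _ = M * (Real.log b - Real.log a) := by
          rw [integral_const_mul, inv_val a b ha hab]
  have key_lb : ∀ a b m : ℝ, 0 < a → a ≤ b → (∀ s, a < s → s ≤ b → m ≤ ω s) →
      m * (Real.log b - Real.log a) ≤ ∫ s in Set.Ioc a b, s⁻¹ * ω s := by
    intro a b m ha hab hm
    calc m * (Real.log b - Real.log a) = ∫ s in Set.Ioc a b, m * s⁻¹ := by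
          rw [integral_const_mul, inv_val a b ha hab]
      _ ≤ ∫ s in Set.Ioc a b, s⁻¹ * ω s := by
          refine setIntegral_mono_on ((inv_int a b ha).const_mul m) (key_intIoc a b ha)
            measurableSet_Ioc ?_
          intro s hs
          have hs0 : 0 < s := lt_trans ha hs.1
          rw [mul_comm m s⁻¹]
          exact mul_le_mul_of_nonneg_left (hm s hs.1 hs.2) (inv_nonneg.2 hs0.le)
  -- splitting the integral
  have split : ∀ a b : ℝ, 0 < a → a ≤ b →
      (∫ s in Set.Ioi a, s⁻¹ * ω s) =
        (∫ s in Set.Ioc a b, s⁻¹ * ω s) + ∫ s in Set.Ioi b, s⁻¹ * ω s := by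
    intro a b ha hab
    rw [← Set.Ioc_union_Ioi_eq_Ioi hab,
      setIntegral_union (Set.Ioc_disjoint_Ioi le_rfl) measurableSet_Ioi
        (key_intIoc a b ha) (key_int b (lt_of_lt_of_le ha hab))]
  -- limits
  have hLinv : Filter.Tendsto (fun A : ℝ => (Real.log A)⁻¹) Filter.atTop (nhds 0) :=
    Real.tendsto_log_atTop.inv_tendsto_atTop
  have heps : ∀ d : ℝ, Filter.Tendsto (fun A : ℝ => d * A ^ (-δ)) Filter.atTop (nhds 0) := by
    intro d
    have := (tendsto_rpow_neg_atTop hδ).const_mul d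
    simpa using this
  constructor
  · -- part (i)
    rw [Metric.tendsto_nhds]
    intro η hη
    set η₁ := η / (2 * δ) with hη₁def
    have hη₁ : 0 < η₁ := div_pos hη (by linarith)
    have hη₁δ : η₁ * δ = η / 2 := by
      rw [hη₁def]; field_simp
    obtain ⟨t₀, ht₀ω, ht₀mem⟩ :=
      ((hω0.eventually_const_lt (show ω0 - η₁ < ω0 by linarith)).and
        (Ioo_mem_nhdsGT_of_mem (Set.mem_Ico.2 ⟨le_refl 0, one_pos⟩) :
          Set.Ioo (0:ℝ) 1 ∈ nhdsWithin 0 (Set.Ioi 0))).exists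
    have ht₀pos : 0 < t₀ := ht₀mem.1
    have hlow : ∀ s, 0 < s → s ≤ t₀ → ω0 - η₁ ≤ ω s :=
      fun s h1 h2 => le_trans ht₀ω.le (hωanti s t₀ h1.le h2)
    set T := ∫ s in Set.Ioi t₀, s⁻¹ * ω s with hT
    set K1 := ω0 * (Real.log t₀ - Real.log c) + T with hK1
    set K2 := (ω0 - η₁) * (Real.log t₀ - Real.log c) + T with hK2
    have Ec : ∀ᶠ A : ℝ in Filter.atTop, (Real.log A)⁻¹ * K1 < η := by
      have := hLinv.mul_const K1
      rw [zero_mul] at this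
      exact this.eventually_lt_const hη
    have Ed : ∀ᶠ A : ℝ in Filter.atTop, -(η/2) < (Real.log A)⁻¹ * K2 := by
      have := hLinv.mul_const K2
      rw [zero_mul] at this
      exact this.eventually_const_lt (by linarith)
    filter_upwards [Filter.eventually_gt_atTop 1, (heps c).eventually_lt_const ht₀pos,
      Ec, Ed] with A hA1 hAε hAc hAd
    have hA0 : (0:ℝ) < A := lt_trans one_pos hA1
    set L := Real.log A with hLdef
    have hL0 : 0 < L := Real.log_pos hA1
    have hLinv0 : 0 < L⁻¹ := inv_pos.2 hL0
    set ε := c * A ^ (-δ) with hεdef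
    have hε0 : 0 < ε := mul_pos hc (Real.rpow_pos_of_pos hA0 _)
    have hεt : ε ≤ t₀ := hAε.le
    have hlogε : Real.log ε = Real.log c - δ * L := by
      rw [hεdef, Real.log_mul hc.ne' (Real.rpow_pos_of_pos hA0 _).ne',
        Real.log_rpow hA0]
      ring
    have hsplit := split ε t₀ hε0 hεt
    have hub := key_ub ε t₀ ω0 hε0 hεt (fun s hs1 _ => hωle s (lt_trans hε0 hs1))
    have hlb := key_lb ε t₀ (ω0 - η₁) hε0 hεt
      (fun s hs1 hs2 => hlow s (lt_trans hε0 hs1) hs2)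
    rw [hlogε] at hub hlb
    set I := ∫ s in Set.Ioc ε t₀, s⁻¹ * ω s with hI
    rw [Real.dist_eq, hsplit, abs_sub_lt_iff]
    have hprod1 : L⁻¹ * I ≤ L⁻¹ * (ω0 * (Real.log t₀ - (Real.log c - δ * L))) :=
      mul_le_mul_of_nonneg_left hub hLinv0.le
    have hprod2 : L⁻¹ * ((ω0 - η₁) * (Real.log t₀ - (Real.log c - δ * L))) ≤ L⁻¹ * I :=
      mul_le_mul_of_nonneg_left hlb hLinv0.le
    have hX1 : L⁻¹ * (ω0 * δ * L) = ω0 * δ := by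
      field_simp
    have hX2 : L⁻¹ * ((ω0 - η₁) * δ * L) = (ω0 - η₁) * δ := by
      field_simp
    have hexp1 : L⁻¹ * (ω0 * (Real.log t₀ - (Real.log c - δ * L)))
        = L⁻¹ * (ω0 * (Real.log t₀ - Real.log c)) + L⁻¹ * (ω0 * δ * L) := by ring
    have hexp2 : L⁻¹ * ((ω0 - η₁) * (Real.log t₀ - (Real.log c - δ * L)))
        = L⁻¹ * ((ω0 - η₁) * (Real.log t₀ - Real.log c)) + L⁻¹ * ((ω0 - η₁) * δ * L) := by
      ring
    have hAc' : L⁻¹ * (ω0 * (Real.log t₀ - Real.log c)) + L⁻¹ * T < η := by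
      have : L⁻¹ * K1 = L⁻¹ * (ω0 * (Real.log t₀ - Real.log c)) + L⁻¹ * T := by
        rw [hK1]; ring
      linarith [hAc, this.symm.le, this.le]
    have hAd' : -(η/2) < L⁻¹ * ((ω0 - η₁) * (Real.log t₀ - Real.log c)) + L⁻¹ * T := by
      have : L⁻¹ * K2 = L⁻¹ * ((ω0 - η₁) * (Real.log t₀ - Real.log c)) + L⁻¹ * T := by
        rw [hK2]; ring
      linarith [hAd, this.le, this.symm.le]
    constructor
    · have : L⁻¹ * (I + T) = L⁻¹ * I + L⁻¹ * T := by ring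
      rw [this]
      rw [hexp1, hX1] at hprod1
      linarith
    · have : L⁻¹ * (I + T) = L⁻¹ * I + L⁻¹ * T := by ring
      rw [this]
      rw [hexp2, hX2] at hprod2
      nlinarith [hprod2, hAd', hη₁δ]
  · -- part (ii)
    rw [Metric.tendsto_nhds]
    intro η hη
    have hdenom : 0 < 2 * (δ * ω0 + 1) := by nlinarith
    set η₁ := η / (2 * (δ * ω0 + 1)) with hη₁def
    have hη₁ : 0 < η₁ := div_pos hη hdenom
    have hη₁half : η₁ * (ω0 * δ) < η / 2 := by
      have heq : η₁ * (2 * (δ * ω0 + 1)) = η := by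
        rw [hη₁def]; exact div_mul_cancel₀ η hdenom.ne'
      nlinarith [heq, hη₁]
    -- choose S ≥ 1 beyond which |ψ| < η₁
    have habs : Filter.Tendsto (fun s => |ψ s|) Filter.atTop (nhds 0) := by
      have := hψlim.abs; simpa using this
    obtain ⟨S₀, hS₀⟩ := Filter.eventually_atTop.1 (habs.eventually_lt_const hη₁)
    set S := max S₀ 1 with hSdef
    have hS1 : (1:ℝ) ≤ S := le_max_right _ _
    have hSpos : (0:ℝ) < S := lt_of_lt_of_le one_pos hS1
    have hSψ : ∀ s, S ≤ s → |ψ s| < η₁ := fun s hs => hS₀ s (le_trans (le_max_left _ _) hs)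
    set logS := Real.log S with hlogSdef
    have hlogS0 : 0 ≤ logS := Real.log_nonneg hS1
    -- key claim about the argument of ψ
    have claim : ∀ B : ℝ, 0 < B → ∀ A : ℝ, 0 < A → ∀ s : ℝ,
        c * B ^ δ * A ^ (-δ) < s → B ≤ c ^ (-(1/δ)) * A * s ^ (1/δ) := by
      intro B hB A hA s hlt
      have hbase : (0:ℝ) < c * B ^ δ * A ^ (-δ) :=
        mul_pos (mul_pos hc (Real.rpow_pos_of_pos hB _)) (Real.rpow_pos_of_pos hA _)
      have hδδ : δ * (1/δ) = 1 := by field_simp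
      have hδδ' : -δ * (1/δ) = -1 := by field_simp
      have h1 : (c * B ^ δ * A ^ (-δ)) ^ (1/δ) = c ^ (1/δ) * B * A⁻¹ := by
        rw [Real.mul_rpow (mul_pos hc (Real.rpow_pos_of_pos hB _)).le
            (Real.rpow_pos_of_pos hA _).le,
          Real.mul_rpow hc.le (Real.rpow_pos_of_pos hB _).le,
          ← Real.rpow_mul hB.le, ← Real.rpow_mul hA.le, hδδ, hδδ',
          Real.rpow_one, Real.rpow_neg_one]
      have hmono : c ^ (1/δ) * B * A⁻¹ ≤ s ^ (1/δ) := by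
        rw [← h1]
        exact Real.rpow_le_rpow hbase.le hlt.le (by positivity)
      have hstep : c ^ (-(1/δ)) * A * (c ^ (1/δ) * B * A⁻¹) ≤
          c ^ (-(1/δ)) * A * s ^ (1/δ) :=
        mul_le_mul_of_nonneg_left hmono (by positivity)
      have heq : c ^ (-(1/δ)) * A * (c ^ (1/δ) * B * A⁻¹) = B := by
        have hcc : c ^ (-(1/δ)) * c ^ (1/δ) = 1 := by
          rw [← Real.rpow_add hc]; norm_num
        have hAA : A * A⁻¹ = 1 := mul_inv_cancel₀ hA.ne'
        calc c ^ (-(1/δ)) * A * (c ^ (1/δ) * B * A⁻¹)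
            = (c ^ (-(1/δ)) * c ^ (1/δ)) * (A * A⁻¹) * B := by ring
          _ = B := by rw [hcc, hAA]; ring
      linarith [hstep, heq.symm.le, heq.le]
    set T1 := ∫ s in Set.Ioi (1:ℝ), s⁻¹ * ω s with hT1
    set K4 := C * (ω0 * (δ * logS)) +
      η₁ * (ω0 * (-(Real.log c) - δ * logS) + T1) with hK4
    have Ec : ∀ᶠ A : ℝ in Filter.atTop, (Real.log A)⁻¹ * K4 < η / 2 := by
      have := hLinv.mul_const K4
      rw [zero_mul] at this
      exact this.eventually_lt_const (by linarith)
    filter_upwards [Filter.eventually_gt_atTop 1,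
      (heps (c * S ^ δ)).eventually_lt_const one_pos, Ec] with A hA1 hAε' hAc
    have hA0 : (0:ℝ) < A := lt_trans one_pos hA1
    set L := Real.log A with hLdef
    have hL0 : 0 < L := Real.log_pos hA1
    have hLinv0 : 0 < L⁻¹ := inv_pos.2 hL0
    set ε := c * A ^ (-δ) with hεdef
    set ε' := c * S ^ δ * A ^ (-δ) with hε'def
    have hε0 : 0 < ε := mul_pos hc (Real.rpow_pos_of_pos hA0 _)
    have hε'0 : 0 < ε' := mul_pos (mul_pos hc (Real.rpow_pos_of_pos hSpos _))
      (Real.rpow_pos_of_pos hA0 _)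
    have hε'1 : ε' ≤ 1 := hAε'.le
    have hεε' : ε ≤ ε' := by
      have h1 : (1:ℝ) ≤ S ^ δ := Real.one_le_rpow hS1 hδ.le
      have h2 : (0:ℝ) < A ^ (-δ) := Real.rpow_pos_of_pos hA0 _
      rw [hεdef, hε'def]
      nlinarith
    have hlogε : Real.log ε = Real.log c - δ * L := by
      rw [hεdef, Real.log_mul hc.ne' (Real.rpow_pos_of_pos hA0 _).ne',
        Real.log_rpow hA0]
      ring
    have hlogε' : Real.log ε' = Real.log c + δ * logS - δ * L := by
      rw [hε'def, Real.log_mul (mul_pos hc (Real.rpow_pos_of_pos hSpos _)).ne'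
          (Real.rpow_pos_of_pos hA0 _).ne',
        Real.log_mul hc.ne' (Real.rpow_pos_of_pos hSpos _).ne',
        Real.log_rpow hA0, Real.log_rpow hSpos]
      ring
    set g := fun s : ℝ => s⁻¹ * ω s * ψ (c ^ (-(1/δ)) * A * s ^ (1/δ)) with hg
    set h := fun s : ℝ => (if s ≤ ε' then C else η₁) * (s⁻¹ * ω s) with hh
    have hInt1 : IntegrableOn h (Set.Ioc ε ε') := by
      refine IntegrableOn.congr_fun ((key_intIoc ε ε' hε0).const_mul C) ?_ measurableSet_Ioc
      intro s hs
      simp [hh, hs.2]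
    have hInt2 : IntegrableOn h (Set.Ioi ε') := by
      refine IntegrableOn.congr_fun ((key_int ε' hε'0).const_mul η₁) ?_ measurableSet_Ioi
      intro s hs
      simp [hh, not_le.2 (Set.mem_Ioi.1 hs)]
    have hInth : IntegrableOn h (Set.Ioi ε) := by
      rw [← Set.Ioc_union_Ioi_eq_Ioi hεε']
      exact hInt1.union hInt2
    have hnorm : ∀ᵐ s ∂(volume.restrict (Set.Ioi ε)), ‖g s‖ ≤ h s := by
      filter_upwards [ae_restrict_mem measurableSet_Ioi] with s hs
      have hsε : ε < s := Set.mem_Ioi.1 hs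
      have hs0 : 0 < s := lt_trans hε0 hsε
      have hfpos : 0 ≤ s⁻¹ * ω s := mul_nonneg (inv_nonneg.2 hs0.le) (hωpos s hs0.le).le
      have hnormeq : ‖g s‖ = s⁻¹ * ω s * |ψ (c ^ (-(1/δ)) * A * s ^ (1/δ))| := by
        rw [hg, Real.norm_eq_abs, abs_mul, abs_of_nonneg hfpos]
      rw [hnormeq]; simp only [hh]
      by_cases hcase : s ≤ ε'
      · have harg : (1:ℝ) ≤ c ^ (-(1/δ)) * A * s ^ (1/δ) := by
          refine claim 1 one_pos A hA0 s ?_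
          rw [Real.one_rpow, mul_one]
          exact hsε
        have hψb : |ψ (c ^ (-(1/δ)) * A * s ^ (1/δ))| ≤ C := hC _ harg
        rw [if_pos hcase, mul_comm C]
        exact mul_le_mul_of_nonneg_left hψb hfpos
      · have harg : S ≤ c ^ (-(1/δ)) * A * s ^ (1/δ) :=
          claim S hSpos A hA0 s (not_le.1 hcase)
        have hψb : |ψ (c ^ (-(1/δ)) * A * s ^ (1/δ))| ≤ η₁ := (hSψ _ harg).le
        rw [if_neg hcase, mul_comm η₁]
        exact mul_le_mul_of_nonneg_left hψb hfpos
    have hb1 : ‖∫ s in Set.Ioi ε, g s‖ ≤ ∫ s in Set.Ioi ε, h s :=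
      norm_integral_le_of_norm_le hInth hnorm
    -- compute/bound the integral of h
    have hsplith : (∫ s in Set.Ioi ε, h s) =
        (∫ s in Set.Ioc ε ε', h s) + ∫ s in Set.Ioi ε', h s := by
      rw [← Set.Ioc_union_Ioi_eq_Ioi hεε',
        setIntegral_union (Set.Ioc_disjoint_Ioi le_rfl) measurableSet_Ioi hInt1 hInt2]
    have hval1 : (∫ s in Set.Ioc ε ε', h s) ≤ C * (ω0 * (δ * logS)) := by
      have e1 : (∫ s in Set.Ioc ε ε', h s) = C * ∫ s in Set.Ioc ε ε', s⁻¹ * ω s := by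
        rw [show (∫ s in Set.Ioc ε ε', h s) = ∫ s in Set.Ioc ε ε', C * (s⁻¹ * ω s) from
          setIntegral_congr_fun measurableSet_Ioc (fun s hs => by simp [hh, hs.2]),
          integral_const_mul]
      rw [e1]
      have hub := key_ub ε ε' ω0 hε0 hεε' (fun s hs1 _ => hωle s (lt_trans hε0 hs1))
      have : Real.log ε' - Real.log ε = δ * logS := by rw [hlogε, hlogε']; ring
      rw [this] at hub
      exact mul_le_mul_of_nonneg_left hub hC0
    have hval2 : (∫ s in Set.Ioi ε', h s) ≤
        η₁ * (ω0 * (δ * L - Real.log c - δ * logS) + T1) := by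
      have e1 : (∫ s in Set.Ioi ε', h s) = η₁ * ∫ s in Set.Ioi ε', s⁻¹ * ω s := by
        rw [show (∫ s in Set.Ioi ε', h s) = ∫ s in Set.Ioi ε', η₁ * (s⁻¹ * ω s) from
          setIntegral_congr_fun measurableSet_Ioi
            (fun s hs => by simp [hh, not_le.2 (Set.mem_Ioi.1 hs)]),
          integral_const_mul]
      rw [e1]
      have hsplit2 := split ε' 1 hε'0 hε'1
      have hub := key_ub ε' 1 ω0 hε'0 hε'1 (fun s hs1 _ => hωle s (lt_trans hε'0 hs1))
      rw [Real.log_one, hlogε'] at hub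
      have hF : (∫ s in Set.Ioi ε', s⁻¹ * ω s) ≤
          ω0 * (δ * L - Real.log c - δ * logS) + T1 := by
        rw [hsplit2, hT1]
        have : ω0 * (0 - (Real.log c + δ * logS - δ * L))
            = ω0 * (δ * L - Real.log c - δ * logS) := by ring
        linarith [hub, this.le, this.symm.le]
      exact mul_le_mul_of_nonneg_left hF hη₁.le
    have htotal : ‖∫ s in Set.Ioi ε, g s‖ ≤ K4 + η₁ * (ω0 * δ) * L := by
      have : C * (ω0 * (δ * logS)) + η₁ * (ω0 * (δ * L - Real.log c - δ * logS) + T1)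
          = K4 + η₁ * (ω0 * δ) * L := by rw [hK4]; ring
      linarith [hb1, hsplith.le, hsplith.symm.le, hval1, hval2, this.le, this.symm.le]
    rw [Real.dist_eq, sub_zero]
    have habs2 : |L⁻¹ * ∫ s in Set.Ioi ε, g s| = L⁻¹ * ‖∫ s in Set.Ioi ε, g s‖ := by
      rw [abs_mul, abs_of_pos hLinv0, Real.norm_eq_abs]
    show |L⁻¹ * ∫ s in Set.Ioi ε, g s| < η
    rw [habs2]
    have hm1 : L⁻¹ * ‖∫ s in Set.Ioi ε, g s‖ ≤ L⁻¹ * (K4 + η₁ * (ω0 * δ) * L) :=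
      mul_le_mul_of_nonneg_left htotal hLinv0.le
    have hX : L⁻¹ * (K4 + η₁ * (ω0 * δ) * L) = L⁻¹ * K4 + η₁ * (ω0 * δ) := by
      field_simp
    rw [hX] at hm1
    linarith [hm1, hAc, hη₁half]
end

section
/- Assume -∞ ≤ v < w ≤ ∞, h ∈ C²((v,w)), ∫_v^w e^{-h(r)} dr < ∞, and there is r₀ ∈ (v,w) such that h(r₀) ≥ 0, h''(r₀) > 0, h is strictly decreasing on (v, r₀] and strictly increasing on [r₀, w). Then ∫_v^w e^{-C h(r)} dr ∼ e^{-C h(r₀)} √(2π / (C h''(r₀))) as C → ∞, i.e., the ratio of the left-hand side to the right-hand side tends to 1 as C → ∞. -/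
open MeasureTheory

set_option maxHeartbeats 2000000 in
theorem stmt_18
    (v w : EReal) (hvw : v < w)
    (S : Set ℝ) (hSdef : S = {r : ℝ | v < (r : EReal) ∧ (r : EReal) < w})
    (h : ℝ → ℝ) (hh : ContDiffOn ℝ 2 h S)
    (hint : IntegrableOn (fun r => Real.exp (-h r)) S)
    (r₀ : ℝ) (hr₀ : r₀ ∈ S)
    (hge : 0 ≤ h r₀) (hsecond : 0 < deriv (deriv h) r₀)
    (hanti : StrictAntiOn h (S ∩ Set.Iic r₀))
    (hmono : StrictMonoOn h (S ∩ Set.Ici r₀)) :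
    Filter.Tendsto (fun C : ℝ =>
        (∫ r in S, Real.exp (-(C * h r))) /
          (Real.exp (-(C * h r₀)) *
            Real.sqrt (2 * Real.pi / (C * deriv (deriv h) r₀))))
      Filter.atTop (nhds 1) := by
  classical
  have hSopen : IsOpen S := by
    rw [hSdef]
    exact (isOpen_Ioo (a := v) (b := w)).preimage continuous_coe_real_ereal
  clear hSdef hvw hge
  set b := deriv (deriv h) r₀ with hbdef
  have hb : 0 < b := hsecond
  obtain ⟨δ₀, hδ₀pos, hball⟩ := Metric.isOpen_iff.mp hSopen r₀ hr₀
  have hSmeas : MeasurableSet S := hSopen.measurableSet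
  have hconth : ContinuousOn h S := hh.continuousOn
  have hd1 : ContDiffOn ℝ 1 (deriv h) S := hh.deriv_of_isOpen hSopen (by norm_num)
  have hcont2 : ContinuousOn (deriv (deriv h)) S := by
    have h0 : ContDiffOn ℝ 0 (deriv (deriv h)) S := hd1.deriv_of_isOpen hSopen (by norm_num)
    exact h0.continuousOn
  have hderiv1 : ∀ x ∈ S, HasDerivAt h (deriv h x) x := fun x hx =>
    ((hh.differentiableOn (by norm_num)).differentiableAt (hSopen.mem_nhds hx)).hasDerivAt
  have hderiv2 : ∀ x ∈ S, HasDerivAt (deriv h) (deriv (deriv h) x) x := fun x hx =>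
    ((hd1.differentiableOn (by norm_num)).differentiableAt (hSopen.mem_nhds hx)).hasDerivAt
  have hmin : ∀ r ∈ S, h r₀ ≤ h r := by
    intro r hr
    rcases lt_trichotomy r r₀ with hlt | heq | hgt
    · exact (hanti ⟨hr, hlt.le⟩ ⟨hr₀, Set.mem_Iic.mpr le_rfl⟩ hlt).le
    · rw [heq]
    · exact (hmono ⟨hr₀, Set.mem_Ici.mpr le_rfl⟩ ⟨hr, hgt.le⟩ hgt).le
  have hd0 : deriv h r₀ = 0 := by
    have : IsLocalMin h r₀ := Filter.eventually_of_mem (hSopen.mem_nhds hr₀) hmin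
    exact this.deriv_eq_zero
  -- quadratic approximation
  have Q : ∀ ε > (0:ℝ), ∃ δ > (0:ℝ), δ < δ₀ ∧ ∀ r, |r - r₀| < δ →
      |h r - h r₀ - b / 2 * (r - r₀) ^ 2| ≤ ε * (r - r₀) ^ 2 := by
    intro ε hε
    have hcA : ContinuousAt (deriv (deriv h)) r₀ := hcont2.continuousAt (hSopen.mem_nhds hr₀)
    rcases Metric.continuousAt_iff.mp hcA ε hε with ⟨δ₁, hδ₁pos, hδ₁⟩
    set δ := min (δ₁ / 2) (δ₀ / 2) with hδdef
    have hδpos : 0 < δ := lt_min (by linarith) (by linarith)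
    have hδlt : δ < δ₀ := lt_of_le_of_lt (min_le_right _ _) (by linarith)
    refine ⟨δ, hδpos, hδlt, ?_⟩
    have hballS : Metric.ball r₀ δ ⊆ S := fun x hx =>
      hball (Metric.ball_subset_ball hδlt.le hx)
    have hbd2 : ∀ x ∈ Metric.ball r₀ δ, ‖deriv (deriv h) x - b‖ ≤ ε := by
      intro x hx
      have hxlt : dist x r₀ < δ₁ := lt_of_lt_of_le hx (le_trans (min_le_left _ _) (by linarith))
      have := hδ₁ hxlt
      rw [Real.dist_eq] at this
      exact le_of_lt (by simpa [Real.norm_eq_abs] using this)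
    -- first MVT : |h' x - b (x - r₀)| ≤ ε |x - r₀| on the ball
    have step1 : ∀ x ∈ Metric.ball r₀ δ, |deriv h x - b * (x - r₀)| ≤ ε * |x - r₀| := by
      intro x hx
      have hg : ∀ y ∈ Metric.ball r₀ δ,
          HasDerivWithinAt (fun y => deriv h y - b * (y - r₀))
            (deriv (deriv h) y - b) (Metric.ball r₀ δ) y := by
        intro y hy
        have h1 : HasDerivAt (fun y => b * (y - r₀)) b y := by
          simpa using ((hasDerivAt_id y).sub_const r₀).const_mul b
        exact ((hderiv2 y (hballS hy)).sub h1).hasDerivWithinAt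
      have := (convex_ball r₀ δ).norm_image_sub_le_of_norm_hasDerivWithin_le hg hbd2
        (Metric.mem_ball_self hδpos) hx
      simpa [hd0, Real.norm_eq_abs] using this
    intro r hr
    have hrball : r ∈ Metric.ball r₀ δ := by simpa [Metric.mem_ball, Real.dist_eq] using hr
    -- second MVT on the segment
    have hseg : segment ℝ r₀ r ⊆ Metric.ball r₀ δ :=
      (convex_ball r₀ δ).segment_subset (Metric.mem_ball_self hδpos) hrball
    have habs : ∀ x ∈ segment ℝ r₀ r, |x - r₀| ≤ |r - r₀| := by
      intro x hx
      rcases hx with ⟨a, c, ha, hc, hac, hx⟩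
      simp only [smul_eq_mul] at hx
      have hx' : x - r₀ = c * (r - r₀) := by linear_combination r₀ * hac - hx
      rw [hx', abs_mul, abs_of_nonneg hc]
      nlinarith [abs_nonneg (r - r₀)]
    have hg2 : ∀ y ∈ segment ℝ r₀ r,
        HasDerivWithinAt (fun y => h y - b / 2 * (y - r₀) ^ 2)
          (deriv h y - b * (y - r₀)) (segment ℝ r₀ r) y := by
      intro y hy
      have h1 : HasDerivAt (fun y => b / 2 * (y - r₀) ^ 2) (b * (y - r₀)) y := by
        have := (((hasDerivAt_id y).sub_const r₀).pow 2).const_mul (b / 2)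
        exact this.congr_deriv (by simp only [id, Nat.cast_ofNat, pow_one, mul_one]; ring)
      exact ((hderiv1 y (hballS (hseg hy))).sub h1).hasDerivWithinAt
    have hbd : ∀ y ∈ segment ℝ r₀ r, ‖deriv h y - b * (y - r₀)‖ ≤ ε * |r - r₀| := by
      intro y hy
      rw [Real.norm_eq_abs]
      refine le_trans (step1 y (hseg hy)) ?_
      exact mul_le_mul_of_nonneg_left (habs y hy) hε.le
    have hmvt := (convex_segment r₀ r).norm_image_sub_le_of_norm_hasDerivWithin_le hg2 hbd
      (left_mem_segment ℝ r₀ r) (right_mem_segment ℝ r₀ r)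
    rw [Real.norm_eq_abs, Real.norm_eq_abs] at hmvt
    calc |h r - h r₀ - b / 2 * (r - r₀) ^ 2|
        = |h r - b / 2 * (r - r₀) ^ 2 - (h r₀ - b / 2 * (r₀ - r₀) ^ 2)| := by ring_nf
      _ ≤ ε * |r - r₀| * |r - r₀| := hmvt
      _ = ε * (r - r₀) ^ 2 := by rw [mul_assoc, abs_mul_abs_self]; ring
  -- fix δ from Q with ε = b/4
  obtain ⟨δ, hδpos, hδlt, hQδ⟩ := Q (b / 4) (by positivity)
  have hballS : Metric.ball r₀ δ ⊆ S := fun x hx => hball (Metric.ball_subset_ball hδlt.le hx)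
  have hlow : ∀ r, |r - r₀| < δ → b / 4 * (r - r₀) ^ 2 ≤ h r - h r₀ := by
    intro r hr
    have := abs_le.mp (hQδ r hr)
    nlinarith [this.1]
  -- bounds away from r₀
  have hpδS : r₀ + δ ∈ S := hball (by
    simp only [Metric.mem_ball, Real.dist_eq, add_sub_cancel_left]
    rw [abs_of_pos hδpos]; exact hδlt)
  have hmδS : r₀ - δ ∈ S := hball (by
    simp only [Metric.mem_ball, Real.dist_eq]
    rw [show r₀ - δ - r₀ = -δ by ring, abs_neg, abs_of_pos hδpos]; exact hδlt)
  set m := min (h (r₀ + δ) - h r₀) (h (r₀ - δ) - h r₀) with hmdef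
  have hm : 0 < m := by
    have h1 : h r₀ < h (r₀ + δ) :=
      hmono ⟨hr₀, Set.mem_Ici.mpr le_rfl⟩ ⟨hpδS, by simp [hδpos.le]⟩ (by linarith)
    have h2 : h r₀ < h (r₀ - δ) :=
      hanti ⟨hmδS, by simp [hδpos.le]⟩ ⟨hr₀, Set.mem_Iic.mpr le_rfl⟩ (by linarith)
    exact lt_min (by linarith) (by linarith)
  have hmT : ∀ r ∈ S \ Metric.ball r₀ δ, m ≤ h r - h r₀ := by
    rintro r ⟨hrS, hrb⟩
    have habs : δ ≤ |r - r₀| := by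
      by_contra hcon
      exact hrb (by simpa [Metric.mem_ball, Real.dist_eq] using not_le.mp hcon)
    rcases le_abs.mp habs with h1 | h1
    · have hge' : h (r₀ + δ) ≤ h r := by
        rcases eq_or_lt_of_le (by linarith : r₀ + δ ≤ r) with heq | hlt
        · rw [← heq]
        · exact (hmono ⟨hpδS, by simp [hδpos.le]⟩ ⟨hrS, by simp; linarith⟩ hlt).le
      have : m ≤ h (r₀ + δ) - h r₀ := min_le_left _ _
      linarith
    · have hge' : h (r₀ - δ) ≤ h r := by
        rcases eq_or_lt_of_le (by linarith : r ≤ r₀ - δ) with heq | hlt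
        · rw [heq]
        · exact (hanti ⟨hrS, by simp; linarith⟩ ⟨hmδS, by simp [hδpos.le]⟩ hlt).le
      have : m ≤ h (r₀ - δ) - h r₀ := min_le_right _ _
      linarith
  -- integrability
  have hcontC : ∀ C : ℝ, ContinuousOn (fun r => Real.exp (-(C * (h r - h r₀)))) S := by
    intro C
    exact Real.continuous_exp.comp_continuousOn
      ((continuousOn_const.mul (hconth.sub continuousOn_const)).neg)
  have hK : IntegrableOn (fun r => Real.exp (-(h r - h r₀))) S := by
    have heq : (fun r => Real.exp (-(h r - h r₀))) = fun r => Real.exp (h r₀) * Real.exp (-h r) := by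
      funext r; rw [← Real.exp_add]; ring_nf
    rw [heq]
    exact hint.const_mul _
  have hIntS : ∀ C : ℝ, 1 ≤ C → IntegrableOn (fun r => Real.exp (-(C * (h r - h r₀)))) S := by
    intro C hC
    refine hK.mono' (((hcontC C).aemeasurable hSmeas).aestronglyMeasurable) ?_
    refine (ae_restrict_mem hSmeas).mono fun r hr => ?_
    rw [Real.norm_eq_abs, abs_of_pos (Real.exp_pos _), Real.exp_le_exp]
    have h1 : 0 ≤ h r - h r₀ := by linarith [hmin r hr]
    nlinarith
  -- main Gaussian part via change of variables and dominated convergence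
  set F : ℝ → ℝ → ℝ := fun C t => (Metric.ball (0:ℝ) (δ * Real.sqrt C)).indicator
    (fun t => Real.exp (-(C * (h (r₀ + t / Real.sqrt C) - h r₀)))) t with hFdef
  have hkey : ∀ C : ℝ, 0 < C → ∀ t : ℝ,
      (t ∈ Metric.ball (0:ℝ) (δ * Real.sqrt C)) ↔ (r₀ + t / Real.sqrt C ∈ Metric.ball r₀ δ) := by
    intro C hC t
    have hc : 0 < Real.sqrt C := Real.sqrt_pos.mpr hC
    simp only [Metric.mem_ball, Real.dist_eq, sub_zero, add_sub_cancel_left]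
    rw [abs_div, abs_of_pos hc, div_lt_iff₀ hc, mul_comm]
  have hFA : ∀ C : ℝ, 0 < C → (∫ t, F C t) =
      Real.sqrt C * ∫ r in Metric.ball r₀ δ, Real.exp (-(C * (h r - h r₀))) := by
    intro C hC
    have hc : 0 < Real.sqrt C := Real.sqrt_pos.mpr hC
    set G : ℝ → ℝ := (Metric.ball r₀ δ).indicator
      (fun r => Real.exp (-(C * (h r - h r₀)))) with hGdef
    have hFG : ∀ t, F C t = G (r₀ + t / Real.sqrt C) := by
      intro t
      by_cases htl : t ∈ Metric.ball (0:ℝ) (δ * Real.sqrt C)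
      · rw [hFdef, hGdef]
        simp only [Set.indicator_of_mem htl, Set.indicator_of_mem ((hkey C hC t).mp htl)]
      · rw [hFdef, hGdef]
        simp only [Set.indicator_of_notMem htl,
          Set.indicator_of_notMem (fun hc' => htl ((hkey C hC t).mpr hc'))]
    calc (∫ t, F C t) = ∫ t, G (r₀ + t / Real.sqrt C) := by simp_rw [hFG]
      _ = |Real.sqrt C| • ∫ u, G (r₀ + u) := by
          exact Measure.integral_comp_div (fun u => G (r₀ + u)) (Real.sqrt C)
      _ = Real.sqrt C * ∫ u, G u := by
          rw [integral_add_left_eq_self, abs_of_pos hc, smul_eq_mul]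
      _ = Real.sqrt C * ∫ r in Metric.ball r₀ δ, Real.exp (-(C * (h r - h r₀))) := by
          rw [hGdef, integral_indicator measurableSet_ball]
  have hsqrt_top : Filter.Tendsto Real.sqrt Filter.atTop Filter.atTop := by
    refine Filter.tendsto_atTop_atTop.mpr fun M => ⟨M ^ 2 + 1, fun C hC => ?_⟩
    rcases le_or_gt M 0 with hM | hM
    · exact le_trans hM (Real.sqrt_nonneg C)
    · have h2 : M ^ 2 ≤ C := by linarith
      calc M = Real.sqrt (M ^ 2) := by rw [Real.sqrt_sq hM.le]
        _ ≤ Real.sqrt C := Real.sqrt_le_sqrt h2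
  have hDCT : Filter.Tendsto (fun C => ∫ t, F C t) Filter.atTop
      (nhds (∫ t : ℝ, Real.exp (-(b / 2) * t ^ 2))) := by
    apply tendsto_integral_filter_of_dominated_convergence
      (bound := fun t => Real.exp (-(b / 4) * t ^ 2))
    · filter_upwards [Filter.eventually_gt_atTop (0:ℝ)] with C hC
      rw [hFdef]
      rw [aestronglyMeasurable_indicator_iff measurableSet_ball]
      have hcball : ContinuousOn (fun t : ℝ => Real.exp (-(C * (h (r₀ + t / Real.sqrt C) - h r₀))))
          (Metric.ball (0:ℝ) (δ * Real.sqrt C)) := by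
        have hmap : Set.MapsTo (fun t : ℝ => r₀ + t / Real.sqrt C)
            (Metric.ball (0:ℝ) (δ * Real.sqrt C)) S := fun t ht => hballS ((hkey C hC t).mp ht)
        have hcont' : Continuous (fun t : ℝ => r₀ + t / Real.sqrt C) := by continuity
        exact (hcontC C).comp hcont'.continuousOn hmap
      exact hcball.aestronglyMeasurable measurableSet_ball
    · filter_upwards [Filter.eventually_gt_atTop (0:ℝ)] with C hC
      apply Filter.Eventually.of_forall
      intro t
      by_cases ht : t ∈ Metric.ball (0:ℝ) (δ * Real.sqrt C)
      · rw [hFdef]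
        simp only [Set.indicator_of_mem ht]
        rw [Real.norm_eq_abs, abs_of_pos (Real.exp_pos _), Real.exp_le_exp]
        have hs : |r₀ + t / Real.sqrt C - r₀| < δ := by
          have hmb := (hkey C hC t).mp ht
          rw [Metric.mem_ball, Real.dist_eq] at hmb
          exact hmb
        have hlow' := hlow _ hs
        have hsq : (r₀ + t / Real.sqrt C - r₀) ^ 2 = t ^ 2 / C := by
          rw [add_sub_cancel_left, div_pow, Real.sq_sqrt hC.le]
        rw [hsq] at hlow'
        have hmul : b / 4 * (t ^ 2 / C) * C ≤ (h (r₀ + t / Real.sqrt C) - h r₀) * C :=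
          mul_le_mul_of_nonneg_right hlow' hC.le
        have heq2 : b / 4 * (t ^ 2 / C) * C = b / 4 * t ^ 2 := by field_simp
        nlinarith
      · rw [hFdef]
        simp only [Set.indicator_of_notMem ht]
        simp [Real.exp_nonneg]
    · exact integrable_exp_neg_mul_sq (by positivity)
    · apply Filter.Eventually.of_forall
      intro t
      have hmem : ∀ᶠ C in Filter.atTop, t ∈ Metric.ball (0:ℝ) (δ * Real.sqrt C) := by
        have htend : Filter.Tendsto (fun C => δ * Real.sqrt C) Filter.atTop Filter.atTop :=
          hsqrt_top.const_mul_atTop hδpos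
        filter_upwards [htend.eventually_gt_atTop |t|] with C hC
        simpa [Metric.mem_ball, Real.dist_eq] using hC
      have hexp : Filter.Tendsto (fun C => C * (h (r₀ + t / Real.sqrt C) - h r₀))
          Filter.atTop (nhds (b / 2 * t ^ 2)) := by
        rcases eq_or_ne t 0 with ht0 | ht0
        · subst ht0
          simp only [zero_div, add_zero, sub_self, mul_zero]
          simpa using tendsto_const_nhds
        · rw [Metric.tendsto_nhds]
          intro ε' hε'
          have ht2 : 0 < t ^ 2 := by positivity
          obtain ⟨δ', hδ'pos, _, hQ'⟩ := Q (ε' / (2 * t ^ 2)) (by positivity)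
          filter_upwards [Filter.eventually_gt_atTop (0:ℝ),
            hsqrt_top.eventually_gt_atTop (|t| / δ')] with C hC hC'
          have hc : 0 < Real.sqrt C := Real.sqrt_pos.mpr hC
          have hs : |r₀ + t / Real.sqrt C - r₀| < δ' := by
            rw [add_sub_cancel_left, abs_div, abs_of_pos hc, div_lt_iff₀ hc]
            calc |t| = |t| / δ' * δ' := by field_simp
              _ < Real.sqrt C * δ' := mul_lt_mul_of_pos_right hC' hδ'pos
              _ = δ' * Real.sqrt C := by ring
          have hQ'' := hQ' _ hs
          have hsq : (r₀ + t / Real.sqrt C - r₀) ^ 2 = t ^ 2 / C := by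
            rw [add_sub_cancel_left, div_pow, Real.sq_sqrt hC.le]
          rw [hsq] at hQ''
          rw [Real.dist_eq]
          have h1 : C * (h (r₀ + t / Real.sqrt C) - h r₀) - b / 2 * t ^ 2
              = C * (h (r₀ + t / Real.sqrt C) - h r₀ - b / 2 * (t ^ 2 / C)) := by
            field_simp
          have hfin : |C * (h (r₀ + t / Real.sqrt C) - h r₀) - b / 2 * t ^ 2| ≤ ε' / 2 := by
            rw [h1, abs_mul, abs_of_pos hC]
            calc C * |h (r₀ + t / Real.sqrt C) - h r₀ - b / 2 * (t ^ 2 / C)|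
                ≤ C * (ε' / (2 * t ^ 2) * (t ^ 2 / C)) :=
                  mul_le_mul_of_nonneg_left hQ'' hC.le
              _ = ε' / 2 := by field_simp
          linarith
      have hcomp : Filter.Tendsto
          (fun C => Real.exp (-(C * (h (r₀ + t / Real.sqrt C) - h r₀))))
          Filter.atTop (nhds (Real.exp (-(b / 2 * t ^ 2)))) :=
        (Real.continuous_exp.tendsto _).comp hexp.neg
      rw [show Real.exp (-(b / 2) * t ^ 2) = Real.exp (-(b / 2 * t ^ 2)) by ring_nf]
      refine Filter.Tendsto.congr' ?_ hcomp
      filter_upwards [hmem, Filter.eventually_gt_atTop (0:ℝ)] with C hCmem hC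
      simp only [hFdef]
      exact (Set.indicator_of_mem hCmem
        (fun t => Real.exp (-(C * (h (r₀ + t / Real.sqrt C) - h r₀))))).symm
  have hgauss : (∫ t : ℝ, Real.exp (-(b / 2) * t ^ 2)) = Real.sqrt (2 * Real.pi / b) := by
    rw [integral_gaussian, show Real.pi / (b / 2) = 2 * Real.pi / b by field_simp]
  rw [hgauss] at hDCT
  -- the tail
  set K := ∫ r in S, Real.exp (-(h r - h r₀)) with hKdef
  have hKnn : 0 ≤ K := setIntegral_nonneg hSmeas fun r _ => (Real.exp_pos _).le
  have hTailBound : ∀ C : ℝ, 1 ≤ C →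
      (∫ r in S \ Metric.ball r₀ δ, Real.exp (-(C * (h r - h r₀))))
        ≤ Real.exp (-((C - 1) * m)) * K := by
    intro C hC
    have hTmeas : MeasurableSet (S \ Metric.ball r₀ δ) := hSmeas.diff measurableSet_ball
    have hI1 : IntegrableOn (fun r => Real.exp (-(C * (h r - h r₀)))) (S \ Metric.ball r₀ δ) :=
      (hIntS C hC).mono_set Set.diff_subset
    have hI2 : IntegrableOn (fun r => Real.exp (-((C - 1) * m)) * Real.exp (-(h r - h r₀)))
        (S \ Metric.ball r₀ δ) :=
      (hK.mono_set Set.diff_subset).const_mul _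
    calc (∫ r in S \ Metric.ball r₀ δ, Real.exp (-(C * (h r - h r₀))))
        ≤ ∫ r in S \ Metric.ball r₀ δ,
            Real.exp (-((C - 1) * m)) * Real.exp (-(h r - h r₀)) := by
          refine setIntegral_mono_on hI1 hI2 hTmeas fun r hr => ?_
          rw [← Real.exp_add, Real.exp_le_exp]
          have h1 := hmT r hr
          have h2 : 0 ≤ h r - h r₀ := by linarith [hmin r hr.1]
          nlinarith
      _ = Real.exp (-((C - 1) * m)) * ∫ r in S \ Metric.ball r₀ δ, Real.exp (-(h r - h r₀)) :=
          integral_const_mul _ _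
      _ ≤ Real.exp (-((C - 1) * m)) * K := by
          refine mul_le_mul_of_nonneg_left ?_ (Real.exp_pos _).le
          refine setIntegral_mono_set hK ?_ (HasSubset.Subset.eventuallyLE Set.diff_subset)
          exact Filter.Eventually.of_forall fun r => (Real.exp_pos _).le
  have hTail : Filter.Tendsto
      (fun C => Real.sqrt C * ∫ r in S \ Metric.ball r₀ δ, Real.exp (-(C * (h r - h r₀))))
      Filter.atTop (nhds 0) := by
    have hRHS : Filter.Tendsto (fun C : ℝ => Real.sqrt C * (Real.exp (-((C - 1) * m)) * K))
        Filter.atTop (nhds 0) := by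
      have hbase : Filter.Tendsto (fun C : ℝ => C ^ (1/2 : ℝ) * Real.exp (-m * C))
          Filter.atTop (nhds 0) := tendsto_rpow_mul_exp_neg_mul_atTop_nhds_zero _ _ hm
      have := hbase.mul_const (Real.exp m * K)
      rw [zero_mul] at this
      refine this.congr' ?_
      filter_upwards [Filter.eventually_ge_atTop (0:ℝ)] with C hC
      rw [Real.sqrt_eq_rpow, show -((C - 1) * m) = -m * C + m by ring, Real.exp_add]
      ring
    refine squeeze_zero' ?_ ?_ hRHS
    · filter_upwards [Filter.eventually_ge_atTop (0:ℝ)] with C hC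
      exact mul_nonneg (Real.sqrt_nonneg C)
        (setIntegral_nonneg (hSmeas.diff measurableSet_ball)
          fun r _ => (Real.exp_pos _).le)
    · filter_upwards [Filter.eventually_ge_atTop (1:ℝ)] with C hC
      exact mul_le_mul_of_nonneg_left (hTailBound C hC) (Real.sqrt_nonneg C)
  -- assembling the two pieces
  have hN : Filter.Tendsto
      (fun C => Real.sqrt C * ∫ r in S, Real.exp (-(C * (h r - h r₀))))
      Filter.atTop (nhds (Real.sqrt (2 * Real.pi / b))) := by
    have hsum := hDCT.add hTail
    rw [add_zero] at hsum
    refine hsum.congr' ?_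
    filter_upwards [Filter.eventually_ge_atTop (1:ℝ)] with C hC
    have hC0 : (0:ℝ) < C := by linarith
    have hsplit : (∫ r in S ∩ Metric.ball r₀ δ, Real.exp (-(C * (h r - h r₀))))
        + (∫ r in S \ Metric.ball r₀ δ, Real.exp (-(C * (h r - h r₀))))
        = ∫ r in S, Real.exp (-(C * (h r - h r₀))) :=
      integral_inter_add_diff measurableSet_ball (hIntS C hC)
    rw [Set.inter_eq_self_of_subset_right hballS] at hsplit
    rw [hFA C hC0, ← hsplit]
    ring
  -- final algebra
  have hcpos : 0 < Real.sqrt (2 * Real.pi / b) :=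
    Real.sqrt_pos.mpr (by positivity)
  have hfin := hN.mul_const (Real.sqrt (2 * Real.pi / b))⁻¹
  rw [mul_inv_cancel₀ hcpos.ne'] at hfin
  refine Filter.Tendsto.congr' ?_ hfin
  filter_upwards [Filter.eventually_gt_atTop (0:ℝ)] with C hC
  have hsC : 0 < Real.sqrt C := Real.sqrt_pos.mpr hC
  have step1 : (∫ r in S, Real.exp (-(C * h r)))
      = Real.exp (-(C * h r₀)) * ∫ r in S, Real.exp (-(C * (h r - h r₀))) := by
    have heq : (fun r => Real.exp (-(C * h r)))
        = fun r => Real.exp (-(C * h r₀)) * Real.exp (-(C * (h r - h r₀))) := by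
      funext r; rw [← Real.exp_add]; ring_nf
    rw [heq, integral_const_mul]
  have step2 : Real.sqrt (2 * Real.pi / (C * b))
      = Real.sqrt (2 * Real.pi / b) / Real.sqrt C := by
    rw [show 2 * Real.pi / (C * b) = (2 * Real.pi / b) / C by field_simp,
      Real.sqrt_div (by positivity)]
  rw [step1, step2, mul_div_mul_left _ _ (Real.exp_ne_zero _), div_div_eq_mul_div,
    div_eq_mul_inv]
  ring
end

section
/- Let φ : (0,∞) → (-1,∞) be continuous with lim_{s↓0} φ(s) = 0 and limsup_{s→∞} s^{-θ}(1 + φ(s)) < ∞ for some θ ∈ ℝ. Then for all constants a ∈ ℝ and b, c, d > 0, ∫₀^∞ s^a e^{-B s^b - c s^{-d}} (1 + φ(s)) ds ∼ I(B) as B → ∞, where I(B) = √(2π/(b+d)) · (bB)^{-(2(a+1)+d)/(2(b+d))} · (cd)^{(2(a+1)-b)/(2(b+d))} · exp(-(b+d) (b^{-1} c)^{b/(b+d)} (d^{-1} B)^{d/(b+d)}); here '∼' means the ratio of the two sides tends to 1 as B → ∞. -/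
open MeasureTheory Real Filter Set



noncomputable def gfun (b d x : ℝ) : ℝ := x ^ b / b + x ^ (-d) / d - (1 / b + 1 / d)

lemma gfun_one (b d : ℝ) : gfun b d 1 = 0 := by simp [gfun]

lemma hasDerivAt_gfun {b d : ℝ} (hb : 0 < b) (hd : 0 < d) {x : ℝ} (hx : 0 < x) :
    HasDerivAt (gfun b d) (x ^ (b - 1) - x ^ (-d - 1)) x := by
  have h1 : HasDerivAt (fun y : ℝ => y ^ b) (b * x ^ (b - 1)) x :=
    Real.hasDerivAt_rpow_const (Or.inl hx.ne')
  have h2 : HasDerivAt (fun y : ℝ => y ^ (-d)) (-d * x ^ (-d - 1)) x :=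
    Real.hasDerivAt_rpow_const (Or.inl hx.ne')
  have := ((h1.div_const b).add (h2.div_const d)).sub_const (1 / b + 1 / d)
  refine this.congr_deriv ?_
  rw [mul_div_cancel_left₀ _ hb.ne', neg_mul, neg_div, mul_div_cancel_left₀ _ hd.ne']
  ring

lemma continuousOn_gfun {b d : ℝ} (hb : 0 < b) (hd : 0 < d) :
    ContinuousOn (gfun b d) (Set.Ioi 0) := fun x hx =>
  ((hasDerivAt_gfun hb hd hx).continuousAt).continuousWithinAt

lemma gfun_anti {b d : ℝ} (hb : 0 < b) (hd : 0 < d) {x y : ℝ} (hx : 0 < x) (hxy : x ≤ y)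
    (hy : y ≤ 1) : gfun b d y ≤ gfun b d x := by
  have h : AntitoneOn (gfun b d) (Set.Ioc 0 1) := by
    apply antitoneOn_of_deriv_nonpos (convex_Ioc 0 1)
    · exact (continuousOn_gfun hb hd).mono (fun z hz => hz.1)
    · intro z hz
      rw [interior_Ioc] at hz
      exact ((hasDerivAt_gfun hb hd hz.1).differentiableAt).differentiableWithinAt
    · intro z hz
      rw [interior_Ioc] at hz
      rw [(hasDerivAt_gfun hb hd hz.1).deriv]
      have : z ^ (b - 1) ≤ z ^ (-d - 1) :=
        Real.rpow_le_rpow_of_exponent_ge hz.1 hz.2.le (by linarith)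
      linarith
  exact h ⟨hx, hxy.trans hy⟩ ⟨hx.trans_le hxy, hy⟩ hxy

lemma gfun_mono {b d : ℝ} (hb : 0 < b) (hd : 0 < d) {x y : ℝ} (hx : 1 ≤ x) (hxy : x ≤ y) :
    gfun b d x ≤ gfun b d y := by
  have h : MonotoneOn (gfun b d) (Set.Ici 1) := by
    apply monotoneOn_of_deriv_nonneg (convex_Ici 1)
    · exact (continuousOn_gfun hb hd).mono (fun z hz => Set.mem_Ioi.mpr (lt_of_lt_of_le one_pos hz))
    · intro z hz
      rw [interior_Ici] at hz
      exact ((hasDerivAt_gfun hb hd (lt_trans one_pos hz)).differentiableAt).differentiableWithinAt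
    · intro z hz
      rw [interior_Ici] at hz
      rw [(hasDerivAt_gfun hb hd (lt_trans one_pos hz)).deriv]
      have : z ^ (-d - 1) ≤ z ^ (b - 1) :=
        Real.rpow_le_rpow_of_exponent_le hz.le (by linarith)
      linarith
  exact h hx (hx.trans hxy) hxy

lemma gfun_nonneg {b d : ℝ} (hb : 0 < b) (hd : 0 < d) {x : ℝ} (hx : 0 < x) :
    0 ≤ gfun b d x := by
  rcases le_total x 1 with h | h
  · rw [← gfun_one b d]; exact gfun_anti hb hd hx h le_rfl
  · rw [← gfun_one b d]; exact gfun_mono hb hd le_rfl h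

lemma gfun_taylor {b d : ℝ} (hb : 0 < b) (hd : 0 < d) :
    Tendsto (fun t => gfun b d (1 + t) / t ^ 2) (nhdsWithin 0 {(0:ℝ)}ᶜ)
      (nhds ((b + d) / 2)) := by
  have hball : ∀ᶠ t in nhds (0:ℝ), 0 < 1 + t := by
    have h1 : Tendsto (fun t : ℝ => 1 + t) (nhds 0) (nhds 1) := by
      simpa using (continuous_add_left (1:ℝ)).tendsto (0:ℝ)
    exact h1.eventually_const_lt one_pos
  -- derivative of f t = gfun b d (1+t)
  have hf' : ∀ t : ℝ, 0 < 1 + t →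
      HasDerivAt (fun t => gfun b d (1 + t)) ((1 + t) ^ (b - 1) - (1 + t) ^ (-d - 1)) t := by
    intro t ht
    have := (hasDerivAt_gfun hb hd ht).comp t ((hasDerivAt_id t).const_add 1)
    simpa [Function.comp_def] using this
  -- the function h t = (1+t)^(b-1) - (1+t)^(-d-1) has derivative b+d at 0
  have hh : HasDerivAt (fun t : ℝ => (1 + t) ^ (b - 1) - (1 + t) ^ (-d - 1)) (b + d) 0 := by
    have h1 : HasDerivAt (fun y : ℝ => y ^ (b - 1)) ((b - 1) * (1:ℝ) ^ (b - 1 - 1)) 1 :=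
      Real.hasDerivAt_rpow_const (Or.inl one_ne_zero)
    have h2 : HasDerivAt (fun y : ℝ => y ^ (-d - 1)) ((-d - 1) * (1:ℝ) ^ (-d - 1 - 1)) 1 :=
      Real.hasDerivAt_rpow_const (Or.inl one_ne_zero)
    have h12 : HasDerivAt (fun y : ℝ => y ^ (b - 1) - y ^ (-d - 1)) (b + d) (1:ℝ) := by
      exact (h1.sub h2).congr_deriv (by rw [Real.one_rpow, Real.one_rpow]; ring)
    have h12' : HasDerivAt (fun y : ℝ => y ^ (b - 1) - y ^ (-d - 1)) (b + d) (1 + (0:ℝ)) := by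
      rw [add_zero]; exact h12
    have hd4 : HasDerivAt (fun t : ℝ => 1 + t) 1 0 := by
      simpa using (hasDerivAt_id (0:ℝ)).const_add 1
    have h3 := h12'.comp (0:ℝ) hd4
    simpa [Function.comp_def] using h3
  have hdiv : Tendsto (fun t => ((1 + t) ^ (b - 1) - (1 + t) ^ (-d - 1)) / (2 * t))
      (nhdsWithin 0 {(0:ℝ)}ᶜ) (nhds ((b + d) / 2)) := by
    have hslope := hasDerivAt_iff_tendsto_slope.mp hh
    have := hslope.div_const 2
    apply this.congr'
    filter_upwards [self_mem_nhdsWithin] with t ht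
    have ht' : t ≠ 0 := ht
    rw [slope_def_field]
    simp [Real.one_rpow]
    ring
  have := HasDerivAt.lhopital_zero_nhdsNE
    (f := fun t => gfun b d (1 + t)) (g := fun t : ℝ => t ^ 2)
    (f' := fun t => (1 + t) ^ (b - 1) - (1 + t) ^ (-d - 1)) (g' := fun t => 2 * t)
    ?_ ?_ ?_ ?_ ?_ hdiv
  · exact this
  · exact (eventually_nhdsWithin_of_eventually_nhds (hball.mono (fun t ht => hf' t ht)))
  · refine Eventually.of_forall (fun t => ?_)
    simpa using hasDerivAt_pow 2 t
  · filter_upwards [self_mem_nhdsWithin] with t (ht : t ≠ 0)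
    simpa using ht
  · have hcont : Tendsto (fun t => gfun b d (1 + t)) (nhds 0) (nhds (gfun b d 1)) := by
      have h1 : Tendsto (fun t : ℝ => 1 + t) (nhds 0) (nhds 1) := by
        simpa using (continuous_add_left (1:ℝ)).tendsto (0:ℝ)
      exact ((hasDerivAt_gfun hb hd one_pos).continuousAt.tendsto).comp h1
    rw [gfun_one] at hcont
    exact tendsto_nhdsWithin_of_tendsto_nhds hcont
  · have : Tendsto (fun t : ℝ => t ^ 2) (nhds 0) (nhds 0) := by
      simpa using (continuous_pow 2).tendsto (0:ℝ)
    exact tendsto_nhdsWithin_of_tendsto_nhds this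

lemma le_exp_pow (n : ℕ) {t : ℝ} (ht : 0 ≤ t) : (t / n) ^ n ≤ Real.exp t := by
  rcases Nat.eq_zero_or_pos n with hn | hn
  · subst hn; simpa using Real.one_le_exp ht
  · have h1 : t / n ≤ Real.exp (t / n) := by
      have := Real.add_one_le_exp (t / n)
      linarith
    have h2 : (t / n) ^ n ≤ (Real.exp (t / n)) ^ n :=
      pow_le_pow_left₀ (div_nonneg ht (Nat.cast_nonneg n)) h1 n
    calc (t / n) ^ n ≤ (Real.exp (t / n)) ^ n := h2
      _ = Real.exp (n * (t / n)) := by rw [← Real.exp_nat_mul]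
      _ = Real.exp t := by
          congr 1
          field_simp

lemma exp_neg_le (n : ℕ) {A : ℝ} (hA : 0 < A) : Real.exp (-A) ≤ (n / A) ^ n := by
  rcases Nat.eq_zero_or_pos n with hn | hn
  · subst hn; simpa using Real.exp_le_one_iff.mpr (neg_nonpos.mpr hA.le)
  · have h1 : (0:ℝ) < (A / n) ^ n :=
      pow_pos (div_pos hA (Nat.cast_pos.mpr hn)) n
    have h2 := le_exp_pow n hA.le
    rw [Real.exp_neg]
    calc (Real.exp A)⁻¹ ≤ ((A / n) ^ n)⁻¹ := by
          exact inv_anti₀ h1 h2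
      _ = (n / A) ^ n := by
          rw [← inv_pow, inv_div]

-- bound on the low region
lemma bound_low {b d : ℝ} (hb : 0 < b) (hd : 0 < d) (q : ℝ) :
    ∃ K : ℝ, 0 ≤ K ∧ ∀ x ∈ Set.Ioc (0:ℝ) 1, x ^ q * Real.exp (-(gfun b d x)) ≤ K := by
  obtain ⟨n, hn⟩ := exists_nat_ge (-q / d)
  have hqn : 0 ≤ q + d * n := by
    have := (div_le_iff₀ hd).mp hn
    nlinarith
  refine ⟨Real.exp (1 / b + 1 / d) * (n * d) ^ n, by positivity, fun x hx => ?_⟩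
  obtain ⟨hx0, hx1⟩ := hx
  have hxd : (0:ℝ) < x ^ (-d) / d := by positivity
  have h1 : Real.exp (-(gfun b d x)) ≤ Real.exp (1 / b + 1 / d) * Real.exp (-(x ^ (-d) / d)) := by
    rw [← Real.exp_add]
    apply Real.exp_le_exp.mpr
    have hxb : 0 ≤ x ^ b / b := by positivity
    simp only [gfun]
    linarith
  have h2 : Real.exp (-(x ^ (-d) / d)) ≤ (n * d) ^ n * x ^ (d * n) := by
    have := exp_neg_le n hxd
    calc Real.exp (-(x ^ (-d) / d)) ≤ ((n : ℝ) / (x ^ (-d) / d)) ^ n := this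
      _ = ((n * d) * x ^ d) ^ n := by
          have hxd' : x ^ d ≠ 0 := (Real.rpow_pos_of_pos hx0 d).ne'
          rw [Real.rpow_neg hx0.le]
          congr 1
          field_simp
      _ = (n * d) ^ n * (x ^ d) ^ n := mul_pow _ _ _
      _ = (n * d) ^ n * x ^ (d * n) := by
          rw [← Real.rpow_natCast (x ^ d) n, ← Real.rpow_mul hx0.le]
  have h3 : x ^ q * x ^ (d * n) = x ^ (q + d * n) := (Real.rpow_add hx0 _ _).symm
  have h4 : x ^ (q + d * n) ≤ 1 := Real.rpow_le_one hx0.le hx1 hqn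
  have hxq : 0 ≤ x ^ q := (Real.rpow_pos_of_pos hx0 q).le
  calc x ^ q * Real.exp (-(gfun b d x))
      ≤ x ^ q * (Real.exp (1 / b + 1 / d) * ((n * d) ^ n * x ^ (d * n))) := by
        apply mul_le_mul_of_nonneg_left _ hxq
        exact le_trans h1 (mul_le_mul_of_nonneg_left h2 (Real.exp_pos _).le)
    _ = Real.exp (1 / b + 1 / d) * (n * d) ^ n * (x ^ q * x ^ (d * n)) := by ring
    _ ≤ Real.exp (1 / b + 1 / d) * (n * d) ^ n := by
        rw [h3]
        nth_rewrite 2 [← mul_one (Real.exp (1 / b + 1 / d) * (n * d) ^ n)]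
        apply mul_le_mul_of_nonneg_left h4 (by positivity)

lemma bound_high {b d : ℝ} (hb : 0 < b) (hd : 0 < d) (q : ℝ) :
    ∃ K : ℝ, 0 ≤ K ∧ ∀ x ∈ Set.Ici (1:ℝ),
      x ^ q * Real.exp (-(gfun b d x)) ≤ K * x ^ (-2 : ℝ) := by
  set b' := min b 1 with hb'def
  have hb' : 0 < b' := lt_min hb one_pos
  obtain ⟨n, hn⟩ := exists_nat_ge ((q + 2) / b')
  have hqn : q + 2 ≤ b' * n := by
    have := (div_le_iff₀ hb').mp hn
    nlinarith
  refine ⟨Real.exp (1 / b + 1 / d) * ((n:ℝ) * b) ^ n, by positivity, fun x hx => ?_⟩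
  have hx1 : (1:ℝ) ≤ x := hx
  have hx0 : (0:ℝ) < x := lt_of_lt_of_le one_pos hx1
  have hxb : (0:ℝ) < x ^ b' / b := by positivity
  have hbb : x ^ b' ≤ x ^ b := Real.rpow_le_rpow_of_exponent_le hx1 (min_le_left _ _)
  have h1 : Real.exp (-(gfun b d x)) ≤ Real.exp (1 / b + 1 / d) * Real.exp (-(x ^ b' / b)) := by
    rw [← Real.exp_add]
    apply Real.exp_le_exp.mpr
    have hxd2 : (0:ℝ) ≤ x ^ (-d) / d := by positivity
    have h5 : x ^ b' / b ≤ x ^ b / b := by gcongr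
    simp only [gfun]
    linarith
  have h2 : Real.exp (-(x ^ b' / b)) ≤ ((n:ℝ) * b) ^ n * x ^ (-(b' * n)) := by
    calc Real.exp (-(x ^ b' / b)) ≤ ((n:ℝ) / (x ^ b' / b)) ^ n := exp_neg_le n hxb
      _ = (((n:ℝ) * b) * (x ^ b')⁻¹) ^ n := by
          congr 1
          field_simp
      _ = ((n:ℝ) * b) ^ n * ((x ^ b')⁻¹) ^ n := mul_pow _ _ _
      _ = ((n:ℝ) * b) ^ n * x ^ (-(b' * n)) := by
          congr 1
          rw [← Real.rpow_neg hx0.le, ← Real.rpow_natCast (x ^ (-b')) n, ← Real.rpow_mul hx0.le]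
          ring_nf
  have h3 : x ^ q * x ^ (-(b' * n)) = x ^ (q - b' * n) := by
    rw [← Real.rpow_add hx0]
    ring_nf
  have h4 : x ^ (q - b' * n) ≤ x ^ (-2 : ℝ) :=
    Real.rpow_le_rpow_of_exponent_le hx1 (by linarith)
  have hxq : (0:ℝ) ≤ x ^ q := (Real.rpow_pos_of_pos hx0 q).le
  calc x ^ q * Real.exp (-(gfun b d x))
      ≤ x ^ q * (Real.exp (1 / b + 1 / d) * (((n:ℝ) * b) ^ n * x ^ (-(b' * n)))) := by
        apply mul_le_mul_of_nonneg_left _ hxq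
        exact le_trans h1 (mul_le_mul_of_nonneg_left h2 (Real.exp_pos _).le)
    _ = Real.exp (1 / b + 1 / d) * ((n:ℝ) * b) ^ n * (x ^ q * x ^ (-(b' * n))) := by ring
    _ ≤ Real.exp (1 / b + 1 / d) * ((n:ℝ) * b) ^ n * x ^ (-2 : ℝ) := by
        rw [h3]
        exact mul_le_mul_of_nonneg_left h4 (by positivity)

lemma integrableOn_high {b d : ℝ} (hb : 0 < b) (hd : 0 < d) (q : ℝ) :
    IntegrableOn (fun x => x ^ q * Real.exp (-(gfun b d x))) (Set.Ioi (1:ℝ)) := by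
  obtain ⟨K, hK0, hK⟩ := bound_high hb hd q
  have hmaj : IntegrableOn (fun x : ℝ => K * x ^ (-2 : ℝ)) (Set.Ioi (1:ℝ)) :=
    (integrableOn_Ioi_rpow_of_lt (by norm_num) one_pos).const_mul K
  apply hmaj.mono'
  · apply ContinuousOn.aestronglyMeasurable _ measurableSet_Ioi
    apply ContinuousOn.mul
    · exact fun x hx =>
        (Real.continuousAt_rpow_const x q (Or.inl (ne_of_gt (lt_trans one_pos hx)))).continuousWithinAt
    · exact (Real.continuous_exp.comp_continuousOn
        ((continuousOn_gfun hb hd).mono (fun z hz => Set.mem_Ioi.mpr (lt_trans one_pos hz))).neg)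
  · rw [ae_restrict_iff' measurableSet_Ioi]
    apply ae_of_all
    intro x hx
    have hx0 : (0:ℝ) < x := lt_trans one_pos hx
    have : 0 ≤ x ^ q * Real.exp (-(gfun b d x)) := by positivity
    rw [Real.norm_eq_abs, abs_of_nonneg this]
    exact hK x (Set.mem_Ici.mpr (le_of_lt hx))


lemma rpow_le_max {l r x p : ℝ} (hl : 0 < l) (hx : l ≤ x) (hxr : x ≤ r) :
    x ^ p ≤ max (l ^ p) (r ^ p) := by
  rcases le_or_gt 0 p with hp | hp
  · exact le_max_of_le_right (Real.rpow_le_rpow (hl.trans_le hx).le hxr hp)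
  · exact le_max_of_le_left (Real.rpow_le_rpow_of_nonpos hl hx hp.le)

lemma phi_bound (φ : ℝ → ℝ) (hφcont : ContinuousOn φ (Set.Ioi 0))
    (hφrange : ∀ s : ℝ, 0 < s → -1 < φ s)
    (hφ0 : Filter.Tendsto φ (nhdsWithin 0 (Set.Ioi 0)) (nhds 0))
    (θ : ℝ) (hθ : ∃ C : ℝ, ∀ᶠ s in Filter.atTop, s ^ (-θ) * (1 + φ s) ≤ C) :
    ∃ C₁ : ℝ, 1 ≤ C₁ ∧ ∀ s : ℝ, 0 < s → 1 + φ s ≤ C₁ * (1 + s ^ max θ 0) := by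
  obtain ⟨C, hC⟩ := hθ
  obtain ⟨S₀, hS₀⟩ := hC.exists_forall_of_atTop
  set S₁ : ℝ := max S₀ 1 with hS₁def
  have hS₁1 : (1:ℝ) ≤ S₁ := le_max_right _ _
  have hS₁0 : (0:ℝ) < S₁ := lt_of_lt_of_le one_pos hS₁1
  -- bound for s ≥ S₁
  have hbig : ∀ s : ℝ, S₁ ≤ s → 1 + φ s ≤ max C 1 * s ^ max θ 0 := by
    intro s hs
    have hs1 : (1:ℝ) ≤ s := hS₁1.trans hs
    have hs0 : (0:ℝ) < s := lt_of_lt_of_le one_pos hs1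
    have h1 : s ^ (-θ) * (1 + φ s) ≤ C := hS₀ s (le_trans (le_max_left _ _) hs)
    have h2 : 1 + φ s ≤ C * s ^ θ := by
      have hpos : (0:ℝ) < s ^ (-θ) := Real.rpow_pos_of_pos hs0 _
      have := mul_le_mul_of_nonneg_left h1 (Real.rpow_pos_of_pos hs0 θ).le
      rw [← mul_assoc, ← Real.rpow_add hs0] at this
      simp at this
      linarith
    have h3 : s ^ θ ≤ s ^ max θ 0 :=
      Real.rpow_le_rpow_of_exponent_le hs1 (le_max_left _ _)
    have h4 : (0:ℝ) < s ^ max θ 0 := Real.rpow_pos_of_pos hs0 _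
    calc 1 + φ s ≤ C * s ^ θ := h2
      _ ≤ max C 1 * s ^ θ := mul_le_mul_of_nonneg_right (le_max_left _ _) (Real.rpow_pos_of_pos hs0 θ).le
      _ ≤ max C 1 * s ^ max θ 0 :=
          mul_le_mul_of_nonneg_left h3 (le_trans zero_le_one (le_max_right _ _))
  -- bound near 0
  have hsmall : ∃ δ₀ : ℝ, 0 < δ₀ ∧ ∀ s : ℝ, 0 < s → s < δ₀ → 1 + φ s ≤ 2 := by
    have h := hφ0.eventually (eventually_le_nhds (by norm_num : (0:ℝ) < 1))
    rw [eventually_nhdsWithin_iff, Metric.eventually_nhds_iff] at h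
    obtain ⟨δ₀, hδ₀, h⟩ := h
    refine ⟨δ₀, hδ₀, fun s hs hsδ => ?_⟩
    have := h (by rwa [Real.dist_eq, sub_zero, abs_of_pos hs]) hs
    linarith
  obtain ⟨δ₀, hδ₀, hsmall⟩ := hsmall
  -- bound on the compact middle
  have hmid : ∃ C₂ : ℝ, ∀ s ∈ Set.Icc (δ₀ / 2) S₁, 1 + φ s ≤ C₂ := by
    have hcomp : IsCompact (Set.Icc (δ₀ / 2) S₁) := isCompact_Icc
    have hsub : Set.Icc (δ₀ / 2) S₁ ⊆ Set.Ioi 0 := fun z hz =>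
      lt_of_lt_of_le (by positivity) hz.1
    obtain ⟨C₂, hC₂⟩ := hcomp.exists_bound_of_continuousOn (hφcont.mono hsub)
    refine ⟨1 + C₂, fun s hs => ?_⟩
    have := hC₂ s hs
    have := le_of_abs_le ((Real.norm_eq_abs _) ▸ this)
    linarith
  obtain ⟨C₂, hC₂⟩ := hmid
  refine ⟨max (max 2 C₂) (max C 1), le_trans (by norm_num) (le_max_of_le_left (le_max_left _ _)), fun s hs => ?_⟩
  have hsp : (0:ℝ) ≤ s ^ max θ 0 := (Real.rpow_pos_of_pos hs _).le
  have hCC : (0:ℝ) ≤ max (max 2 C₂) (max C 1) := le_trans (by norm_num)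
    (le_max_of_le_left (le_max_left _ _))
  rcases le_or_gt S₁ s with h | h
  · calc 1 + φ s ≤ max C 1 * s ^ max θ 0 := hbig s h
      _ ≤ max (max 2 C₂) (max C 1) * s ^ max θ 0 :=
          mul_le_mul_of_nonneg_right (le_max_right _ _) hsp
      _ ≤ max (max 2 C₂) (max C 1) * (1 + s ^ max θ 0) := by
          apply mul_le_mul_of_nonneg_left _ hCC
          linarith
  · have hb : 1 + φ s ≤ max 2 C₂ := by
      rcases lt_or_ge s (δ₀ / 2) with h2 | h2
      · exact le_trans (hsmall s hs (lt_of_lt_of_le h2 (by linarith))) (le_max_left _ _)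
      · exact le_trans (hC₂ s ⟨h2, h.le⟩) (le_max_right _ _)
    calc 1 + φ s ≤ max 2 C₂ := hb
      _ ≤ max (max 2 C₂) (max C 1) := le_max_left _ _
      _ ≤ max (max 2 C₂) (max C 1) * (1 + s ^ max θ 0) := by
          nth_rewrite 1 [← mul_one (max (max 2 C₂) (max C 1))]
          apply mul_le_mul_of_nonneg_left _ hCC
          linarith


noncomputable def Mfun (b c d B : ℝ) : ℝ := (b * B) ^ (d / (b + d)) * (c * d) ^ (b / (b + d))
noncomputable def sfun (b c d B : ℝ) : ℝ := (c * d / (b * B)) ^ (1 / (b + d))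

section alg
variable {b c d B : ℝ} (hb : 0 < b) (hc : 0 < c) (hd : 0 < d) (hB : 0 < B)
include hb hc hd hB

lemma Mfun_pos : 0 < Mfun b c d B :=
  mul_pos (Real.rpow_pos_of_pos (by positivity) _) (Real.rpow_pos_of_pos (by positivity) _)

lemma sfun_pos : 0 < sfun b c d B := Real.rpow_pos_of_pos (by positivity) _

lemma log_Mfun : Real.log (Mfun b c d B) =
    d / (b + d) * Real.log (b * B) + b / (b + d) * Real.log (c * d) := by
  rw [Mfun, Real.log_mul (Real.rpow_pos_of_pos (by positivity) _).ne'
    (Real.rpow_pos_of_pos (by positivity) _).ne', Real.log_rpow (by positivity),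
    Real.log_rpow (by positivity)]

lemma log_sfun : Real.log (sfun b c d B) =
    1 / (b + d) * (Real.log (c * d) - Real.log (b * B)) := by
  rw [sfun, Real.log_rpow (by positivity), Real.log_div (by positivity) (by positivity)]

lemma alg1 : B * sfun b c d B ^ b = Mfun b c d B / b := by
  have h1 : (0:ℝ) < B * sfun b c d B ^ b :=
    mul_pos hB (Real.rpow_pos_of_pos (sfun_pos hb hc hd hB) _)
  have h2 : (0:ℝ) < Mfun b c d B / b := div_pos (Mfun_pos hb hc hd hB) hb
  rw [← Real.exp_log h1, ← Real.exp_log h2]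
  congr 1
  rw [Real.log_mul hB.ne' (Real.rpow_pos_of_pos (sfun_pos hb hc hd hB) _).ne',
    Real.log_rpow (sfun_pos hb hc hd hB), Real.log_div (Mfun_pos hb hc hd hB).ne' hb.ne',
    log_Mfun hb hc hd hB, log_sfun hb hc hd hB]
  have hbB : Real.log B = Real.log (b * B) - Real.log b := by
    rw [Real.log_mul hb.ne' hB.ne']; ring
  rw [hbB]
  have hβ : b + d ≠ 0 := by positivity
  field_simp
  ring

lemma alg2 : c * sfun b c d B ^ (-d) = Mfun b c d B / d := by
  have h1 : (0:ℝ) < c * sfun b c d B ^ (-d) :=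
    mul_pos hc (Real.rpow_pos_of_pos (sfun_pos hb hc hd hB) _)
  have h2 : (0:ℝ) < Mfun b c d B / d := div_pos (Mfun_pos hb hc hd hB) hd
  rw [← Real.exp_log h1, ← Real.exp_log h2]
  congr 1
  rw [Real.log_mul hc.ne' (Real.rpow_pos_of_pos (sfun_pos hb hc hd hB) _).ne',
    Real.log_rpow (sfun_pos hb hc hd hB), Real.log_div (Mfun_pos hb hc hd hB).ne' hd.ne',
    log_Mfun hb hc hd hB, log_sfun hb hc hd hB]
  have hcd : Real.log c = Real.log (c * d) - Real.log d := by
    rw [Real.log_mul hc.ne' hd.ne']; ring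
  rw [hcd]
  have hβ : b + d ≠ 0 := by positivity
  field_simp
  ring

lemma alg3 : (b + d) * (b⁻¹ * c) ^ (b / (b + d)) * (d⁻¹ * B) ^ (d / (b + d)) =
    Mfun b c d B * (1 / b + 1 / d) := by
  have hβ : (0:ℝ) < b + d := by positivity
  have h1 : (0:ℝ) < (b + d) * (b⁻¹ * c) ^ (b / (b + d)) * (d⁻¹ * B) ^ (d / (b + d)) := by
    have := Real.rpow_pos_of_pos (show (0:ℝ) < b⁻¹ * c by positivity) (b / (b + d))
    have := Real.rpow_pos_of_pos (show (0:ℝ) < d⁻¹ * B by positivity) (d / (b + d))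
    positivity
  have h2 : (0:ℝ) < Mfun b c d B * (1 / b + 1 / d) := by
    have := Mfun_pos hb hc hd hB
    positivity
  rw [← Real.exp_log h1, ← Real.exp_log h2]
  congr 1
  rw [Real.log_mul (by positivity) (Real.rpow_pos_of_pos (by positivity) _).ne',
    Real.log_mul hβ.ne' (Real.rpow_pos_of_pos (by positivity) _).ne',
    Real.log_rpow (by positivity), Real.log_rpow (by positivity),
    Real.log_mul (Mfun_pos hb hc hd hB).ne' (by positivity),
    log_Mfun hb hc hd hB]
  have e1 : Real.log (b⁻¹ * c) = Real.log c - Real.log b := by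
    rw [Real.log_mul (by positivity) hc.ne', Real.log_inv]; ring
  have e2 : Real.log (d⁻¹ * B) = Real.log B - Real.log d := by
    rw [Real.log_mul (by positivity) hB.ne', Real.log_inv]; ring
  have e3 : Real.log (b * B) = Real.log b + Real.log B := Real.log_mul hb.ne' hB.ne'
  have e4 : Real.log (c * d) = Real.log c + Real.log d := Real.log_mul hc.ne' hd.ne'
  have e5 : (1:ℝ) / b + 1 / d = (b + d) / (b * d) := by field_simp; ring
  rw [e1, e2, e3, e4, e5]
  have e6 : Real.log ((b + d) / (b * d)) =
      Real.log (b + d) - Real.log b - Real.log d := by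
    rw [Real.log_div hβ.ne' (by positivity), Real.log_mul hb.ne' hd.ne']; ring
  rw [e6]
  field_simp
  ring

lemma alg4 (a : ℝ) :
    (b * B) ^ (-((2 * (a + 1) + d) / (2 * (b + d)))) * (c * d) ^ ((2 * (a + 1) - b) / (2 * (b + d)))
      = Mfun b c d B ^ (-(1/2 : ℝ)) * sfun b c d B ^ (a + 1) := by
  have hβ : (0:ℝ) < b + d := by positivity
  have h1 : (0:ℝ) < (b * B) ^ (-((2 * (a + 1) + d) / (2 * (b + d)))) *
      (c * d) ^ ((2 * (a + 1) - b) / (2 * (b + d))) :=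
    mul_pos (Real.rpow_pos_of_pos (by positivity) _) (Real.rpow_pos_of_pos (by positivity) _)
  have h2 : (0:ℝ) < Mfun b c d B ^ (-(1/2 : ℝ)) * sfun b c d B ^ (a + 1) :=
    mul_pos (Real.rpow_pos_of_pos (Mfun_pos hb hc hd hB) _)
      (Real.rpow_pos_of_pos (sfun_pos hb hc hd hB) _)
  rw [← Real.exp_log h1, ← Real.exp_log h2]
  congr 1
  rw [Real.log_mul (Real.rpow_pos_of_pos (by positivity) _).ne'
      (Real.rpow_pos_of_pos (by positivity) _).ne',
    Real.log_mul (Real.rpow_pos_of_pos (Mfun_pos hb hc hd hB) _).ne'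
      (Real.rpow_pos_of_pos (sfun_pos hb hc hd hB) _).ne',
    Real.log_rpow (by positivity), Real.log_rpow (by positivity),
    Real.log_rpow (Mfun_pos hb hc hd hB), Real.log_rpow (sfun_pos hb hc hd hB),
    log_Mfun hb hc hd hB, log_sfun hb hc hd hB]
  field_simp
  ring

end alg


lemma Mfun_tendsto {b c d : ℝ} (hb : 0 < b) (hc : 0 < c) (hd : 0 < d) :
    Tendsto (fun B => Mfun b c d B) atTop atTop := by
  have hβ : (0:ℝ) < b + d := by positivity
  have h1 : Tendsto (fun B : ℝ => b * B) atTop atTop :=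
    Tendsto.const_mul_atTop hb tendsto_id
  have h2 : Tendsto (fun x : ℝ => x ^ (d / (b + d))) atTop atTop :=
    tendsto_rpow_atTop (by positivity)
  exact (h2.comp h1).atTop_mul_const (Real.rpow_pos_of_pos (by positivity) _)

lemma sfun_tendsto {b c d : ℝ} (hb : 0 < b) (hc : 0 < c) (hd : 0 < d) :
    Tendsto (fun B => sfun b c d B) atTop (nhds 0) := by
  have hβ : (0:ℝ) < b + d := by positivity
  have h1 : Tendsto (fun B : ℝ => c * d / (b * B)) atTop (nhds 0) := by
    have : (fun B : ℝ => c * d / (b * B)) = fun B : ℝ => (c * d / b) * B⁻¹ := by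
      funext B; ring
    rw [this]
    simpa using tendsto_inv_atTop_zero.const_mul (c * d / b)
  have h2 : ContinuousAt (fun x : ℝ => x ^ (1 / (b + d))) 0 :=
    Real.continuousAt_rpow_const 0 _ (Or.inr (by positivity))
  have h3 := (h2.tendsto).comp h1
  rw [Real.zero_rpow (by positivity : (1:ℝ)/(b+d) ≠ 0)] at h3
  exact h3

noncomputable def fB (φ : ℝ → ℝ) (b d a M σ x : ℝ) : ℝ :=
  x ^ a * Real.exp (-(M * gfun b d x)) * (1 + φ (σ * x))

section fB
variable {φ : ℝ → ℝ} {b d a M σ : ℝ}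

lemma fB_contOn (hb : 0 < b) (hd : 0 < d) (hφcont : ContinuousOn φ (Set.Ioi 0))
    (hσ : 0 < σ) : ContinuousOn (fB φ b d a M σ) (Set.Ioi 0) := by
  apply ContinuousOn.mul
  · apply ContinuousOn.mul
    · exact fun x hx => (Real.continuousAt_rpow_const x a (Or.inl (ne_of_gt hx))).continuousWithinAt
    · exact Real.continuous_exp.comp_continuousOn
        (((continuousOn_gfun hb hd).const_smul M).neg)
  · apply ContinuousOn.add continuousOn_const
    exact hφcont.comp ((continuous_const.mul continuous_id).continuousOn)
      (fun x hx => by simpa using mul_pos hσ hx)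

lemma fB_nonneg (hφrange : ∀ s : ℝ, 0 < s → -1 < φ s) (hσ : 0 < σ) {x : ℝ} (hx : 0 < x) :
    0 ≤ fB φ b d a M σ x := by
  have h1 := hφrange (σ * x) (mul_pos hσ hx)
  have h2 : (0:ℝ) < x ^ a := Real.rpow_pos_of_pos hx a
  have := Real.exp_pos (-(M * gfun b d x))
  have h4 : (0:ℝ) ≤ 1 + φ (σ * x) := by linarith
  unfold fB
  exact mul_nonneg (mul_nonneg h2.le (Real.exp_pos _).le) h4

-- generic decomposition bound
lemma fB_le (hφrange : ∀ s : ℝ, 0 < s → -1 < φ s) (hσ : 0 < σ) {x P E : ℝ} (hx : 0 < x)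
    (hP : 1 + φ (σ * x) ≤ P) (hE : Real.exp (-(M * gfun b d x)) ≤ E) :
    fB φ b d a M σ x ≤ x ^ a * E * P := by
  have h1 := hφrange (σ * x) (mul_pos hσ hx)
  have h2 : (0:ℝ) < x ^ a := Real.rpow_pos_of_pos hx a
  have h3 := Real.exp_pos (-(M * gfun b d x))
  have h4 : (0:ℝ) ≤ 1 + φ (σ * x) := by linarith
  calc x ^ a * Real.exp (-(M * gfun b d x)) * (1 + φ (σ * x))
      ≤ x ^ a * E * (1 + φ (σ * x)) :=
        mul_le_mul_of_nonneg_right (mul_le_mul_of_nonneg_left hE h2.le) h4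
    _ ≤ x ^ a * E * P := by
        apply mul_le_mul_of_nonneg_left hP
        nlinarith

lemma exp_split (hb : 0 < b) (hd : 0 < d) {x l : ℝ} (hM : 1 ≤ M) (hx : 0 < x)
    (hgl : gfun b d l ≤ gfun b d x) :
    Real.exp (-(M * gfun b d x)) ≤
      Real.exp (-((M - 1) * gfun b d l)) * Real.exp (-(gfun b d x)) := by
  rw [← Real.exp_add]
  apply Real.exp_le_exp.mpr
  have hgx : 0 ≤ gfun b d x := gfun_nonneg hb hd hx
  nlinarith

lemma fB_bound_lo (hb : 0 < b) (hd : 0 < d) (hφrange : ∀ s : ℝ, 0 < s → -1 < φ s) {C₁ p : ℝ}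
    (hC₁ : ∀ s : ℝ, 0 < s → 1 + φ s ≤ C₁ * (1 + s ^ p)) (hp : 0 ≤ p)
    (hM : 1 ≤ M) (hσ0 : 0 < σ) (hσ : σ ≤ 1) {l x : ℝ} (hl : l ≤ 1)
    (hx : 0 < x) (hxl : x ≤ l) :
    fB φ b d a M σ x ≤
      Real.exp (-((M - 1) * gfun b d l)) * (2 * C₁) * (x ^ a * Real.exp (-(gfun b d x))) := by
  have hσx : 0 < σ * x := mul_pos hσ0 hx
  have hσx1 : σ * x ≤ 1 := by nlinarith [hxl.trans hl]
  have hC₁0 : (0:ℝ) ≤ C₁ := by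
    have h1 := hC₁ 1 one_pos
    have h2 := hφrange 1 one_pos
    have h3 : (0:ℝ) ≤ 1 + (1:ℝ) ^ p := by
      have := Real.rpow_pos_of_pos one_pos p; linarith
    nlinarith [Real.rpow_pos_of_pos one_pos p]
  have hphi : 1 + φ (σ * x) ≤ 2 * C₁ := by
    have h1 := hC₁ (σ * x) hσx
    have h2 : (σ * x) ^ p ≤ 1 := Real.rpow_le_one hσx.le hσx1 hp
    nlinarith
  have hexp := exp_split (M := M) hb hd hM hx (gfun_anti hb hd hx hxl hl)
  have := fB_le (a := a) hφrange hσ0 hx hphi hexp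
  calc fB φ b d a M σ x ≤ x ^ a * (Real.exp (-((M - 1) * gfun b d l)) * Real.exp (-(gfun b d x)))
      * (2 * C₁) := this
    _ = Real.exp (-((M - 1) * gfun b d l)) * (2 * C₁) * (x ^ a * Real.exp (-(gfun b d x))) := by
        ring

lemma fB_bound_hi (hb : 0 < b) (hd : 0 < d) (hφrange : ∀ s : ℝ, 0 < s → -1 < φ s) {C₁ p : ℝ}
    (hC₁ : ∀ s : ℝ, 0 < s → 1 + φ s ≤ C₁ * (1 + s ^ p)) (hp : 0 ≤ p)
    (hM : 1 ≤ M) (hσ0 : 0 < σ) (hσ : σ ≤ 1) {l x : ℝ} (hl : 1 ≤ l)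
    (hlx : l ≤ x) :
    fB φ b d a M σ x ≤
      Real.exp (-((M - 1) * gfun b d l)) *
        (C₁ * ((x ^ a + x ^ (a + p)) * Real.exp (-(gfun b d x)))) := by
  have hx : 0 < x := lt_of_lt_of_le (lt_of_lt_of_le one_pos hl) hlx
  have hσx : 0 < σ * x := mul_pos hσ0 hx
  have hσxx : σ * x ≤ x := by nlinarith
  have hC₁0 : (0:ℝ) ≤ C₁ := by
    have h1 := hC₁ 1 one_pos
    have h2 := hφrange 1 one_pos
    nlinarith [Real.rpow_pos_of_pos one_pos p]
  have hphi : 1 + φ (σ * x) ≤ C₁ * (1 + x ^ p) := by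
    have h1 := hC₁ (σ * x) hσx
    have h2 : (σ * x) ^ p ≤ x ^ p := Real.rpow_le_rpow hσx.le hσxx hp
    nlinarith
  have hexp := exp_split (M := M) hb hd hM hx (gfun_mono hb hd hl hlx)
  have := fB_le (a := a) hφrange hσ0 hx hphi hexp
  calc fB φ b d a M σ x
      ≤ x ^ a * (Real.exp (-((M - 1) * gfun b d l)) * Real.exp (-(gfun b d x)))
        * (C₁ * (1 + x ^ p)) := this
    _ = Real.exp (-((M - 1) * gfun b d l)) *
        (C₁ * ((x ^ a * (1 + x ^ p)) * Real.exp (-(gfun b d x)))) := by ring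
    _ = Real.exp (-((M - 1) * gfun b d l)) *
        (C₁ * ((x ^ a + x ^ (a + p)) * Real.exp (-(gfun b d x)))) := by
        rw [mul_add, mul_one, ← Real.rpow_add hx]

end fB


lemma tail_aux {g0 : ℝ} (hg0 : 0 < g0) (K : ℝ) :
    Tendsto (fun m : ℝ => m ^ (1/2:ℝ) * Real.exp (-((m - 1) * g0)) * K) atTop (nhds 0) := by
  have h := (tendsto_rpow_mul_exp_neg_mul_atTop_nhds_zero (1/2) g0 hg0).mul_const (Real.exp g0 * K)
  rw [zero_mul] at h
  apply h.congr
  intro m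
  have h2 : Real.exp (-g0 * m) * Real.exp g0 = Real.exp (-((m - 1) * g0)) := by
    rw [← Real.exp_add]; congr 1; ring
  rw [← h2]; ring

set_option maxHeartbeats 1000000 in
theorem stmt_19
    (φ : ℝ → ℝ) (hφcont : ContinuousOn φ (Set.Ioi 0))
    (hφrange : ∀ s : ℝ, 0 < s → -1 < φ s)
    (hφ0 : Filter.Tendsto φ (nhdsWithin 0 (Set.Ioi 0)) (nhds 0))
    (θ : ℝ) (hθ : ∃ C : ℝ, ∀ᶠ s in Filter.atTop, s ^ (-θ) * (1 + φ s) ≤ C)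
    (a b c d : ℝ) (hb : 0 < b) (hc : 0 < c) (hd : 0 < d) :
    Filter.Tendsto (fun B : ℝ =>
        (∫ s in Set.Ioi (0:ℝ),
            s ^ a * Real.exp (-(B * s ^ b) - c * s ^ (-d)) * (1 + φ s)) /
          (Real.sqrt (2 * Real.pi / (b + d)) *
            (b * B) ^ (-((2 * (a + 1) + d) / (2 * (b + d)))) *
            (c * d) ^ ((2 * (a + 1) - b) / (2 * (b + d))) *
            Real.exp (-((b + d) * (b⁻¹ * c) ^ (b / (b + d)) *
              (d⁻¹ * B) ^ (d / (b + d))))))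
      Filter.atTop (nhds 1) := by
  set p := max θ 0 with hpdef
  have hp : 0 ≤ p := le_max_right _ _
  obtain ⟨C₁, hC₁1, hC₁⟩ := phi_bound φ hφcont hφrange hφ0 θ hθ
  have hC₁0 : (0:ℝ) ≤ C₁ := by linarith
  have hβ : (0:ℝ) < b + d := by positivity
  -- quadratic lower bound radius
  obtain ⟨δ, hδ0, hδhalf, hδq⟩ : ∃ δ : ℝ, 0 < δ ∧ δ ≤ 1/2 ∧
      ∀ t : ℝ, |t| ≤ δ → (b + d) / 4 * t ^ 2 ≤ gfun b d (1 + t) := by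
    have h := (gfun_taylor hb hd).eventually (eventually_ge_nhds
      (show (b + d) / 4 < (b + d) / 2 by linarith))
    rw [eventually_nhdsWithin_iff, Metric.eventually_nhds_iff] at h
    obtain ⟨ε, hε, h⟩ := h
    refine ⟨min (ε / 2) (1 / 2), by positivity, min_le_right _ _, fun t ht => ?_⟩
    rcases eq_or_ne t 0 with rfl | ht0
    · simpa [gfun_one] using le_of_eq (by ring)
    · have htε : dist t 0 < ε := by
        rw [Real.dist_eq, sub_zero]
        calc |t| ≤ min (ε / 2) (1 / 2) := ht
          _ ≤ ε / 2 := min_le_left _ _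
          _ < ε := by linarith
      have h2 := h htε ht0
      have ht2 : (0:ℝ) < t ^ 2 := by positivity
      rw [le_div_iff₀ ht2] at h2
      linarith
  have hglo : 0 < gfun b d (1 - δ) := by
    have h := hδq (-δ) (by rw [abs_neg, abs_of_pos hδ0])
    have e : (1:ℝ) + -δ = 1 - δ := by ring
    rw [e] at h
    have e3 : (-δ) ^ 2 = δ ^ 2 := by ring
    rw [e3] at h
    have e2 : (0:ℝ) < (b + d) / 4 * δ ^ 2 := by positivity
    linarith
  have hghi : 0 < gfun b d (1 + δ) := by
    have h := hδq δ (by rw [abs_of_pos hδ0])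
    have e2 : (0:ℝ) < (b + d) / 4 * δ ^ 2 := by positivity
    linarith
  obtain ⟨Klo, hKlo0, hKlo⟩ := bound_low hb hd a
  -- the high-region majorant and its integral
  have hmhi_int : IntegrableOn
      (fun x => C₁ * ((x ^ a + x ^ (a + p)) * Real.exp (-(gfun b d x)))) (Set.Ioi (1 + δ)) := by
    have h1 := (integrableOn_high hb hd a).add (integrableOn_high hb hd (a + p))
    have h2 : IntegrableOn (fun x => (x ^ a + x ^ (a + p)) * Real.exp (-(gfun b d x)))
        (Set.Ioi (1:ℝ)) := by
      refine IntegrableOn.congr_fun h1 (fun x hx => ?_) measurableSet_Ioi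
      simp only [Pi.add_apply]
      ring
    exact (h2.mono_set (Set.Ioi_subset_Ioi (by linarith))).const_mul C₁
  set Khi := ∫ x in Set.Ioi (1 + δ), C₁ * ((x ^ a + x ^ (a + p)) * Real.exp (-(gfun b d x)))
    with hKhidef
  -- abbreviations
  set M : ℝ → ℝ := fun B => Mfun b c d B with hMdef
  set σ : ℝ → ℝ := fun B => sfun b c d B with hσdef
  set r : ℝ → ℝ := fun B => (M B) ^ (1/2 : ℝ) with hrdef
  set F : ℝ → ℝ → ℝ := fun B => fB φ b d a (M B) (σ B) with hFdef
  have hMtop : Tendsto M atTop atTop := Mfun_tendsto hb hc hd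
  have hσ0' : Tendsto σ atTop (nhds 0) := sfun_tendsto hb hc hd
  have hrtop : Tendsto r atTop atTop :=
    (tendsto_rpow_atTop (by norm_num : (0:ℝ) < 1/2)).comp hMtop
  have hreg : ∀ᶠ B in atTop, 0 < B ∧ 1 ≤ M B ∧ σ B ≤ 1 := by
    filter_upwards [eventually_gt_atTop 0, hMtop.eventually_ge_atTop 1,
      hσ0'.eventually (eventually_le_nhds zero_lt_one)] with B h1 h2 h3
    exact ⟨h1, h2, h3⟩
  -- basic per-B facts
  have hMpos : ∀ B : ℝ, 0 < B → 0 < M B := fun B hB => Mfun_pos hb hc hd hB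
  have hσpos : ∀ B : ℝ, 0 < B → 0 < σ B := fun B hB => sfun_pos hb hc hd hB
  have hrpos : ∀ B : ℝ, 0 < B → 0 < r B := fun B hB =>
    Real.rpow_pos_of_pos (hMpos B hB) _
  have hr2 : ∀ B : ℝ, 0 < B → r B ^ 2 = M B := by
    intro B hB
    simp only [hrdef]
    rw [← Real.rpow_natCast ((M B) ^ (1/2:ℝ)) 2, ← Real.rpow_mul (hMpos B hB).le]
    norm_num
  have hFcont : ∀ B : ℝ, 0 < B → ContinuousOn (F B) (Set.Ioi 0) := fun B hB =>
    fB_contOn hb hd hφcont (hσpos B hB)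
  have hFnn : ∀ B : ℝ, 0 < B → ∀ x : ℝ, 0 < x → 0 ≤ F B x := fun B hB x hx =>
    fB_nonneg hφrange (hσpos B hB) hx
  -- integrability and bounds on the three regions
  have hlo : ∀ B : ℝ, 0 < B → 1 ≤ M B → σ B ≤ 1 →
      IntegrableOn (F B) (Set.Ioc 0 (1 - δ)) ∧
      (∫ x in Set.Ioc 0 (1 - δ), F B x) ≤
        Real.exp (-((M B - 1) * gfun b d (1 - δ))) * (2 * C₁ * Klo) := by
    intro B hB hM1 hσ1
    have hsub : Set.Ioc (0:ℝ) (1 - δ) ⊆ Set.Ioi 0 := fun x hx => hx.1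
    have hbnd : ∀ x ∈ Set.Ioc (0:ℝ) (1 - δ), F B x ≤
        Real.exp (-((M B - 1) * gfun b d (1 - δ))) * (2 * C₁ * Klo) := by
      intro x hx
      have h1 := fB_bound_lo (a := a) hb hd hφrange hC₁ hp hM1 (hσpos B hB) hσ1
        (l := 1 - δ) (by linarith) hx.1 hx.2
      have h2 := hKlo x ⟨hx.1, by linarith [hx.2]⟩
      calc F B x ≤ Real.exp (-((M B - 1) * gfun b d (1 - δ))) * (2 * C₁) *
            (x ^ a * Real.exp (-(gfun b d x))) := h1
        _ ≤ Real.exp (-((M B - 1) * gfun b d (1 - δ))) * (2 * C₁) * Klo :=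
            mul_le_mul_of_nonneg_left h2 (by positivity)
        _ = Real.exp (-((M B - 1) * gfun b d (1 - δ))) * (2 * C₁ * Klo) := by ring
    have hcst : (0:ℝ) ≤ Real.exp (-((M B - 1) * gfun b d (1 - δ))) * (2 * C₁ * Klo) := by
      positivity
    have hFint : IntegrableOn (F B) (Set.Ioc 0 (1 - δ)) := by
      apply Integrable.mono' (g := fun _ =>
        Real.exp (-((M B - 1) * gfun b d (1 - δ))) * (2 * C₁ * Klo))
        (integrableOn_const measure_Ioc_lt_top.ne)
      · exact ((hFcont B hB).mono hsub).aestronglyMeasurable measurableSet_Ioc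
      · rw [ae_restrict_iff' measurableSet_Ioc]
        apply ae_of_all
        intro x hx
        rw [Real.norm_eq_abs, abs_of_nonneg (hFnn B hB x hx.1)]
        exact hbnd x hx
    refine ⟨hFint, ?_⟩
    calc (∫ x in Set.Ioc 0 (1 - δ), F B x)
        ≤ ∫ _x in Set.Ioc (0:ℝ) (1 - δ),
            Real.exp (-((M B - 1) * gfun b d (1 - δ))) * (2 * C₁ * Klo) :=
          setIntegral_mono_on hFint (integrableOn_const measure_Ioc_lt_top.ne)
            measurableSet_Ioc hbnd
      _ = (volume (Set.Ioc (0:ℝ) (1 - δ))).toReal *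
            (Real.exp (-((M B - 1) * gfun b d (1 - δ))) * (2 * C₁ * Klo)) := by
          rw [setIntegral_const]; rfl
      _ ≤ Real.exp (-((M B - 1) * gfun b d (1 - δ))) * (2 * C₁ * Klo) := by
          rw [Real.volume_Ioc]
          nth_rewrite 2 [← one_mul (Real.exp (-((M B - 1) * gfun b d (1 - δ))) * (2 * C₁ * Klo))]
          apply mul_le_mul_of_nonneg_right _ hcst
          rw [ENNReal.toReal_ofReal (by linarith)]
          linarith
  have hhi : ∀ B : ℝ, 0 < B → 1 ≤ M B → σ B ≤ 1 →
      IntegrableOn (F B) (Set.Ioi (1 + δ)) ∧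
      (∫ x in Set.Ioi (1 + δ), F B x) ≤
        Real.exp (-((M B - 1) * gfun b d (1 + δ))) * Khi := by
    intro B hB hM1 hσ1
    have hsub : Set.Ioi (1 + δ) ⊆ Set.Ioi (0:ℝ) := fun x hx => by
      simp only [Set.mem_Ioi] at *; linarith
    have hbnd : ∀ x ∈ Set.Ioi (1 + δ), F B x ≤
        Real.exp (-((M B - 1) * gfun b d (1 + δ))) *
          (C₁ * ((x ^ a + x ^ (a + p)) * Real.exp (-(gfun b d x)))) := by
      intro x hx
      exact fB_bound_hi (a := a) hb hd hφrange hC₁ hp hM1 (hσpos B hB) hσ1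
        (l := 1 + δ) (by linarith) (le_of_lt hx)
    have hmaj : IntegrableOn (fun x => Real.exp (-((M B - 1) * gfun b d (1 + δ))) *
        (C₁ * ((x ^ a + x ^ (a + p)) * Real.exp (-(gfun b d x))))) (Set.Ioi (1 + δ)) :=
      hmhi_int.const_mul _
    have hFint : IntegrableOn (F B) (Set.Ioi (1 + δ)) := by
      apply Integrable.mono' hmaj
      · exact ((hFcont B hB).mono hsub).aestronglyMeasurable measurableSet_Ioi
      · rw [ae_restrict_iff' measurableSet_Ioi]
        apply ae_of_all
        intro x hx
        rw [Real.norm_eq_abs, abs_of_nonneg (hFnn B hB x (hsub hx))]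
        exact hbnd x hx
    refine ⟨hFint, ?_⟩
    calc (∫ x in Set.Ioi (1 + δ), F B x)
        ≤ ∫ x in Set.Ioi (1 + δ), Real.exp (-((M B - 1) * gfun b d (1 + δ))) *
            (C₁ * ((x ^ a + x ^ (a + p)) * Real.exp (-(gfun b d x)))) :=
          setIntegral_mono_on hFint hmaj measurableSet_Ioi hbnd
      _ = Real.exp (-((M B - 1) * gfun b d (1 + δ))) * Khi := by
          rw [hKhidef, ← MeasureTheory.integral_const_mul]
  have hmid : ∀ B : ℝ, 0 < B → 1 ≤ M B → σ B ≤ 1 →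
      IntegrableOn (F B) (Set.Ioc (1 - δ) (1 + δ)) := by
    intro B hB hM1 hσ1
    have hsub : Set.Ioc (1 - δ) (1 + δ) ⊆ Set.Ioi (0:ℝ) := fun x hx => by
      simp only [Set.mem_Ioc, Set.mem_Ioi] at *; linarith [hx.1]
    have hbnd : ∀ x ∈ Set.Ioc (1 - δ) (1 + δ), F B x ≤
        max ((1 - δ) ^ a) ((1 + δ) ^ a) * (C₁ * (1 + (2:ℝ) ^ p)) := by
      intro x hx
      have hx0 : (0:ℝ) < x := hsub hx
      have hσx : 0 < σ B * x := mul_pos (hσpos B hB) hx0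
      have hP : 1 + φ (σ B * x) ≤ C₁ * (1 + (2:ℝ) ^ p) := by
        have h1 := hC₁ (σ B * x) hσx
        have h2 : (σ B * x) ^ p ≤ (2:ℝ) ^ p := by
          apply Real.rpow_le_rpow hσx.le _ hp
          nlinarith [hx.2, hσ1, (hσpos B hB).le, hδhalf]
        nlinarith
      have hE : Real.exp (-(M B * gfun b d x)) ≤ 1 := by
        apply Real.exp_le_one_iff.mpr
        have := gfun_nonneg hb hd hx0
        nlinarith
      have h3 := fB_le (a := a) hφrange (hσpos B hB) hx0 hP hE
      have h4 : x ^ a ≤ max ((1 - δ) ^ a) ((1 + δ) ^ a) :=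
        rpow_le_max (by linarith) hx.1.le hx.2
      have h5 : (0:ℝ) ≤ C₁ * (1 + (2:ℝ) ^ p) := by positivity
      calc F B x ≤ x ^ a * 1 * (C₁ * (1 + (2:ℝ) ^ p)) := h3
        _ = x ^ a * (C₁ * (1 + (2:ℝ) ^ p)) := by ring
        _ ≤ max ((1 - δ) ^ a) ((1 + δ) ^ a) * (C₁ * (1 + (2:ℝ) ^ p)) :=
            mul_le_mul_of_nonneg_right h4 h5
    apply Integrable.mono' (g := fun _ => max ((1 - δ) ^ a) ((1 + δ) ^ a) * (C₁ * (1 + (2:ℝ) ^ p)))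
      (integrableOn_const measure_Ioc_lt_top.ne)
    · exact ((hFcont B hB).mono hsub).aestronglyMeasurable measurableSet_Ioc
    · rw [ae_restrict_iff' measurableSet_Ioc]
      apply ae_of_all
      intro x hx
      rw [Real.norm_eq_abs, abs_of_nonneg (hFnn B hB x (hsub hx))]
      exact hbnd x hx
  -- splitting
  have hsplit : ∀ᶠ B in atTop, (∫ x in Set.Ioi 0, F B x) =
      (∫ x in Set.Ioc 0 (1 - δ), F B x) + (∫ x in Set.Ioc (1 - δ) (1 + δ), F B x) +
      (∫ x in Set.Ioi (1 + δ), F B x) := by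
    filter_upwards [hreg] with B hB
    obtain ⟨hB0, hM1, hσ1⟩ := hB
    have i1 := (hlo B hB0 hM1 hσ1).1
    have i2 := hmid B hB0 hM1 hσ1
    have i3 := (hhi B hB0 hM1 hσ1).1
    have h1 : Set.Ioc (0:ℝ) (1 - δ) ∪ Set.Ioc (1 - δ) (1 + δ) = Set.Ioc 0 (1 + δ) :=
      Set.Ioc_union_Ioc_eq_Ioc (by linarith) (by linarith)
    have h2 : Set.Ioc (0:ℝ) (1 + δ) ∪ Set.Ioi (1 + δ) = Set.Ioi 0 :=
      Set.Ioc_union_Ioi_eq_Ioi (by linarith)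
    rw [← h2, setIntegral_union (Set.Ioc_disjoint_Ioi le_rfl) measurableSet_Ioi
      (by rw [← h1]; exact i1.union i2) i3, ← h1,
      setIntegral_union (Set.Ioc_disjoint_Ioc.mpr (le_trans inf_le_left le_sup_right)) measurableSet_Ioc i1 i2]
  -- tail limits
  have hTL : Tendsto (fun B => r B * ∫ x in Set.Ioc 0 (1 - δ), F B x) atTop (nhds 0) := by
    apply tendsto_of_tendsto_of_tendsto_of_le_of_le' tendsto_const_nhds
      ((tail_aux hglo (2 * C₁ * Klo)).comp hMtop)
    · filter_upwards [hreg] with B hB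
      obtain ⟨hB0, hM1, hσ1⟩ := hB
      exact mul_nonneg (hrpos B hB0).le
        (setIntegral_nonneg measurableSet_Ioc (fun x hx => hFnn B hB0 x hx.1))
    · filter_upwards [hreg] with B hB
      obtain ⟨hB0, hM1, hσ1⟩ := hB
      have h := (hlo B hB0 hM1 hσ1).2
      have h2 := mul_le_mul_of_nonneg_left h (hrpos B hB0).le
      simp only [Function.comp_apply]
      calc r B * ∫ x in Set.Ioc 0 (1 - δ), F B x
          ≤ r B * (Real.exp (-((M B - 1) * gfun b d (1 - δ))) * (2 * C₁ * Klo)) := h2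
        _ = M B ^ (1/2:ℝ) * Real.exp (-((M B - 1) * gfun b d (1 - δ))) * (2 * C₁ * Klo) := by
            simp only [hrdef]; ring
  have hTH : Tendsto (fun B => r B * ∫ x in Set.Ioi (1 + δ), F B x) atTop (nhds 0) := by
    apply tendsto_of_tendsto_of_tendsto_of_le_of_le' tendsto_const_nhds
      ((tail_aux hghi Khi).comp hMtop)
    · filter_upwards [hreg] with B hB
      obtain ⟨hB0, hM1, hσ1⟩ := hB
      apply mul_nonneg (hrpos B hB0).le
      apply setIntegral_nonneg measurableSet_Ioi
      intro x hx
      exact hFnn B hB0 x (by simp only [Set.mem_Ioi] at hx ⊢; linarith)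
    · filter_upwards [hreg] with B hB
      obtain ⟨hB0, hM1, hσ1⟩ := hB
      have h := (hhi B hB0 hM1 hσ1).2
      have h2 := mul_le_mul_of_nonneg_left h (hrpos B hB0).le
      simp only [Function.comp_apply]
      calc r B * ∫ x in Set.Ioi (1 + δ), F B x
          ≤ r B * (Real.exp (-((M B - 1) * gfun b d (1 + δ))) * Khi) := h2
        _ = M B ^ (1/2:ℝ) * Real.exp (-((M B - 1) * gfun b d (1 + δ))) * Khi := by
            simp only [hrdef]; ring
  -- central limit
  have hTM : Tendsto (fun B => r B * ∫ x in Set.Ioc (1 - δ) (1 + δ), F B x) atTop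
      (nhds (Real.sqrt (2 * Real.pi / (b + d)))) := by
    have hgauss : (∫ u : ℝ, Real.exp (-((b + d) / 2) * u ^ 2)) =
        Real.sqrt (2 * Real.pi / (b + d)) := by
      rw [integral_gaussian]
      congr 1
      field_simp
    set Ka := max ((1 - δ) ^ a) ((1 + δ) ^ a) with hKadef
    have hKa0 : 0 < Ka := lt_max_iff.mpr (Or.inl (Real.rpow_pos_of_pos (by linarith) a))
    have h2p : (0:ℝ) < (2:ℝ) ^ p := Real.rpow_pos_of_pos (by norm_num) p
    have hdct : Tendsto (fun B => ∫ u : ℝ, Set.indicator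
        (Set.Ioc (-(δ * r B)) (δ * r B)) (fun u => F B (1 + (r B)⁻¹ * u)) u) atTop
        (nhds (∫ u : ℝ, Real.exp (-((b + d) / 2) * u ^ 2))) := by
      apply MeasureTheory.tendsto_integral_filter_of_dominated_convergence
        (bound := fun u => Ka * (C₁ * (1 + (2:ℝ) ^ p)) * Real.exp (-((b + d) / 4) * u ^ 2))
      · filter_upwards [hreg] with B hB
        obtain ⟨hB0, hM1, hσ1⟩ := hB
        have hrB := hrpos B hB0
        rw [aestronglyMeasurable_indicator_iff measurableSet_Ioc]
        apply ContinuousOn.aestronglyMeasurable _ measurableSet_Ioc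
        apply (hFcont B hB0).comp (Continuous.continuousOn (continuous_const.add (continuous_const.mul continuous_id)))
        intro u hu
        obtain ⟨hu1, hu2⟩ := hu
        have habs : |u| ≤ δ * r B := abs_le.mpr ⟨by linarith, hu2⟩
        have h1 : |(r B)⁻¹ * u| ≤ δ := by
          rw [abs_mul, abs_inv, abs_of_pos hrB]
          rw [inv_mul_le_iff₀ hrB]
          calc |u| ≤ δ * r B := habs
            _ = r B * δ := by ring
        have h2 := (abs_le.mp h1).1
        simp only [Set.mem_Ioi, id_eq, Pi.add_apply, Pi.mul_apply]
        have hδ2 : δ ≤ 1/2 := hδhalf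
        linarith
      · filter_upwards [hreg] with B hB
        obtain ⟨hB0, hM1, hσ1⟩ := hB
        have hrB := hrpos B hB0
        apply ae_of_all
        intro u
        by_cases hu : u ∈ Set.Ioc (-(δ * r B)) (δ * r B)
        · rw [Set.indicator_of_mem hu]
          obtain ⟨hu1, hu2⟩ := hu
          have habs : |u| ≤ δ * r B := abs_le.mpr ⟨by linarith, hu2⟩
          have ht : |(r B)⁻¹ * u| ≤ δ := by
            rw [abs_mul, abs_inv, abs_of_pos hrB, inv_mul_le_iff₀ hrB]
            calc |u| ≤ δ * r B := habs
              _ = r B * δ := by ring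
          have htl := (abs_le.mp ht).1
          have htr := (abs_le.mp ht).2
          have hx0 : (0:ℝ) < 1 + (r B)⁻¹ * u := by linarith
          have hrB2 : r B ^ 2 = M B := hr2 B hB0
          have h3 : M B * ((r B)⁻¹ * u) ^ 2 = u ^ 2 := by
            rw [mul_pow, inv_pow, ← hrB2]
            field_simp
          have hMg : (b + d) / 4 * u ^ 2 ≤ M B * gfun b d (1 + (r B)⁻¹ * u) := by
            have hq := hδq ((r B)⁻¹ * u) ht
            have h2' : M B * ((b + d) / 4 * ((r B)⁻¹ * u) ^ 2) ≤
                M B * gfun b d (1 + (r B)⁻¹ * u) :=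
              mul_le_mul_of_nonneg_left hq (by linarith)
            calc (b + d) / 4 * u ^ 2 = M B * ((b + d) / 4 * ((r B)⁻¹ * u) ^ 2) := by
                  rw [← h3]; ring
              _ ≤ M B * gfun b d (1 + (r B)⁻¹ * u) := h2'
          have hE : Real.exp (-(M B * gfun b d (1 + (r B)⁻¹ * u))) ≤
              Real.exp (-((b + d) / 4) * u ^ 2) := by
            apply Real.exp_le_exp.mpr
            linarith
          have hP : 1 + φ (σ B * (1 + (r B)⁻¹ * u)) ≤ C₁ * (1 + (2:ℝ) ^ p) := by
            have hσx : 0 < σ B * (1 + (r B)⁻¹ * u) := mul_pos (hσpos B hB0) hx0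
            have h1 := hC₁ _ hσx
            have h2 : (σ B * (1 + (r B)⁻¹ * u)) ^ p ≤ (2:ℝ) ^ p := by
              apply Real.rpow_le_rpow hσx.le _ hp
              have := (hσpos B hB0).le
              nlinarith
            nlinarith
          have h4 := fB_le (a := a) hφrange (hσpos B hB0) hx0 hP hE
          have h5 : (1 + (r B)⁻¹ * u) ^ a ≤ Ka := by
            rw [hKadef]
            exact rpow_le_max (by linarith) (by linarith) (by linarith)
          rw [Real.norm_eq_abs, abs_of_nonneg (hFnn B hB0 _ hx0)]
          have hFeq : F B (1 + (r B)⁻¹ * u) = fB φ b d a (M B) (σ B) (1 + (r B)⁻¹ * u) := by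
            simp only [hFdef]
          rw [hFeq]
          calc fB φ b d a (M B) (σ B) (1 + (r B)⁻¹ * u)
              ≤ (1 + (r B)⁻¹ * u) ^ a * Real.exp (-((b + d) / 4) * u ^ 2) *
                (C₁ * (1 + (2:ℝ) ^ p)) := h4
            _ ≤ Ka * Real.exp (-((b + d) / 4) * u ^ 2) * (C₁ * (1 + (2:ℝ) ^ p)) := by
                apply mul_le_mul_of_nonneg_right _ (by positivity)
                exact mul_le_mul_of_nonneg_right h5 (Real.exp_pos _).le
            _ = Ka * (C₁ * (1 + (2:ℝ) ^ p)) * Real.exp (-((b + d) / 4) * u ^ 2) := by ring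
        · rw [Set.indicator_of_notMem hu]
          rw [norm_zero]
          have : (0:ℝ) < Real.exp (-((b + d) / 4) * u ^ 2) := Real.exp_pos _
          have hC₁p : (0:ℝ) < C₁ := lt_of_lt_of_le one_pos hC₁1
          positivity
      · exact (integrable_exp_neg_mul_sq (by positivity : (0:ℝ) < (b + d) / 4)).const_mul _
      · apply ae_of_all
        intro u
        have hteq : ∀ᶠ B in atTop, Set.indicator
            (Set.Ioc (-(δ * r B)) (δ * r B)) (fun v => F B (1 + (r B)⁻¹ * v)) u =
            F B (1 + (r B)⁻¹ * u) := by
          filter_upwards [hreg, hrtop.eventually_gt_atTop (|u| / δ)] with B hB hrB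
          apply Set.indicator_of_mem
          have h1 : |u| < δ * r B := by
            rw [div_lt_iff₀ hδ0] at hrB
            calc |u| < r B * δ := hrB
              _ = δ * r B := by ring
          have := abs_lt.mp h1
          exact ⟨by linarith [this.1], le_of_lt this.2⟩
        have ht0 : Tendsto (fun B => (r B)⁻¹ * u) atTop (nhds 0) := by
          have h := hrtop.inv_tendsto_atTop.mul_const u
          rw [zero_mul] at h
          exact h
        have h1t : Tendsto (fun B => 1 + (r B)⁻¹ * u) atTop (nhds 1) := by
          have := (tendsto_const_nhds (x := (1:ℝ)) (f := atTop)).add ht0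
          rw [add_zero] at this
          exact this
        have hf1 : Tendsto (fun B => (1 + (r B)⁻¹ * u) ^ a) atTop (nhds 1) := by
          have hcont := (Real.continuousAt_rpow_const 1 a (Or.inl one_ne_zero)).tendsto
          have h := hcont.comp h1t
          simpa [Real.one_rpow, Function.comp_def] using h
        have hf2 : Tendsto (fun B => Real.exp (-(M B * gfun b d (1 + (r B)⁻¹ * u)))) atTop
            (nhds (Real.exp (-((b + d) / 2) * u ^ 2))) := by
          rcases eq_or_ne u 0 with rfl | hu0
          · simp only [mul_zero, add_zero, gfun_one]
            simpa using tendsto_const_nhds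
          · have htne : Tendsto (fun B => (r B)⁻¹ * u) atTop
                (nhdsWithin 0 {(0:ℝ)}ᶜ) := by
              apply tendsto_nhdsWithin_iff.mpr
              refine ⟨ht0, ?_⟩
              filter_upwards [hreg] with B hB
              obtain ⟨hB0, _, _⟩ := hB
              simp only [Set.mem_compl_iff, Set.mem_singleton_iff]
              exact mul_ne_zero (inv_ne_zero (hrpos B hB0).ne') hu0
            have hcomp := (gfun_taylor hb hd).comp htne
            have harg0 := hcomp.const_mul (u ^ 2)
            rw [show u ^ 2 * ((b + d) / 2) = (b + d) / 2 * u ^ 2 from by ring] at harg0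
            have harg : Tendsto (fun B => M B * gfun b d (1 + (r B)⁻¹ * u)) atTop
                (nhds ((b + d) / 2 * u ^ 2)) := by
              apply harg0.congr'
              filter_upwards [hreg] with B hB
              obtain ⟨hB0, _, _⟩ := hB
              have htne0 : ((r B)⁻¹ * u) ≠ 0 :=
                mul_ne_zero (inv_ne_zero (hrpos B hB0).ne') hu0
              have hrB2 : r B ^ 2 = M B := hr2 B hB0
              have h3 : M B * ((r B)⁻¹ * u) ^ 2 = u ^ 2 := by
                rw [mul_pow, inv_pow, ← hrB2]
                field_simp [(hrpos B hB0).ne']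
              simp only [Function.comp_apply]
              rw [← h3]
              field_simp [(hrpos B hB0).ne']
            have hexp := (Real.continuous_exp.tendsto _).comp harg.neg
            rw [show -((b + d) / 2 * u ^ 2) = -((b + d) / 2) * u ^ 2 from by ring] at hexp
            exact hexp
        have hf3 : Tendsto (fun B => 1 + φ (σ B * (1 + (r B)⁻¹ * u))) atTop (nhds 1) := by
          have hsmall : ∀ᶠ B in atTop, |(r B)⁻¹ * u| < 1/2 := by
            have h := Metric.tendsto_nhds.mp ht0 (1/2) (by norm_num)
            filter_upwards [h] with B hB
            rw [Real.dist_eq, sub_zero] at hB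
            exact hB
          have hσarg : Tendsto (fun B => σ B * (1 + (r B)⁻¹ * u)) atTop
              (nhdsWithin 0 (Set.Ioi 0)) := by
            apply tendsto_nhdsWithin_iff.mpr
            constructor
            · have h := hσ0'.mul h1t
              rw [zero_mul] at h
              exact h
            · filter_upwards [hreg, hsmall] with B hB h2
              obtain ⟨hB0, _, _⟩ := hB
              have := (abs_lt.mp h2).1
              simp only [Set.mem_Ioi]
              apply mul_pos (hσpos B hB0)
              linarith
          have h := hφ0.comp hσarg
          have h2 := (tendsto_const_nhds (x := (1:ℝ)) (f := atTop)).add h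
          rw [add_zero] at h2
          exact h2
        have hprod := (hf1.mul hf2).mul hf3
        rw [one_mul, mul_one] at hprod
        apply Tendsto.congr' (EventuallyEq.symm hteq)
        apply hprod.congr
        intro B
        simp only [hFdef, fB]
    rw [hgauss] at hdct
    apply hdct.congr'
    filter_upwards [hreg] with B hB
    obtain ⟨hB0, hM1, hσ1⟩ := hB
    have hrB := hrpos B hB0
    have hle : -(δ * r B) ≤ δ * r B := by nlinarith
    rw [MeasureTheory.integral_indicator measurableSet_Ioc,
      ← intervalIntegral.integral_of_le hle,
      intervalIntegral.integral_comp_add_mul (F B) (inv_ne_zero hrB.ne') 1]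
    rw [show 1 + (r B)⁻¹ * -(δ * r B) = 1 - δ from by field_simp; ring,
      show 1 + (r B)⁻¹ * (δ * r B) = 1 + δ from by field_simp,
      inv_inv, smul_eq_mul,
      intervalIntegral.integral_of_le (by linarith : (1:ℝ) - δ ≤ 1 + δ)]
  -- combine
  have hkey : Tendsto (fun B => r B * ∫ x in Set.Ioi 0, F B x) atTop
      (nhds (Real.sqrt (2 * Real.pi / (b + d)))) := by
    have h := (hTL.add hTM).add hTH
    rw [zero_add, add_zero] at h
    apply h.congr'
    filter_upwards [hsplit] with B hB
    rw [hB]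
    ring
  -- eventual identification of the ratio
  have hratio : ∀ᶠ B in atTop, (∫ s in Set.Ioi (0:ℝ),
            s ^ a * Real.exp (-(B * s ^ b) - c * s ^ (-d)) * (1 + φ s)) /
          (Real.sqrt (2 * Real.pi / (b + d)) *
            (b * B) ^ (-((2 * (a + 1) + d) / (2 * (b + d)))) *
            (c * d) ^ ((2 * (a + 1) - b) / (2 * (b + d))) *
            Real.exp (-((b + d) * (b⁻¹ * c) ^ (b / (b + d)) *
              (d⁻¹ * B) ^ (d / (b + d))))) =
          (r B * ∫ x in Set.Ioi 0, F B x) / Real.sqrt (2 * Real.pi / (b + d)) := by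
    filter_upwards [hreg] with B hB
    obtain ⟨hB0, hM1, hσ1⟩ := hB
    have hM0 := hMpos B hB0
    have hσ0 := hσpos B hB0
    have e1 := integral_comp_mul_left_Ioi
      (fun s => s ^ a * Real.exp (-(B * s ^ b) - c * s ^ (-d)) * (1 + φ s)) 0 hσ0
    rw [mul_zero] at e1
    have e2 : (∫ s in Set.Ioi (0:ℝ), s ^ a * Real.exp (-(B * s ^ b) - c * s ^ (-d)) * (1 + φ s))
        = σ B * ∫ x in Set.Ioi (0:ℝ), (σ B * x) ^ a *
            Real.exp (-(B * (σ B * x) ^ b) - c * (σ B * x) ^ (-d)) * (1 + φ (σ B * x)) := by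
      rw [e1, smul_eq_mul, ← mul_assoc, mul_inv_cancel₀ hσ0.ne', one_mul]
    have e3 : ∀ x ∈ Set.Ioi (0:ℝ),
        (σ B * x) ^ a * Real.exp (-(B * (σ B * x) ^ b) - c * (σ B * x) ^ (-d)) * (1 + φ (σ B * x))
          = (σ B ^ a * Real.exp (-(M B * (1 / b + 1 / d)))) * F B x := by
      intro x hx
      have hx0 : (0:ℝ) < x := hx
      have ha1 : (σ B * x) ^ a = σ B ^ a * x ^ a := Real.mul_rpow hσ0.le hx0.le
      have hb1 : B * (σ B * x) ^ b = M B / b * x ^ b := by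
        rw [Real.mul_rpow hσ0.le hx0.le, ← mul_assoc]
        simp only [hσdef, hMdef]
        rw [alg1 hb hc hd hB0]
      have hd1 : c * (σ B * x) ^ (-d) = M B / d * x ^ (-d) := by
        rw [Real.mul_rpow hσ0.le hx0.le, ← mul_assoc]
        simp only [hσdef, hMdef]
        rw [alg2 hb hc hd hB0]
      have hexp : Real.exp (-(B * (σ B * x) ^ b) - c * (σ B * x) ^ (-d))
          = Real.exp (-(M B * gfun b d x)) * Real.exp (-(M B * (1 / b + 1 / d))) := by
        rw [hb1, hd1, ← Real.exp_add]
        congr 1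
        simp only [gfun]
        field_simp
        ring
      rw [ha1, hexp]
      simp only [hFdef, fB]
      ring
    rw [e2, setIntegral_congr_fun measurableSet_Ioi e3, MeasureTheory.integral_const_mul]
    have edenom : Real.sqrt (2 * Real.pi / (b + d)) *
            (b * B) ^ (-((2 * (a + 1) + d) / (2 * (b + d)))) *
            (c * d) ^ ((2 * (a + 1) - b) / (2 * (b + d))) *
            Real.exp (-((b + d) * (b⁻¹ * c) ^ (b / (b + d)) *
              (d⁻¹ * B) ^ (d / (b + d))))
        = Real.sqrt (2 * Real.pi / (b + d)) * (M B ^ (-(1/2:ℝ)) * σ B ^ (a + 1)) *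
            Real.exp (-(M B * (1 / b + 1 / d))) := by
      calc Real.sqrt (2 * Real.pi / (b + d)) *
            (b * B) ^ (-((2 * (a + 1) + d) / (2 * (b + d)))) *
            (c * d) ^ ((2 * (a + 1) - b) / (2 * (b + d))) *
            Real.exp (-((b + d) * (b⁻¹ * c) ^ (b / (b + d)) *
              (d⁻¹ * B) ^ (d / (b + d))))
          = Real.sqrt (2 * Real.pi / (b + d)) *
            ((b * B) ^ (-((2 * (a + 1) + d) / (2 * (b + d)))) *
              (c * d) ^ ((2 * (a + 1) - b) / (2 * (b + d)))) *
            Real.exp (-((b + d) * (b⁻¹ * c) ^ (b / (b + d)) *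
              (d⁻¹ * B) ^ (d / (b + d)))) := by ring
        _ = Real.sqrt (2 * Real.pi / (b + d)) * (M B ^ (-(1/2:ℝ)) * σ B ^ (a + 1)) *
            Real.exp (-(M B * (1 / b + 1 / d))) := by
            simp only [hσdef, hMdef]
            rw [alg4 hb hc hd hB0 a, alg3 hb hc hd hB0]
    rw [edenom]
    have hsqp : (0:ℝ) < Real.sqrt (2 * Real.pi / (b + d)) :=
      Real.sqrt_pos.mpr (by positivity)
    have hMe : M B ^ (-(1/2:ℝ)) = (r B)⁻¹ := by
      simp only [hrdef]
      rw [Real.rpow_neg hM0.le]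
    have hσa1 : σ B ^ (a + 1) = σ B ^ a * σ B := Real.rpow_add_one hσ0.ne' a
    rw [hMe, hσa1]
    have hne1 : σ B ^ a ≠ 0 := (Real.rpow_pos_of_pos hσ0 a).ne'
    have hne2 : Real.exp (-(M B * (1 / b + 1 / d))) ≠ 0 := (Real.exp_pos _).ne'
    have hne3 : r B ≠ 0 := (hrpos B hB0).ne'
    field_simp
  have hsq : Real.sqrt (2 * Real.pi / (b + d)) ≠ 0 := by
    have : (0:ℝ) < 2 * Real.pi / (b + d) := by positivity
    positivity
  have := hkey.div_const (Real.sqrt (2 * Real.pi / (b + d)))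
  rw [div_self hsq] at this
  exact Tendsto.congr' (EventuallyEq.symm hratio) this
end
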